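/- arXiv:math/0006057 — 5 statements merged into one kernel-verified Lean document; each statement's English description precedes it below -/
import Mathlib

section
/- In a weak Hopf algebra H, the counital subalgebras H_t = ε_t(H) and H_s = ε_s(H) commute elementwise: zy = yz for all z ∈ H_t, y ∈ H_s. -/
open TensorProduct

/-- A (finite) quantum groupoid / weak Hopf algebra over `k` (Böhm–Nill–Szlachányi). -/
structure WeakHopfAlgebra (k : Type*) (H : Type*) [CommRing k] [Ring H] [Algebra k H] where
  comul : H →ₗ[k] H ⊗[k] H
  counit : H →ₗ[k] k
  antipode : H →ₗ[k] H
  coassoc : ∀ h : H,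
    (TensorProduct.assoc k H H H) ((LinearMap.rTensor H comul) (comul h)) =
      (LinearMap.lTensor H comul) (comul h)
  counit_lid : ∀ h : H,
    (TensorProduct.lid k H) ((LinearMap.rTensor H counit) (comul h)) = h
  counit_rid : ∀ h : H,
    (TensorProduct.rid k H) ((LinearMap.lTensor H counit) (comul h)) = h
  comul_mul : ∀ a b : H, comul (a * b) = comul a * comul b
  weak_comul_one_left :
    (LinearMap.lTensor H comul) (comul 1) =
      (TensorProduct.assoc k H H H) (comul 1 ⊗ₜ[k] (1 : H)) * ((1 : H) ⊗ₜ[k] comul 1)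
  weak_comul_one_right :
    (LinearMap.lTensor H comul) (comul 1) =
      ((1 : H) ⊗ₜ[k] comul 1) * (TensorProduct.assoc k H H H) (comul 1 ⊗ₜ[k] (1 : H))
  weak_counit_left : ∀ f g h : H,
    counit (f * g * h) =
      (LinearMap.mul' k k)
        ((TensorProduct.map (counit ∘ₗ LinearMap.mulLeft k f)
          (counit ∘ₗ LinearMap.mulRight k h)) (comul g))
  weak_counit_right : ∀ f g h : H,
    counit (f * g * h) =
      (LinearMap.mul' k k)
        ((TensorProduct.map (counit ∘ₗ LinearMap.mulLeft k f)
          (counit ∘ₗ LinearMap.mulRight k h)) ((TensorProduct.comm k H H) (comul g)))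
  antipode_right : ∀ h : H,
    (LinearMap.mul' k H) ((LinearMap.lTensor H antipode) (comul h)) =
      (TensorProduct.lid k H) ((LinearMap.rTensor H counit) (comul 1 * (h ⊗ₜ[k] (1 : H))))
  antipode_left : ∀ h : H,
    (LinearMap.mul' k H) ((LinearMap.rTensor H antipode) (comul h)) =
      (TensorProduct.rid k H) ((LinearMap.lTensor H counit) (((1 : H) ⊗ₜ[k] h) * comul 1))
  antipode_conv : ∀ h : H,
    (LinearMap.mul' k H)
      ((TensorProduct.map ((LinearMap.mul' k H) ∘ₗ (LinearMap.rTensor H antipode) ∘ₗ comul)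
        antipode) (comul h)) = antipode h

namespace WeakHopfAlgebra

variable {k H : Type*} [CommRing k] [Ring H] [Algebra k H] (W : WeakHopfAlgebra k H)

/-- The target counital map `ε_t(h) = ε(1₍₁₎h)1₍₂₎`. -/
noncomputable def εt : H →ₗ[k] H :=
  (TensorProduct.lid k H).toLinearMap ∘ₗ (LinearMap.rTensor H W.counit) ∘ₗ
    (LinearMap.mulLeft k (W.comul 1)) ∘ₗ ((TensorProduct.mk k H H).flip 1)

/-- The source counital map `ε_s(h) = 1₍₁₎ε(h1₍₂₎)`. -/
noncomputable def εs : H →ₗ[k] H :=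
  (TensorProduct.rid k H).toLinearMap ∘ₗ (LinearMap.lTensor H W.counit) ∘ₗ
    (LinearMap.mulRight k (W.comul 1)) ∘ₗ (TensorProduct.mk k H H 1)

end WeakHopfAlgebra

/-- the counital subalgebras `H_t = ε_t(H)` and `H_s = ε_s(H)` commute elementwise. -/
theorem WeakHopfAlgebra.counital_subalgebras_commute
    {k H : Type*} [Field k] [Ring H] [Algebra k H] [FiniteDimensional k H]
    (W : WeakHopfAlgebra k H) :
    ∀ z ∈ Set.range W.εt, ∀ y ∈ Set.range W.εs, z * y = y * z := by
  rintro _ ⟨h, rfl⟩ _ ⟨g, rfl⟩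
  obtain ⟨S, hS⟩ := TensorProduct.exists_finset (W.comul 1)
  -- F (a ⊗ (x ⊗ y)) = ε(a*h) • (ε(g*y) • x)
  set G : H ⊗[k] H →ₗ[k] H :=
    (TensorProduct.rid k H).toLinearMap ∘ₗ
      LinearMap.lTensor H (W.counit ∘ₗ LinearMap.mulLeft k g) with hG
  set F : H ⊗[k] (H ⊗[k] H) →ₗ[k] H :=
    (TensorProduct.lid k H).toLinearMap ∘ₗ
      LinearMap.rTensor H (W.counit ∘ₗ LinearMap.mulRight k h) ∘ₗ
      LinearMap.lTensor H G with hF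
  have hFt : ∀ a x y : H, F (a ⊗ₜ[k] (x ⊗ₜ[k] y)) =
      W.counit (a * h) • (W.counit (g * y) • x) := by
    intro a x y
    simp only [hF, hG, LinearMap.comp_apply, LinearMap.lTensor_tmul,
      LinearMap.rTensor_tmul, LinearEquiv.coe_coe, TensorProduct.rid_tmul,
      TensorProduct.lid_tmul, LinearMap.mulLeft_apply, LinearMap.mulRight_apply,
      map_smul, TensorProduct.tmul_smul, smul_eq_mul]
    rw [smul_comm]
  have key := congrArg F (W.weak_comul_one_left.symm.trans W.weak_comul_one_right)
  have hεt : W.εt h = ∑ p ∈ S, W.counit (p.1 * h) • p.2 := by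
    simp only [εt, LinearMap.comp_apply, LinearMap.flip_apply, TensorProduct.mk_apply,
      LinearMap.mulLeft_apply, hS, Finset.sum_mul]
    simp [TensorProduct.smul_tmul']
  have hεs : W.εs g = ∑ p ∈ S, W.counit (g * p.2) • p.1 := by
    simp only [εs, LinearMap.comp_apply, TensorProduct.mk_apply,
      LinearMap.mulRight_apply, hS, Finset.mul_sum]
    simp
  rw [hεt, hεs, Finset.sum_mul_sum, Finset.sum_mul_sum]
  calc ∑ p ∈ S, ∑ q ∈ S, (W.counit (p.1 * h) • p.2) * (W.counit (g * q.2) • q.1)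
      = F ((TensorProduct.assoc k H H H) (W.comul 1 ⊗ₜ[k] (1 : H)) *
          ((1 : H) ⊗ₜ[k] W.comul 1)) := by
        rw [hS]
        simp only [TensorProduct.sum_tmul, TensorProduct.tmul_sum, map_sum,
          Finset.sum_mul_sum, TensorProduct.assoc_tmul,
          Algebra.TensorProduct.tmul_mul_tmul, one_mul, mul_one]
        simp only [map_sum, hFt]
        refine Finset.sum_congr rfl fun p _ => Finset.sum_congr rfl fun q _ => ?_
        rw [smul_mul_assoc, mul_smul_comm, smul_comm]
    _ = F (((1 : H) ⊗ₜ[k] W.comul 1) *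
          (TensorProduct.assoc k H H H) (W.comul 1 ⊗ₜ[k] (1 : H))) := key
    _ = ∑ p ∈ S, ∑ q ∈ S, (W.counit (g * p.2) • p.1) * (W.counit (q.1 * h) • q.2) := by
        rw [hS]
        simp only [TensorProduct.sum_tmul, TensorProduct.tmul_sum, map_sum,
          Finset.sum_mul_sum, TensorProduct.assoc_tmul,
          Algebra.TensorProduct.tmul_mul_tmul, one_mul, mul_one]
        simp only [map_sum, hFt]
        refine Finset.sum_congr rfl fun p _ => Finset.sum_congr rfl fun q _ => ?_
        rw [smul_mul_assoc, mul_smul_comm, smul_comm]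
end

section
/- In a weak Hopf algebra H, the antipode is an algebra anti-homomorphism: S(1) = 1 and S(hg) = S(g)S(h) for all h, g ∈ H. -/
open TensorProduct

set_option maxHeartbeats 1600000 in
/-- the antipode is an algebra anti-homomorphism. -/
theorem WeakHopfAlgebra.antipode_anti_alg_hom
    {k H : Type*} [Field k] [Ring H] [Algebra k H] [FiniteDimensional k H]
    (W : WeakHopfAlgebra k H) :
    W.antipode 1 = 1 ∧ ∀ h g : H, W.antipode (h * g) = W.antipode g * W.antipode h := by
  classical
  obtain ⟨Δ, ε, S, coassoc, cl, cr, cm, wcl, wcr, wecl, wecr, ar, al, aconv⟩ := W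
  show S 1 = 1 ∧ ∀ h g : H, S (h * g) = S g * S h
  choose rep hrep using fun x : H ⊗[k] H => TensorProduct.exists_finset x
  -- counit identities
  have Bcl : ∀ t : H, ∑ q ∈ rep (Δ t), ε q.1 • q.2 = t := by
    intro t
    have h := cl t
    rw [hrep (Δ t)] at h
    simpa [map_sum] using h
  have Bcr : ∀ t : H, ∑ q ∈ rep (Δ t), ε q.2 • q.1 = t := by
    intro t
    have h := cr t
    rw [hrep (Δ t)] at h
    simpa [map_sum] using h
  -- ε_t and ε_s  (as explicit sums): A3, A4
  have A3 : ∀ t : H, ∑ q ∈ rep (Δ t), q.1 * S q.2 = ∑ p ∈ rep (Δ 1), ε (p.1 * t) • p.2 := by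
    intro t
    have h := ar t
    rw [hrep (Δ t), hrep (Δ 1)] at h
    simpa [map_sum, Finset.sum_mul, Algebra.TensorProduct.tmul_mul_tmul] using h
  have A4 : ∀ t : H, ∑ q ∈ rep (Δ t), S q.1 * q.2 = ∑ p ∈ rep (Δ 1), ε (t * p.2) • p.1 := by
    intro t
    have h := al t
    rw [hrep (Δ t), hrep (Δ 1)] at h
    simpa [map_sum, Finset.mul_sum, Algebra.TensorProduct.tmul_mul_tmul] using h
  -- weak counit axioms with g = 1
  have T0 : ∀ f t : H, ε (f * t) = ∑ p ∈ rep (Δ 1), ε (f * p.1) * ε (p.2 * t) := by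
    intro f t
    have h := wecl f 1 t
    rw [hrep (Δ 1)] at h
    simpa [map_sum] using h
  have T0' : ∀ f t : H, ε (f * t) = ∑ p ∈ rep (Δ 1), ε (f * p.2) * ε (p.1 * t) := by
    intro f t
    have h := wecr f 1 t
    rw [hrep (Δ 1)] at h
    simpa [map_sum] using h
  
  -- the element (id ⊗ Δ)(Δ 1) in its three guises
  have L1 : (∑ p ∈ rep (Δ 1), p.1 ⊗ₜ[k] Δ p.2)
      = ∑ p ∈ rep (Δ 1), ∑ q ∈ rep (Δ 1), p.1 ⊗ₜ[k] ((p.2 * q.1) ⊗ₜ[k] q.2) := by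
    have h := wcl
    rw [hrep (Δ 1)] at h
    simpa [map_sum, sum_tmul, tmul_sum, Finset.sum_mul_sum,
      Algebra.TensorProduct.tmul_mul_tmul] using h
  have L2 : (∑ p ∈ rep (Δ 1), p.1 ⊗ₜ[k] Δ p.2)
      = ∑ p ∈ rep (Δ 1), ∑ q ∈ rep (Δ 1), q.1 ⊗ₜ[k] ((p.1 * q.2) ⊗ₜ[k] p.2) := by
    have h := wcr
    rw [hrep (Δ 1)] at h
    simpa [map_sum, sum_tmul, tmul_sum, Finset.sum_mul_sum,
      Algebra.TensorProduct.tmul_mul_tmul] using h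
  have L3 : ∀ t : H, (∑ q ∈ rep (Δ t), ∑ a ∈ rep (Δ q.1), a.1 ⊗ₜ[k] (a.2 ⊗ₜ[k] q.2))
      = ∑ q ∈ rep (Δ t), q.1 ⊗ₜ[k] Δ q.2 := by
    intro t
    have h := coassoc t
    rw [hrep (Δ t)] at h
    simp only [map_sum, LinearMap.rTensor_tmul, LinearMap.lTensor_tmul] at h
    rw [← h]
    refine Finset.sum_congr rfl fun q _ => ?_
    conv_rhs => rw [hrep (Δ q.1)]
    simp [sum_tmul, map_sum]
  -- S = S * id * S  (in Sweedler form, with ε_s inserted)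
  have A5 : ∀ t : H,
      ∑ q ∈ rep (Δ t), (∑ p ∈ rep (Δ 1), ε (q.1 * p.2) • p.1) * S q.2 = S t := by
    intro t
    have h := aconv t
    rw [hrep (Δ t)] at h
    simp only [map_sum, TensorProduct.map_tmul, LinearMap.mul'_apply,
      LinearMap.comp_apply] at h
    rw [← h]
    refine Finset.sum_congr rfl fun q _ => ?_
    congr 1
    rw [← A4 q.1]
    conv_rhs => rw [hrep (Δ q.1)]
    simp [map_sum]
  
  -- Δ x = Δ 1 * Δ x and Δ x = Δ x * Δ 1, expanded
  have hxl : ∀ x : H, Δ x = ∑ p ∈ rep (Δ 1), ∑ i ∈ rep (Δ x), (p.1 * i.1) ⊗ₜ[k] (p.2 * i.2) := by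
    intro x
    have h1 : Δ x = Δ 1 * Δ x := by rw [← cm, one_mul]
    conv_lhs => rw [h1, hrep (Δ 1), hrep (Δ x)]
    rw [Finset.sum_mul_sum]
    simp [Algebra.TensorProduct.tmul_mul_tmul]
  have hxr : ∀ x : H, Δ x = ∑ i ∈ rep (Δ x), ∑ p ∈ rep (Δ 1), (i.1 * p.1) ⊗ₜ[k] (i.2 * p.2) := by
    intro x
    have h1 : Δ x = Δ x * Δ 1 := by rw [← cm, mul_one]
    conv_lhs => rw [h1, hrep (Δ x), hrep (Δ 1)]
    rw [Finset.sum_mul_sum]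
    simp [Algebra.TensorProduct.tmul_mul_tmul]
  have hmulrep : ∀ a b : H, Δ (a * b)
      = ∑ q ∈ rep (Δ a), ∑ r ∈ rep (Δ b), (q.1 * r.1) ⊗ₜ[k] (q.2 * r.2) := by
    intro a b
    rw [cm a b]
    conv_lhs => rw [hrep (Δ a), hrep (Δ b)]
    rw [Finset.sum_mul_sum]
    simp [Algebra.TensorProduct.tmul_mul_tmul]
  -- (id ⊗ ε_t)(Δ x) = Δ1 · (x ⊗ 1)
  have T2 : ∀ x : H,
      (∑ q ∈ rep (Δ x), q.1 ⊗ₜ[k] (∑ p ∈ rep (Δ 1), ε (p.1 * q.2) • p.2))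
      = ∑ p ∈ rep (Δ 1), (p.1 * x) ⊗ₜ[k] p.2 := by
    intro x
    set Φ : H ⊗[k] (H ⊗[k] H) →ₗ[k] H ⊗[k] H :=
      ∑ i ∈ rep (Δ x), TensorProduct.map (LinearMap.mulRight k i.1)
        ((TensorProduct.lid k H).toLinearMap ∘ₗ
          (LinearMap.rTensor H (ε ∘ₗ LinearMap.mulRight k i.2))) with hPhi
    have key := congrArg (fun z => Φ z) ((L3 1).trans L2)
    simp only [hPhi, map_sum, LinearMap.sum_apply, TensorProduct.map_tmul,
      LinearMap.comp_apply, LinearMap.mulRight_apply, LinearMap.rTensor_tmul,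
      LinearEquiv.coe_coe, TensorProduct.lid_tmul] at key
    have e1 : (∑ q ∈ rep (Δ x), q.1 ⊗ₜ[k] (∑ p ∈ rep (Δ 1), ε (p.1 * q.2) • p.2))
        = ∑ p ∈ rep (Δ 1), ∑ q ∈ rep (Δ 1), ∑ i ∈ rep (Δ x),
            (q.1 * i.1) ⊗ₜ[k] (ε (p.1 * q.2 * i.2) • p.2) := by
      calc (∑ q ∈ rep (Δ x), q.1 ⊗ₜ[k] (∑ p ∈ rep (Δ 1), ε (p.1 * q.2) • p.2))
          = ∑ q ∈ rep (Δ x), ∑ p ∈ rep (Δ 1), q.1 ⊗ₜ[k] (ε (p.1 * q.2) • p.2) := by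
            simp [tmul_sum]
        _ = ∑ p ∈ rep (Δ 1), ∑ q ∈ rep (Δ x), q.1 ⊗ₜ[k] (ε (p.1 * q.2) • p.2) :=
            Finset.sum_comm
        _ = ∑ p ∈ rep (Δ 1), ∑ q ∈ rep (Δ 1), ∑ i ∈ rep (Δ x),
            (q.1 * i.1) ⊗ₜ[k] (ε (p.1 * q.2 * i.2) • p.2) := by
            refine Finset.sum_congr rfl fun p _ => ?_
            have h := congrArg (TensorProduct.map (LinearMap.id (R := k) (M := H))
              ((LinearMap.toSpanSingleton k H p.2) ∘ₗ (ε ∘ₗ LinearMap.mulLeft k p.1))) (hxl x)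
            conv_lhs at h => rw [hrep (Δ x)]
            simpa [map_sum, mul_assoc] using h
    have e2 : (∑ p ∈ rep (Δ 1), (p.1 * x) ⊗ₜ[k] p.2)
        = ∑ q ∈ rep (Δ 1), ∑ a ∈ rep (Δ q.1), ∑ i ∈ rep (Δ x),
            (a.1 * i.1) ⊗ₜ[k] (ε (a.2 * i.2) • q.2) := by
      refine Finset.sum_congr rfl fun q _ => ?_
      have hq : q.1 * x = ∑ a ∈ rep (Δ q.1), ∑ i ∈ rep (Δ x),
          ε (a.2 * i.2) • (a.1 * i.1) := by
        have h := cr (q.1 * x)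
        rw [hmulrep q.1 x] at h
        simpa [map_sum] using h.symm
      rw [hq]
      simp [sum_tmul, smul_tmul', tmul_smul]
    rw [e1, e2]
    exact key.symm
  
  have Lexp : (∑ p ∈ rep (Δ 1), p.1 ⊗ₜ[k] Δ p.2)
      = ∑ p ∈ rep (Δ 1), ∑ e ∈ rep (Δ p.2), p.1 ⊗ₜ[k] (e.1 ⊗ₜ[k] e.2) := by
    refine Finset.sum_congr rfl fun p _ => ?_
    conv_lhs => rw [hrep (Δ p.2)]
    simp [tmul_sum]
  -- (ε_s ⊗ id)(Δ x) = (1 ⊗ x)·Δ1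
  have T2' : ∀ x : H,
      (∑ q ∈ rep (Δ x), (∑ p ∈ rep (Δ 1), ε (q.1 * p.2) • p.1) ⊗ₜ[k] q.2)
      = ∑ p ∈ rep (Δ 1), p.1 ⊗ₜ[k] (x * p.2) := by
    intro x
    set Φ : H ⊗[k] (H ⊗[k] H) →ₗ[k] H ⊗[k] H :=
      ∑ i ∈ rep (Δ x), TensorProduct.map LinearMap.id
        ((TensorProduct.lid k H).toLinearMap ∘ₗ
          TensorProduct.map (ε ∘ₗ LinearMap.mulLeft k i.1) (LinearMap.mulLeft k i.2)) with hPhi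
    have key := congrArg (fun z => Φ z) ((Lexp.symm.trans L2).trans Finset.sum_comm)
    simp only [hPhi, map_sum, LinearMap.sum_apply, TensorProduct.map_tmul,
      LinearMap.comp_apply, LinearMap.mulLeft_apply, LinearMap.id_coe, id_eq,
      LinearEquiv.coe_coe, TensorProduct.lid_tmul, TensorProduct.tmul_smul] at key
    have e1 : (∑ q ∈ rep (Δ x), (∑ p ∈ rep (Δ 1), ε (q.1 * p.2) • p.1) ⊗ₜ[k] q.2)
        = ∑ p ∈ rep (Δ 1), ∑ q ∈ rep (Δ 1), ∑ i ∈ rep (Δ x),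
            ε (i.1 * (q.1 * p.2)) • (p.1 ⊗ₜ[k] (i.2 * q.2)) := by
      have hp : ∀ p : H × H, (∑ j ∈ rep (Δ x), ε (j.1 * p.2) • (p.1 ⊗ₜ[k] j.2))
          = ∑ q ∈ rep (Δ 1), ∑ i ∈ rep (Δ x),
              ε (i.1 * (q.1 * p.2)) • (p.1 ⊗ₜ[k] (i.2 * q.2)) := by
        intro p
        have h := congrArg (⇑((TensorProduct.mk k H H p.1) ∘ₗ
          (TensorProduct.lid k H).toLinearMap ∘ₗ
          LinearMap.rTensor H (ε ∘ₗ LinearMap.mulRight k p.2))) (hxr x)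
        conv_lhs at h => rw [hrep (Δ x)]
        simp only [map_sum, LinearMap.comp_apply, LinearMap.rTensor_tmul,
          LinearMap.mulRight_apply, LinearEquiv.coe_coe, TensorProduct.lid_tmul,
          TensorProduct.mk_apply, mul_assoc, map_smul, TensorProduct.tmul_smul] at h
        exact h.trans Finset.sum_comm
      calc (∑ q ∈ rep (Δ x), (∑ p ∈ rep (Δ 1), ε (q.1 * p.2) • p.1) ⊗ₜ[k] q.2)
          = ∑ j ∈ rep (Δ x), ∑ p ∈ rep (Δ 1), ε (j.1 * p.2) • (p.1 ⊗ₜ[k] j.2) := by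
            simp [sum_tmul, smul_tmul']
        _ = ∑ p ∈ rep (Δ 1), ∑ j ∈ rep (Δ x), ε (j.1 * p.2) • (p.1 ⊗ₜ[k] j.2) :=
            Finset.sum_comm
        _ = _ := Finset.sum_congr rfl fun p _ => hp p
    have e2 : (∑ p ∈ rep (Δ 1), p.1 ⊗ₜ[k] (x * p.2))
        = ∑ p ∈ rep (Δ 1), ∑ e ∈ rep (Δ p.2), ∑ i ∈ rep (Δ x),
            ε (i.1 * e.1) • (p.1 ⊗ₜ[k] (i.2 * e.2)) := by
      refine Finset.sum_congr rfl fun p _ => ?_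
      have hq : x * p.2 = ∑ e ∈ rep (Δ p.2), ∑ i ∈ rep (Δ x),
          ε (i.1 * e.1) • (i.2 * e.2) := by
        have h := cl (x * p.2)
        rw [hmulrep x p.2] at h
        simp only [map_sum, LinearMap.rTensor_tmul, LinearMap.comp_apply,
          LinearEquiv.coe_coe, TensorProduct.lid_tmul] at h
        exact h.symm.trans Finset.sum_comm
      rw [hq]
      simp [tmul_sum, TensorProduct.tmul_smul]
    exact e1.trans (key.symm.trans e2.symm)
  
  -- ∑ S(x₁) εt(x₂) = S(x)
  have A5'' : ∀ x : H,
      ∑ q ∈ rep (Δ x), S q.1 * (∑ p ∈ rep (Δ 1), ε (p.1 * q.2) • p.2) = S x := by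
    intro x
    have hmi : ∀ t : H, (LinearMap.mul' k H) ((TensorProduct.map LinearMap.id S) (Δ t))
        = ∑ c ∈ rep (Δ t), c.1 * S c.2 := by
      intro t
      conv_lhs => rw [hrep (Δ t)]
      simp [map_sum]
    have key := congrArg (⇑(LinearMap.mul' k H ∘ₗ TensorProduct.map S
      (LinearMap.mul' k H ∘ₗ TensorProduct.map LinearMap.id S))) (L3 x)
    simp only [map_sum, LinearMap.comp_apply, TensorProduct.map_tmul,
      LinearMap.mul'_apply, LinearMap.id_coe, id_eq] at key
    have e1 : (∑ q ∈ rep (Δ x), ∑ a ∈ rep (Δ q.1), S a.1 * (a.2 * S q.2)) = S x := by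
      rw [← A5 x]
      refine Finset.sum_congr rfl fun q _ => ?_
      rw [← A4 q.1]
      simp [Finset.sum_mul, mul_assoc]
    have e2 : (∑ q ∈ rep (Δ x), S q.1 *
        ((LinearMap.mul' k H) ((TensorProduct.map LinearMap.id S) (Δ q.2))))
        = ∑ q ∈ rep (Δ x), S q.1 * (∑ p ∈ rep (Δ 1), ε (p.1 * q.2) • p.2) := by
      refine Finset.sum_congr rfl fun q _ => ?_
      rw [hmi q.2, A3 q.2]
    exact e2.symm.trans (key.symm.trans e1)
  
  -- V : ∑ 1₍₁₎ S(x 1₍₂₎) = S x   and   V' : ∑ S(1₍₁₎ x) 1₍₂₎ = S x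
  have V : ∀ x : H, ∑ p ∈ rep (Δ 1), p.1 * S (x * p.2) = S x := by
    intro x
    have h := congrArg (⇑(LinearMap.mul' k H ∘ₗ TensorProduct.map LinearMap.id S)) (T2' x)
    simp only [map_sum, LinearMap.comp_apply, TensorProduct.map_tmul,
      LinearMap.mul'_apply, LinearMap.id_coe, id_eq] at h
    exact h.symm.trans (A5 x)
  have V' : ∀ x : H, ∑ p ∈ rep (Δ 1), S (p.1 * x) * p.2 = S x := by
    intro x
    have h := congrArg (⇑(LinearMap.mul' k H ∘ₗ TensorProduct.map S LinearMap.id)) (T2 x)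
    simp only [map_sum, LinearMap.comp_apply, TensorProduct.map_tmul,
      LinearMap.mul'_apply, LinearMap.id_coe, id_eq] at h
    exact h.symm.trans (A5'' x)
  have hS1 : S 1 = 1 := by
    have h := V' 1
    simp only [mul_one] at h
    have h2 := A4 1
    simp only [one_mul] at h2
    exact h.symm.trans (h2.trans (Bcr 1))
  
  -- rep-change for ε_t of a product
  have hA3m : ∀ a b : H, (∑ r ∈ rep (Δ 1), ε (r.1 * (a * b)) • r.2)
      = ∑ q ∈ rep (Δ a), ∑ e ∈ rep (Δ b), (q.1 * e.1) * S (q.2 * e.2) := by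
    intro a b
    rw [← A3 (a * b)]
    have h := congrArg (⇑(LinearMap.mul' k H ∘ₗ TensorProduct.map LinearMap.id S))
      (hmulrep a b)
    conv_lhs at h => rw [hrep (Δ (a * b))]
    simpa [map_sum] using h
  -- W : ∑ 1₍₁₎ ⊗ ε_t(x·1₍₂₎) = ∑ 1₍₁₎ ⊗ x₍₁₎·1₍₂₎·S(x₍₂₎)
  have W : ∀ x : H, (∑ p ∈ rep (Δ 1), ∑ r ∈ rep (Δ 1),
        ε (r.1 * (x * p.2)) • (p.1 ⊗ₜ[k] r.2))
      = ∑ p ∈ rep (Δ 1), ∑ q ∈ rep (Δ x), p.1 ⊗ₜ[k] (q.1 * p.2 * S q.2) := by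
    intro x
    set Φ : H ⊗[k] (H ⊗[k] H) →ₗ[k] H ⊗[k] H :=
      ∑ i ∈ rep (Δ x), TensorProduct.map LinearMap.id
        (LinearMap.mul' k H ∘ₗ TensorProduct.map (LinearMap.mulLeft k i.1)
          (S ∘ₗ LinearMap.mulLeft k i.2)) with hPhi
    have key := congrArg (fun z => Φ z) (Lexp.symm.trans L1)
    simp only [hPhi, map_sum, LinearMap.sum_apply, TensorProduct.map_tmul,
      LinearMap.comp_apply, LinearMap.mulLeft_apply, LinearMap.id_coe, id_eq,
      LinearMap.mul'_apply] at key
    have e1 : (∑ p ∈ rep (Δ 1), ∑ r ∈ rep (Δ 1), ε (r.1 * (x * p.2)) • (p.1 ⊗ₜ[k] r.2))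
        = ∑ p ∈ rep (Δ 1), ∑ e ∈ rep (Δ p.2), ∑ i ∈ rep (Δ x),
            p.1 ⊗ₜ[k] ((i.1 * e.1) * S (i.2 * e.2)) := by
      refine Finset.sum_congr rfl fun p _ => ?_
      have h0 : (∑ r ∈ rep (Δ 1), ε (r.1 * (x * p.2)) • (p.1 ⊗ₜ[k] r.2))
          = p.1 ⊗ₜ[k] (∑ r ∈ rep (Δ 1), ε (r.1 * (x * p.2)) • r.2) := by
        simp [tmul_sum, TensorProduct.tmul_smul]
      rw [h0, hA3m x p.2]
      rw [tmul_sum]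
      rw [Finset.sum_comm]
      refine Finset.sum_congr rfl fun e _ => ?_
      rw [tmul_sum]
    have e2 : (∑ p ∈ rep (Δ 1), ∑ q ∈ rep (Δ x), p.1 ⊗ₜ[k] (q.1 * p.2 * S q.2))
        = ∑ p ∈ rep (Δ 1), ∑ q ∈ rep (Δ 1), ∑ i ∈ rep (Δ x),
            p.1 ⊗ₜ[k] ((i.1 * (p.2 * q.1)) * S (i.2 * q.2)) := by
      refine Finset.sum_congr rfl fun p _ => ?_
      calc (∑ q ∈ rep (Δ x), p.1 ⊗ₜ[k] (q.1 * p.2 * S q.2))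
          = ∑ i ∈ rep (Δ x), ∑ q ∈ rep (Δ 1),
              p.1 ⊗ₜ[k] ((i.1 * (p.2 * q.1)) * S (i.2 * q.2)) := by
            refine Finset.sum_congr rfl fun i _ => ?_
            have hin : (∑ r ∈ rep (Δ 1), (i.1 * (p.2 * r.1)) * S (i.2 * r.2))
                = i.1 * p.2 * S i.2 := by
              conv_rhs => rw [← V i.2]
              rw [Finset.mul_sum]
              exact Finset.sum_congr rfl fun r _ => by
                simp only [mul_assoc]
            rw [← hin, tmul_sum]
        _ = _ := Finset.sum_comm
    exact e1.trans (key.trans e2.symm)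
  
  have H1 : ∀ a b : H, (∑ p ∈ rep (Δ 1), ε (p.1 * (a * b)) • p.2)
      = ∑ q ∈ rep (Δ a), ∑ r ∈ rep (Δ b), q.1 * r.1 * S r.2 * S q.2 := by
    intro a b
    have key := congrArg (⇑((TensorProduct.lid k H).toLinearMap ∘ₗ
      LinearMap.rTensor H (ε ∘ₗ LinearMap.mulRight k b))) (W a)
    simp only [map_sum, map_smul, LinearMap.comp_apply, LinearMap.rTensor_tmul,
      LinearMap.mulRight_apply, LinearEquiv.coe_coe, TensorProduct.lid_tmul,
      smul_smul] at key
    have e1 : (∑ p ∈ rep (Δ 1), ε (p.1 * (a * b)) • p.2)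
        = ∑ p ∈ rep (Δ 1), ∑ r ∈ rep (Δ 1),
            (ε (r.1 * (a * p.2)) * ε (p.1 * b)) • r.2 := by
      calc (∑ p ∈ rep (Δ 1), ε (p.1 * (a * b)) • p.2)
          = ∑ r ∈ rep (Δ 1), ∑ p ∈ rep (Δ 1),
              (ε (r.1 * (a * p.2)) * ε (p.1 * b)) • r.2 := by
            refine Finset.sum_congr rfl fun r _ => ?_
            have h := T0' (r.1 * a) b
            simp only [mul_assoc] at h
            rw [show ε (r.1 * (a * b)) = ∑ p ∈ rep (Δ 1), ε (r.1 * (a * p.2)) * ε (p.1 * b)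
              from h, Finset.sum_smul]
        _ = _ := Finset.sum_comm
    have e2 : (∑ q ∈ rep (Δ a), ∑ r ∈ rep (Δ b), q.1 * r.1 * S r.2 * S q.2)
        = ∑ p ∈ rep (Δ 1), ∑ q ∈ rep (Δ a), ε (p.1 * b) • (q.1 * p.2 * S q.2) := by
      calc (∑ q ∈ rep (Δ a), ∑ r ∈ rep (Δ b), q.1 * r.1 * S r.2 * S q.2)
          = ∑ q ∈ rep (Δ a), ∑ p ∈ rep (Δ 1), ε (p.1 * b) • (q.1 * p.2 * S q.2) := by
            refine Finset.sum_congr rfl fun q _ => ?_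
            have h0 : (∑ r ∈ rep (Δ b), q.1 * r.1 * S r.2 * S q.2)
                = q.1 * (∑ r ∈ rep (Δ b), r.1 * S r.2) * S q.2 := by
              simp [Finset.mul_sum, Finset.sum_mul, mul_assoc]
            rw [h0, A3 b]
            simp [Finset.mul_sum, Finset.sum_mul, mul_smul_comm, smul_mul_assoc]
        _ = _ := Finset.sum_comm
    exact e1.trans (key.trans e2.symm)
  
  have hA4m : ∀ a b : H, (∑ r ∈ rep (Δ 1), ε (a * b * r.2) • r.1)
      = ∑ q ∈ rep (Δ a), ∑ e ∈ rep (Δ b), S (q.1 * e.1) * (q.2 * e.2) := by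
    intro a b
    rw [← A4 (a * b)]
    have h := congrArg (⇑(LinearMap.mul' k H ∘ₗ TensorProduct.map S LinearMap.id))
      (hmulrep a b)
    conv_lhs at h => rw [hrep (Δ (a * b))]
    simpa [map_sum] using h
  -- W' : ∑ ε_s(1₍₁₎·x) ⊗ 1₍₂₎ = ∑ (S(x₍₁₎)·1₍₁₎·x₍₂₎) ⊗ 1₍₂₎
  have W' : ∀ x : H, (∑ p ∈ rep (Δ 1), ∑ r ∈ rep (Δ 1),
        ε (p.1 * x * r.2) • (r.1 ⊗ₜ[k] p.2))
      = ∑ p ∈ rep (Δ 1), ∑ q ∈ rep (Δ x), (S q.1 * p.1 * q.2) ⊗ₜ[k] p.2 := by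
    intro x
    set Φ : H ⊗[k] (H ⊗[k] H) →ₗ[k] H ⊗[k] H :=
      ∑ e ∈ rep (Δ x), (LinearMap.rTensor H (LinearMap.mul' k H)) ∘ₗ
        (TensorProduct.assoc k H H H).symm.toLinearMap ∘ₗ
        TensorProduct.map (S ∘ₗ LinearMap.mulRight k e.1)
          (TensorProduct.map (LinearMap.mulRight k e.2) LinearMap.id) with hPhi
    have key := congrArg (fun z => Φ z) ((L3 1).trans L1)
    simp only [hPhi, map_sum, LinearMap.sum_apply, TensorProduct.map_tmul,
      LinearMap.comp_apply, LinearMap.mulRight_apply, LinearMap.id_coe, id_eq,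
      LinearEquiv.coe_coe, TensorProduct.assoc_symm_tmul, LinearMap.rTensor_tmul,
      LinearMap.mul'_apply] at key
    -- key : ∑ p ∑ a ∑ e, (S (a.1*e.1) * (a.2*e.2)) ⊗ p.2
    --     = ∑ p ∑ q ∑ e, (S (p.1*e.1) * (p.2*q.1*e.2)) ⊗ q.2
    have e1 : (∑ p ∈ rep (Δ 1), ∑ r ∈ rep (Δ 1), ε (p.1 * x * r.2) • (r.1 ⊗ₜ[k] p.2))
        = ∑ p ∈ rep (Δ 1), ∑ a ∈ rep (Δ p.1), ∑ e ∈ rep (Δ x),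
            (S (a.1 * e.1) * (a.2 * e.2)) ⊗ₜ[k] p.2 := by
      refine Finset.sum_congr rfl fun p _ => ?_
      have h0 : (∑ r ∈ rep (Δ 1), ε (p.1 * x * r.2) • (r.1 ⊗ₜ[k] p.2))
          = (∑ r ∈ rep (Δ 1), ε (p.1 * x * r.2) • r.1) ⊗ₜ[k] p.2 := by
        simp [sum_tmul, smul_tmul']
      rw [h0, hA4m p.1 x]
      simp [sum_tmul]
    have e2 : (∑ p ∈ rep (Δ 1), ∑ q ∈ rep (Δ x), (S q.1 * p.1 * q.2) ⊗ₜ[k] p.2)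
        = ∑ p ∈ rep (Δ 1), ∑ q ∈ rep (Δ 1), ∑ e ∈ rep (Δ x),
            (S (p.1 * e.1) * (p.2 * (q.1 * e.2))) ⊗ₜ[k] q.2 := by
      calc (∑ p ∈ rep (Δ 1), ∑ q ∈ rep (Δ x), (S q.1 * p.1 * q.2) ⊗ₜ[k] p.2)
          = ∑ q ∈ rep (Δ 1), ∑ e ∈ rep (Δ x), (S e.1 * (q.1 * e.2)) ⊗ₜ[k] q.2 := by
            refine Finset.sum_congr rfl fun q _ => Finset.sum_congr rfl fun e _ => ?_
            rw [mul_assoc]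
        _ = ∑ q ∈ rep (Δ 1), ∑ e ∈ rep (Δ x), ∑ p ∈ rep (Δ 1),
              (S (p.1 * e.1) * (p.2 * (q.1 * e.2))) ⊗ₜ[k] q.2 := by
            refine Finset.sum_congr rfl fun q _ => Finset.sum_congr rfl fun e _ => ?_
            have hin : (∑ p ∈ rep (Δ 1), S (p.1 * e.1) * (p.2 * (q.1 * e.2)))
                = S e.1 * (q.1 * e.2) := by
              rw [← V' e.1, Finset.sum_mul]
              exact Finset.sum_congr rfl fun p _ => (mul_assoc _ _ _).symm
            rw [← hin, sum_tmul]
        _ = ∑ q ∈ rep (Δ 1), ∑ p ∈ rep (Δ 1), ∑ e ∈ rep (Δ x),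
              (S (p.1 * e.1) * (p.2 * (q.1 * e.2))) ⊗ₜ[k] q.2 := by
            exact Finset.sum_congr rfl fun q _ => Finset.sum_comm
        _ = _ := Finset.sum_comm
    refine e1.trans (key.trans ?_)
    rw [e2]
    refine Finset.sum_congr rfl fun p _ => Finset.sum_congr rfl fun q _ =>
      Finset.sum_congr rfl fun e _ => ?_
    rw [mul_assoc p.2 q.1 e.2]
  
  have H1' : ∀ a b : H, (∑ p ∈ rep (Δ 1), ε (a * b * p.2) • p.1)
      = ∑ q ∈ rep (Δ a), ∑ r ∈ rep (Δ b), S r.1 * S q.1 * q.2 * r.2 := by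
    intro a b
    have key := congrArg (⇑((TensorProduct.rid k H).toLinearMap ∘ₗ
      LinearMap.lTensor H (ε ∘ₗ LinearMap.mulLeft k a))) (W' b)
    simp only [map_sum, map_smul, LinearMap.comp_apply, LinearMap.lTensor_tmul,
      LinearMap.mulLeft_apply, LinearEquiv.coe_coe, TensorProduct.rid_tmul,
      smul_smul] at key
    -- key : ∑ p ∑ r, (ε (p.1*b*r.2) * ε (a*p.2)) • r.1
    --     = ∑ p ∑ q, ε (a*p.2) • (S q.1 * p.1 * q.2)
    have e1 : (∑ p ∈ rep (Δ 1), ε (a * b * p.2) • p.1)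
        = ∑ p ∈ rep (Δ 1), ∑ r ∈ rep (Δ 1),
            (ε (p.1 * b * r.2) * ε (a * p.2)) • r.1 := by
      calc (∑ p ∈ rep (Δ 1), ε (a * b * p.2) • p.1)
          = ∑ r ∈ rep (Δ 1), ∑ p ∈ rep (Δ 1),
              (ε (p.1 * b * r.2) * ε (a * p.2)) • r.1 := by
            refine Finset.sum_congr rfl fun r _ => ?_
            have h := T0' a (b * r.2)
            have h2 : ε (a * b * r.2) = ∑ p ∈ rep (Δ 1),
                ε (p.1 * b * r.2) * ε (a * p.2) := by
              rw [mul_assoc, h]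
              exact Finset.sum_congr rfl fun p _ => by rw [mul_comm, mul_assoc]
            rw [h2, Finset.sum_smul]
        _ = _ := Finset.sum_comm
    have e2 : (∑ q ∈ rep (Δ a), ∑ r ∈ rep (Δ b), S r.1 * S q.1 * q.2 * r.2)
        = ∑ p ∈ rep (Δ 1), ∑ q ∈ rep (Δ b), ε (a * p.2) • (S q.1 * p.1 * q.2) := by
      calc (∑ q ∈ rep (Δ a), ∑ r ∈ rep (Δ b), S r.1 * S q.1 * q.2 * r.2)
          = ∑ r ∈ rep (Δ b), ∑ q ∈ rep (Δ a), S r.1 * S q.1 * q.2 * r.2 :=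
            Finset.sum_comm
        _ = ∑ r ∈ rep (Δ b), ∑ p ∈ rep (Δ 1), ε (a * p.2) • (S r.1 * p.1 * r.2) := by
            refine Finset.sum_congr rfl fun r _ => ?_
            have h0 : (∑ q ∈ rep (Δ a), S r.1 * S q.1 * q.2 * r.2)
                = S r.1 * (∑ q ∈ rep (Δ a), S q.1 * q.2) * r.2 := by
              simp [Finset.mul_sum, Finset.sum_mul, mul_assoc]
            rw [h0, A4 a]
            simp [Finset.mul_sum, Finset.sum_mul, mul_smul_comm, smul_mul_assoc]
        _ = _ := Finset.sum_comm
    exact e1.trans (key.trans e2.symm)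
  
  have L3e : ∀ t : H, (∑ q ∈ rep (Δ t), ∑ a ∈ rep (Δ q.1), a.1 ⊗ₜ[k] (a.2 ⊗ₜ[k] q.2))
      = ∑ q ∈ rep (Δ t), ∑ c ∈ rep (Δ q.2), q.1 ⊗ₜ[k] (c.1 ⊗ₜ[k] c.2) := by
    intro t
    rw [L3 t]
    refine Finset.sum_congr rfl fun q _ => ?_
    conv_lhs => rw [hrep (Δ q.2)]
    simp [tmul_sum]
  have swapA : ∀ (I L : Finset (H × H)) (J M : (H × H) → Finset (H × H))
      (F : (H × H) → (H × H) → (H × H) → (H × H) → H),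
      (∑ i ∈ I, ∑ l ∈ L, ∑ j ∈ J i, ∑ m ∈ M l, F i j l m)
      = ∑ l ∈ L, ∑ m ∈ M l, ∑ i ∈ I, ∑ j ∈ J i, F i j l m := by
    intro I L J M F
    calc (∑ i ∈ I, ∑ l ∈ L, ∑ j ∈ J i, ∑ m ∈ M l, F i j l m)
        = ∑ l ∈ L, ∑ i ∈ I, ∑ j ∈ J i, ∑ m ∈ M l, F i j l m := Finset.sum_comm
      _ = ∑ l ∈ L, ∑ i ∈ I, ∑ m ∈ M l, ∑ j ∈ J i, F i j l m :=
          Finset.sum_congr rfl fun l _ => Finset.sum_congr rfl fun i _ => Finset.sum_comm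
      _ = ∑ l ∈ L, ∑ m ∈ M l, ∑ i ∈ I, ∑ j ∈ J i, F i j l m :=
          Finset.sum_congr rfl fun l _ => Finset.sum_comm
  have swapB : ∀ (I L : Finset (H × H)) (J M : (H × H) → Finset (H × H))
      (F : (H × H) → (H × H) → (H × H) → (H × H) → H),
      (∑ i ∈ I, ∑ j ∈ J i, ∑ l ∈ L, ∑ m ∈ M l, F i j l m)
      = ∑ l ∈ L, ∑ m ∈ M l, ∑ i ∈ I, ∑ j ∈ J i, F i j l m := by
    intro I L J M F
    calc (∑ i ∈ I, ∑ j ∈ J i, ∑ l ∈ L, ∑ m ∈ M l, F i j l m)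
        = ∑ i ∈ I, ∑ l ∈ L, ∑ j ∈ J i, ∑ m ∈ M l, F i j l m :=
          Finset.sum_congr rfl fun i _ => Finset.sum_comm
      _ = _ := swapA I L J M F
  
  have main : ∀ x y : H, S (x * y) = S y * S x := by
    intro x y
    -- conjugation moves coming from coassociativity
    have keyxw : ∀ u v w : H,
        (∑ q ∈ rep (Δ x), ∑ a ∈ rep (Δ q.1), S u * (S a.1 * (a.2 * (v * S (q.2 * w)))))
        = ∑ q ∈ rep (Δ x), ∑ c ∈ rep (Δ q.2), S u * (S q.1 * (c.1 * (v * S (c.2 * w)))) := by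
      intro u v w
      have h := congrArg (⇑(LinearMap.mulLeft k (S u) ∘ₗ LinearMap.mul' k H ∘ₗ
        TensorProduct.map S (LinearMap.mul' k H ∘ₗ TensorProduct.map LinearMap.id
          (LinearMap.mulLeft k v ∘ₗ S ∘ₗ LinearMap.mulRight k w)))) (L3e x)
      simpa only [map_sum, LinearMap.comp_apply, TensorProduct.map_tmul,
        LinearMap.mul'_apply, LinearMap.mulLeft_apply, LinearMap.mulRight_apply,
        LinearMap.id_coe, id_eq] using h
    have keyx1 : ∀ u v : H,
        (∑ q ∈ rep (Δ x), ∑ a ∈ rep (Δ q.1), S u * (S a.1 * (a.2 * (v * S q.2))))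
        = ∑ q ∈ rep (Δ x), ∑ c ∈ rep (Δ q.2), S u * (S q.1 * (c.1 * (v * S c.2))) := by
      intro u v
      have h := keyxw u v 1
      simpa only [mul_one] using h
    have keyyw : ∀ u v w : H,
        (∑ r ∈ rep (Δ y), ∑ b ∈ rep (Δ r.1), S b.1 * (u * (v * (b.2 * S (w * r.2)))))
        = ∑ r ∈ rep (Δ y), ∑ d ∈ rep (Δ r.2), S r.1 * (u * (v * (d.1 * S (w * d.2)))) := by
      intro u v w
      have h := congrArg (⇑(LinearMap.mul' k H ∘ₗ
        TensorProduct.map S (LinearMap.mulLeft k u ∘ₗ LinearMap.mulLeft k v ∘ₗ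
          LinearMap.mul' k H ∘ₗ TensorProduct.map LinearMap.id
            (S ∘ₗ LinearMap.mulLeft k w)))) (L3e y)
      simpa only [map_sum, LinearMap.comp_apply, TensorProduct.map_tmul,
        LinearMap.mul'_apply, LinearMap.mulLeft_apply, LinearMap.id_coe, id_eq] using h
    -- step 1 : S(xy) = ∑ ε_s((xy)₁) S((xy)₂), with Δ(xy) = Δx·Δy
    have F1 : S (x * y) = ∑ q ∈ rep (Δ x), ∑ r ∈ rep (Δ y), ∑ p ∈ rep (Δ 1),
        ε (q.1 * r.1 * p.2) • (p.1 * S (q.2 * r.2)) := by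
      have h := congrArg (⇑(∑ p ∈ rep (Δ 1), (TensorProduct.lid k H).toLinearMap ∘ₗ
        TensorProduct.map (ε ∘ₗ LinearMap.mulRight k p.2)
          (LinearMap.mulLeft k p.1 ∘ₗ S))) (hmulrep x y)
      conv_lhs at h => rw [hrep (Δ (x * y))]
      simp only [map_sum, LinearMap.sum_apply, LinearMap.comp_apply,
        TensorProduct.map_tmul, LinearMap.mulRight_apply, LinearMap.mulLeft_apply,
        LinearEquiv.coe_coe, TensorProduct.lid_tmul] at h
      calc S (x * y) = ∑ u ∈ rep (Δ (x * y)),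
            (∑ p ∈ rep (Δ 1), ε (u.1 * p.2) • p.1) * S u.2 := (A5 (x * y)).symm
        _ = ∑ u ∈ rep (Δ (x * y)), ∑ p ∈ rep (Δ 1), ε (u.1 * p.2) • (p.1 * S u.2) := by
            simp [Finset.sum_mul, smul_mul_assoc]
        _ = _ := by rw [h]
    -- step 2 : insert H1'
    have F2 : S (x * y) = ∑ q ∈ rep (Δ x), ∑ r ∈ rep (Δ y),
        ∑ a ∈ rep (Δ q.1), ∑ b ∈ rep (Δ r.1),
          S b.1 * (S a.1 * (a.2 * (b.2 * S (q.2 * r.2)))) := by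
      rw [F1]
      refine Finset.sum_congr rfl fun q _ => Finset.sum_congr rfl fun r _ => ?_
      have h0 : (∑ p ∈ rep (Δ 1), ε (q.1 * r.1 * p.2) • (p.1 * S (q.2 * r.2)))
          = (∑ p ∈ rep (Δ 1), ε (q.1 * r.1 * p.2) • p.1) * S (q.2 * r.2) := by
        simp [Finset.sum_mul, smul_mul_assoc]
      rw [h0, H1' q.1 r.1]
      simp [Finset.sum_mul, mul_assoc]
    -- step 3 : reorder and apply keyxw (coassociativity on x)
    have F4 : S (x * y) = ∑ r ∈ rep (Δ y), ∑ b ∈ rep (Δ r.1),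
        ∑ q ∈ rep (Δ x), ∑ c ∈ rep (Δ q.2),
          S b.1 * (S q.1 * (c.1 * (b.2 * S (c.2 * r.2)))) := by
      rw [F2]
      rw [swapA (rep (Δ x)) (rep (Δ y)) (fun q => rep (Δ q.1)) (fun r => rep (Δ r.1))
        (fun q a r b => S b.1 * (S a.1 * (a.2 * (b.2 * S (q.2 * r.2)))))]
      refine Finset.sum_congr rfl fun r _ => Finset.sum_congr rfl fun b _ => ?_
      exact keyxw b.1 b.2 r.2
    -- step 4 : reorder and apply keyyw (coassociativity on y)
    have F6 : S (x * y) = ∑ q ∈ rep (Δ x), ∑ c ∈ rep (Δ q.2),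
        ∑ r ∈ rep (Δ y), ∑ d ∈ rep (Δ r.2),
          S r.1 * (S q.1 * (c.1 * (d.1 * S (c.2 * d.2)))) := by
      rw [F4]
      rw [swapB (rep (Δ y)) (rep (Δ x)) (fun r => rep (Δ r.1)) (fun q => rep (Δ q.2))
        (fun r b q c => S b.1 * (S q.1 * (c.1 * (b.2 * S (c.2 * r.2)))))]
      refine Finset.sum_congr rfl fun q _ => Finset.sum_congr rfl fun c _ => ?_
      exact keyyw (S q.1) c.1 c.2
    -- step 5 : collapse the d-legs using ε_t(q.2 r.2) = (q.2 r.2)₁ S((q.2 r.2)₂) and H1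
    have F9 : S (x * y) = ∑ q ∈ rep (Δ x), ∑ r ∈ rep (Δ y), ∑ c ∈ rep (Δ q.2),
        S r.1 * (S q.1 * (c.1 * ((∑ p ∈ rep (Δ 1), ε (p.1 * r.2) • p.2) * S c.2))) := by
      rw [F6]
      refine Finset.sum_congr rfl fun q _ => ?_
      rw [Finset.sum_comm]
      refine Finset.sum_congr rfl fun r _ => ?_
      have EE := (hA3m q.2 r.2).symm.trans (H1 q.2 r.2)
      calc (∑ c ∈ rep (Δ q.2), ∑ d ∈ rep (Δ r.2),
            S r.1 * (S q.1 * (c.1 * (d.1 * S (c.2 * d.2)))))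
          = S r.1 * (S q.1 * (∑ c ∈ rep (Δ q.2), ∑ d ∈ rep (Δ r.2),
              (c.1 * d.1) * S (c.2 * d.2))) := by
            simp [Finset.mul_sum, mul_assoc]
        _ = S r.1 * (S q.1 * (∑ c ∈ rep (Δ q.2), ∑ d ∈ rep (Δ r.2),
              c.1 * d.1 * S d.2 * S c.2)) := by rw [EE]
        _ = S r.1 * (S q.1 * (∑ c ∈ rep (Δ q.2),
              c.1 * ((∑ d ∈ rep (Δ r.2), d.1 * S d.2) * S c.2))) := by
            congr 2
            refine Finset.sum_congr rfl fun c _ => ?_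
            simp [Finset.sum_mul, Finset.mul_sum, mul_assoc]
        _ = S r.1 * (S q.1 * (∑ c ∈ rep (Δ q.2),
              c.1 * ((∑ p ∈ rep (Δ 1), ε (p.1 * r.2) • p.2) * S c.2))) := by
            rw [A3 r.2]
        _ = ∑ c ∈ rep (Δ q.2), S r.1 * (S q.1 *
              (c.1 * ((∑ p ∈ rep (Δ 1), ε (p.1 * r.2) • p.2) * S c.2))) := by
            simp [Finset.mul_sum]
    -- step 6 : coassociativity on x backwards, then collapse a-legs with A4
    have F11 : S (x * y) = ∑ r ∈ rep (Δ y), ∑ q ∈ rep (Δ x),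
        S r.1 * ((∑ p ∈ rep (Δ 1), ε (q.1 * p.2) • p.1) *
          ((∑ p ∈ rep (Δ 1), ε (p.1 * r.2) • p.2) * S q.2)) := by
      rw [F9, Finset.sum_comm]
      refine Finset.sum_congr rfl fun r _ => ?_
      rw [← keyx1 r.1 (∑ p ∈ rep (Δ 1), ε (p.1 * r.2) • p.2)]
      refine Finset.sum_congr rfl fun q _ => ?_
      rw [← A4 q.1]
      simp only [Finset.sum_mul, Finset.mul_sum, smul_mul_assoc, mul_smul_comm, mul_assoc,
        Finset.smul_sum]
      exact Finset.sum_comm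
    -- step 7 : T2' on x
    have F12 : S (x * y) = ∑ r ∈ rep (Δ y), ∑ p ∈ rep (Δ 1),
        S r.1 * (p.1 * ((∑ i ∈ rep (Δ 1), ε (i.1 * r.2) • i.2) * S (x * p.2))) := by
      rw [F11]
      refine Finset.sum_congr rfl fun r _ => ?_
      have h := congrArg (⇑(LinearMap.mulLeft k (S r.1) ∘ₗ LinearMap.mul' k H ∘ₗ
        TensorProduct.map LinearMap.id
          (LinearMap.mulLeft k (∑ i ∈ rep (Δ 1), ε (i.1 * r.2) • i.2) ∘ₗ S))) (T2' x)
      simpa only [map_sum, LinearMap.comp_apply, TensorProduct.map_tmul,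
        LinearMap.mul'_apply, LinearMap.mulLeft_apply, LinearMap.id_coe, id_eq] using h
    -- step 8 : T2 on y
    have F13 : S (x * y) = ∑ p ∈ rep (Δ 1), ∑ i ∈ rep (Δ 1),
        S (i.1 * y) * (p.1 * (i.2 * S (x * p.2))) := by
      rw [F12, Finset.sum_comm]
      refine Finset.sum_congr rfl fun p _ => ?_
      have h := congrArg (⇑(LinearMap.mul' k H ∘ₗ
        TensorProduct.map S (LinearMap.mulLeft k p.1 ∘ₗ
          LinearMap.mulRight k (S (x * p.2))))) (T2 y)
      simpa only [map_sum, LinearMap.comp_apply, TensorProduct.map_tmul,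
        LinearMap.mul'_apply, LinearMap.mulLeft_apply, LinearMap.mulRight_apply,
        Finset.mul_sum, Finset.sum_mul, smul_mul_assoc, mul_smul_comm, mul_assoc] using h
    -- step 9 : the 1₍₁₎/1₍₂₎ exchange (Λ1 vs Λ2), then V, V'
    have kappa := congrArg (⇑(LinearMap.mul' k H ∘ₗ
      TensorProduct.map (S ∘ₗ LinearMap.mulRight k y) (LinearMap.mul' k H ∘ₗ
        TensorProduct.map LinearMap.id (S ∘ₗ LinearMap.mulLeft k x)))) (L2.symm.trans L1)
    simp only [map_sum, LinearMap.comp_apply, TensorProduct.map_tmul,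
      LinearMap.mul'_apply, LinearMap.mulLeft_apply, LinearMap.mulRight_apply,
      LinearMap.id_coe, id_eq] at kappa
    -- kappa : ∑ p ∑ q, S (q.1*y) * (p.1*q.2 * S (x*p.2))
    --       = ∑ p ∑ q, S (p.1*y) * (p.2*q.1 * S (x*q.2))
    calc S (x * y)
        = ∑ p ∈ rep (Δ 1), ∑ i ∈ rep (Δ 1), S (i.1 * y) * (p.1 * (i.2 * S (x * p.2))) := F13
      _ = ∑ p ∈ rep (Δ 1), ∑ q ∈ rep (Δ 1), S (p.1 * y) * (p.2 * q.1 * S (x * q.2)) := by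
          rw [← kappa]
          exact Finset.sum_congr rfl fun p _ => Finset.sum_congr rfl fun q _ => by
            rw [mul_assoc]
      _ = (∑ p ∈ rep (Δ 1), S (p.1 * y) * p.2) * ∑ q ∈ rep (Δ 1), q.1 * S (x * q.2) := by
          rw [Finset.sum_mul_sum]
          exact Finset.sum_congr rfl fun p _ => Finset.sum_congr rfl fun q _ => by
            simp [mul_assoc]
      _ = S y * S x := by rw [V' y, V x]
  exact ⟨hS1, main⟩
end

section
/- In a weak Hopf algebra H, the antipode is a coalgebra anti-homomorphism: ε(S(h)) = ε(h) and Δ(S(h)) = S(h₍₂₎) ⊗ S(h₍₁₎) for all h ∈ H. -/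
open TensorProduct

set_option maxHeartbeats 1000000
set_option synthInstance.maxHeartbeats 1000000

namespace WeakHopfAlgebra

variable {k H : Type*} [CommRing k] [Ring H] [Algebra k H] (W : WeakHopfAlgebra k H)

/-- Convolution product of two linear maps from `H` into a `k`-algebra `B`. -/
noncomputable def conv {B : Type*} [Ring B] [Algebra k B] (f g : H →ₗ[k] B) : H →ₗ[k] B :=
  LinearMap.mul' k B ∘ₗ TensorProduct.map f g ∘ₗ W.comul

lemma conv_apply {B : Type*} [Ring B] [Algebra k B] (f g : H →ₗ[k] B) (h : H) :
    W.conv f g h = LinearMap.mul' k B (TensorProduct.map f g (W.comul h)) := rfl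

lemma conv_assoc {B : Type*} [Ring B] [Algebra k B] (f g j : H →ₗ[k] B) :
    W.conv (W.conv f g) j = W.conv f (W.conv g j) := by
  apply LinearMap.ext; intro h
  have e1 : ∀ w : H ⊗[k] H,
      LinearMap.mul' k B (TensorProduct.map (W.conv f g) j w) =
        LinearMap.mul' k B (LinearMap.rTensor B (LinearMap.mul' k B)
          (TensorProduct.map (TensorProduct.map f g) j (LinearMap.rTensor H W.comul w))) := by
    intro w
    induction w using TensorProduct.induction_on with
    | zero => simp
    | tmul x y =>
      simp [conv_apply, LinearMap.rTensor_tmul, TensorProduct.map_tmul, LinearMap.mul'_apply]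
    | add a b ha hb => simp only [map_add, ha, hb]
  have e2 : ∀ w : H ⊗[k] H,
      LinearMap.mul' k B (TensorProduct.map f (W.conv g j) w) =
        LinearMap.mul' k B (LinearMap.lTensor B (LinearMap.mul' k B)
          (TensorProduct.map f (TensorProduct.map g j) (LinearMap.lTensor H W.comul w))) := by
    intro w
    induction w using TensorProduct.induction_on with
    | zero => simp
    | tmul x y =>
      simp [conv_apply, LinearMap.lTensor_tmul, TensorProduct.map_tmul, LinearMap.mul'_apply]
    | add a b ha hb => simp only [map_add, ha, hb]
  have e3 : ∀ t : (H ⊗[k] H) ⊗[k] H,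
      LinearMap.mul' k B (LinearMap.rTensor B (LinearMap.mul' k B)
        (TensorProduct.map (TensorProduct.map f g) j t)) =
      LinearMap.mul' k B (LinearMap.lTensor B (LinearMap.mul' k B)
        (TensorProduct.map f (TensorProduct.map g j) ((TensorProduct.assoc k H H H) t))) := by
    intro t
    induction t using TensorProduct.induction_on with
    | zero => simp
    | tmul a z =>
      induction a using TensorProduct.induction_on with
      | zero => simp [TensorProduct.zero_tmul]
      | tmul x y =>
        simp [TensorProduct.assoc_tmul, TensorProduct.map_tmul, LinearMap.rTensor_tmul,
          LinearMap.lTensor_tmul, LinearMap.mul'_apply, mul_assoc]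
      | add a₁ a₂ h₁ h₂ =>
        simp only [TensorProduct.add_tmul, map_add] at h₁ h₂ ⊢
        rw [h₁, h₂]
    | add t₁ t₂ h₁ h₂ => simp only [map_add, h₁, h₂]
  rw [conv_apply, conv_apply, e1 (W.comul h), e2 (W.comul h), e3, W.coassoc h]

/-- `x ↦ x ⊗ 1`. -/
noncomputable def uMap : H →ₗ[k] H ⊗[k] H := (TensorProduct.mk k H H).flip 1

/-- `x ↦ 1 ⊗ x`. -/
noncomputable def vMap : H →ₗ[k] H ⊗[k] H := TensorProduct.mk k H H 1

@[simp] lemma uMap_apply (x : H) : (uMap : H →ₗ[k] H ⊗[k] H) x = x ⊗ₜ[k] (1 : H) := rfl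

@[simp] lemma vMap_apply (x : H) : (vMap : H →ₗ[k] H ⊗[k] H) x = (1 : H) ⊗ₜ[k] x := rfl

lemma conv_u_v (f g : H →ₗ[k] H) :
    W.conv (uMap ∘ₗ f) (vMap ∘ₗ g) = TensorProduct.map f g ∘ₗ W.comul := by
  apply LinearMap.ext; intro h
  have e : ∀ w : H ⊗[k] H,
      LinearMap.mul' k (H ⊗[k] H) (TensorProduct.map (uMap ∘ₗ f) (vMap ∘ₗ g) w) =
        TensorProduct.map f g w := by
    intro w
    induction w using TensorProduct.induction_on with
    | zero => simp
    | tmul x y =>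
      simp [TensorProduct.map_tmul, LinearMap.mul'_apply, Algebra.TensorProduct.tmul_mul_tmul]
    | add a b ha hb => simp only [map_add, ha, hb]
  rw [conv_apply]
  exact e (W.comul h)

lemma conv_v_u (f g : H →ₗ[k] H) :
    W.conv (vMap ∘ₗ f) (uMap ∘ₗ g) =
      TensorProduct.map g f ∘ₗ (TensorProduct.comm k H H).toLinearMap ∘ₗ W.comul := by
  apply LinearMap.ext; intro h
  have e : ∀ w : H ⊗[k] H,
      LinearMap.mul' k (H ⊗[k] H) (TensorProduct.map (vMap ∘ₗ f) (uMap ∘ₗ g) w) =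
        TensorProduct.map g f ((TensorProduct.comm k H H) w) := by
    intro w
    induction w using TensorProduct.induction_on with
    | zero => simp
    | tmul x y =>
      simp [TensorProduct.map_tmul, LinearMap.mul'_apply, Algebra.TensorProduct.tmul_mul_tmul,
        TensorProduct.comm_tmul]
    | add a b ha hb => simp only [map_add, ha, hb]
  rw [conv_apply]
  exact e (W.comul h)

lemma conv_u_u (f g : H →ₗ[k] H) :
    W.conv (uMap ∘ₗ f) (uMap ∘ₗ g) = uMap ∘ₗ W.conv f g := by
  apply LinearMap.ext; intro h
  have e : ∀ w : H ⊗[k] H,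
      LinearMap.mul' k (H ⊗[k] H) (TensorProduct.map (uMap ∘ₗ f) (uMap ∘ₗ g) w) =
        uMap (LinearMap.mul' k H (TensorProduct.map f g w)) := by
    intro w
    induction w using TensorProduct.induction_on with
    | zero => simp
    | tmul x y =>
      simp [TensorProduct.map_tmul, LinearMap.mul'_apply, Algebra.TensorProduct.tmul_mul_tmul]
    | add a b ha hb => simp only [map_add, ha, hb]
  rw [conv_apply]
  exact e (W.comul h)

lemma conv_v_v (f g : H →ₗ[k] H) :
    W.conv (vMap ∘ₗ f) (vMap ∘ₗ g) = vMap ∘ₗ W.conv f g := by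
  apply LinearMap.ext; intro h
  have e : ∀ w : H ⊗[k] H,
      LinearMap.mul' k (H ⊗[k] H) (TensorProduct.map (vMap ∘ₗ f) (vMap ∘ₗ g) w) =
        vMap (LinearMap.mul' k H (TensorProduct.map f g w)) := by
    intro w
    induction w using TensorProduct.induction_on with
    | zero => simp
    | tmul x y =>
      simp [TensorProduct.map_tmul, LinearMap.mul'_apply, Algebra.TensorProduct.tmul_mul_tmul]
    | add a b ha hb => simp only [map_add, ha, hb]
  rw [conv_apply]
  exact e (W.comul h)

lemma conv_mulLeft {B : Type*} [Ring B] [Algebra k B] (X : B) (f g : H →ₗ[k] B) :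
    W.conv (LinearMap.mulLeft k X ∘ₗ f) g = LinearMap.mulLeft k X ∘ₗ W.conv f g := by
  apply LinearMap.ext; intro h
  have e : ∀ w : H ⊗[k] H,
      LinearMap.mul' k B (TensorProduct.map (LinearMap.mulLeft k X ∘ₗ f) g w) =
        X * LinearMap.mul' k B (TensorProduct.map f g w) := by
    intro w
    induction w using TensorProduct.induction_on with
    | zero => simp
    | tmul x y => simp [TensorProduct.map_tmul, LinearMap.mul'_apply, mul_assoc]
    | add a b ha hb => simp only [map_add, ha, hb, mul_add]
  rw [conv_apply]
  exact e (W.comul h)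

lemma conv_mulRight {B : Type*} [Ring B] [Algebra k B] (X : B) (f g : H →ₗ[k] B) :
    W.conv f (LinearMap.mulRight k X ∘ₗ g) = LinearMap.mulRight k X ∘ₗ W.conv f g := by
  apply LinearMap.ext; intro h
  have e : ∀ w : H ⊗[k] H,
      LinearMap.mul' k B (TensorProduct.map f (LinearMap.mulRight k X ∘ₗ g) w) =
        LinearMap.mul' k B (TensorProduct.map f g w) * X := by
    intro w
    induction w using TensorProduct.induction_on with
    | zero => simp
    | tmul x y => simp [TensorProduct.map_tmul, LinearMap.mul'_apply, mul_assoc]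
    | add a b ha hb => simp only [map_add, ha, hb, add_mul]
  rw [conv_apply]
  exact e (W.comul h)

lemma conv_comul (f g : H →ₗ[k] H) :
    W.conv (W.comul ∘ₗ f) (W.comul ∘ₗ g) = W.comul ∘ₗ W.conv f g := by
  apply LinearMap.ext; intro h
  have e : ∀ w : H ⊗[k] H,
      LinearMap.mul' k (H ⊗[k] H) (TensorProduct.map (W.comul ∘ₗ f) (W.comul ∘ₗ g) w) =
        W.comul (LinearMap.mul' k H (TensorProduct.map f g w)) := by
    intro w
    induction w using TensorProduct.induction_on with
    | zero => simp
    | tmul x y =>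
      simp [TensorProduct.map_tmul, LinearMap.mul'_apply, W.comul_mul]
    | add a b ha hb => simp only [map_add, ha, hb]
  rw [conv_apply]
  exact e (W.comul h)

lemma conv_id_antipode : W.conv LinearMap.id W.antipode = W.εt := by
  apply LinearMap.ext; intro h
  have h1 : TensorProduct.map (LinearMap.id : H →ₗ[k] H) W.antipode
      = LinearMap.lTensor H W.antipode := rfl
  rw [conv_apply, h1, W.antipode_right h]
  simp [εt, LinearMap.comp_apply, LinearMap.flip_apply, TensorProduct.mk_apply,
    LinearMap.mulLeft_apply]

lemma conv_antipode_id : W.conv W.antipode LinearMap.id = W.εs := by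
  apply LinearMap.ext; intro h
  have h1 : TensorProduct.map W.antipode (LinearMap.id : H →ₗ[k] H)
      = LinearMap.rTensor H W.antipode := rfl
  rw [conv_apply, h1, W.antipode_left h]
  simp [εs, LinearMap.comp_apply, TensorProduct.mk_apply, LinearMap.mulRight_apply]

lemma conv_conv_antipode :
    W.conv (W.conv W.antipode LinearMap.id) W.antipode = W.antipode := by
  apply LinearMap.ext; intro h
  have h1 : W.conv W.antipode LinearMap.id =
      (LinearMap.mul' k H) ∘ₗ (LinearMap.rTensor H W.antipode) ∘ₗ W.comul := rfl
  rw [conv_apply, h1]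
  exact W.antipode_conv h

lemma conv_antipode_εt : W.conv W.antipode W.εt = W.antipode := by
  rw [← W.conv_id_antipode, ← W.conv_assoc, W.conv_conv_antipode]

lemma conv_εs_antipode : W.conv W.εs W.antipode = W.antipode := by
  rw [← W.conv_antipode_id, W.conv_conv_antipode]

end WeakHopfAlgebra
namespace WeakHopfAlgebra

variable {k H : Type*} [CommRing k] [Ring H] [Algebra k H] (W : WeakHopfAlgebra k H)

lemma εt_rep (s : Finset (H × H)) (hrep : W.comul 1 = ∑ i ∈ s, i.1 ⊗ₜ[k] i.2) (z : H) :
    W.εt z = ∑ i ∈ s, W.counit (i.1 * z) • i.2 := by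
  have h0 : W.εt z =
      (TensorProduct.lid k H) (LinearMap.rTensor H W.counit (W.comul 1 * (z ⊗ₜ[k] (1 : H)))) := rfl
  rw [h0, hrep, Finset.sum_mul, map_sum, map_sum]
  refine Finset.sum_congr rfl fun i _ => ?_
  simp [Algebra.TensorProduct.tmul_mul_tmul]

lemma εs_rep (s : Finset (H × H)) (hrep : W.comul 1 = ∑ i ∈ s, i.1 ⊗ₜ[k] i.2) (z : H) :
    W.εs z = ∑ i ∈ s, W.counit (z * i.2) • i.1 := by
  have h0 : W.εs z =
      (TensorProduct.rid k H) (LinearMap.lTensor H W.counit (((1 : H) ⊗ₜ[k] z) * W.comul 1)) := rfl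
  rw [h0, hrep, Finset.mul_sum, map_sum, map_sum]
  refine Finset.sum_congr rfl fun i _ => ?_
  simp [Algebra.TensorProduct.tmul_mul_tmul]

lemma a4r_rep (s : Finset (H × H)) (hrep : W.comul 1 = ∑ i ∈ s, i.1 ⊗ₜ[k] i.2) :
    LinearMap.lTensor H W.comul (W.comul 1) =
      ∑ i ∈ s, ∑ j ∈ s, i.1 ⊗ₜ[k] ((j.1 * i.2) ⊗ₜ[k] j.2) := by
  rw [W.weak_comul_one_right, hrep, TensorProduct.tmul_sum, TensorProduct.sum_tmul, map_sum,
    Finset.sum_mul_sum, Finset.sum_comm]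
  refine Finset.sum_congr rfl fun i _ => Finset.sum_congr rfl fun j _ => ?_
  simp [TensorProduct.assoc_tmul, Algebra.TensorProduct.tmul_mul_tmul]

lemma lTensor_comul_rep (s : Finset (H × H)) (hrep : W.comul 1 = ∑ i ∈ s, i.1 ⊗ₜ[k] i.2) :
    LinearMap.lTensor H W.comul (W.comul 1) = ∑ i ∈ s, i.1 ⊗ₜ[k] W.comul i.2 := by
  rw [hrep, map_sum]
  simp

lemma coassoc_rep (s : Finset (H × H)) (hrep : W.comul 1 = ∑ i ∈ s, i.1 ⊗ₜ[k] i.2) :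
    ∑ i ∈ s, (TensorProduct.assoc k H H H) (W.comul i.1 ⊗ₜ[k] i.2) =
      LinearMap.lTensor H W.comul (W.comul 1) := by
  have h1 : LinearMap.rTensor H W.comul (W.comul 1) = ∑ i ∈ s, W.comul i.1 ⊗ₜ[k] i.2 := by
    rw [hrep, map_sum]; simp
  rw [← W.coassoc 1, h1, map_sum]

end WeakHopfAlgebra
namespace WeakHopfAlgebra

variable {k H : Type*} [CommRing k] [Ring H] [Algebra k H] (W : WeakHopfAlgebra k H)

/-- `(id ⊗ ε_t)(Δ h) = Δ(1)(h ⊗ 1)`. -/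
lemma lTensor_εt_comul (h : H) :
    LinearMap.lTensor H W.εt (W.comul h) = W.comul 1 * (h ⊗ₜ[k] (1 : H)) := by
  obtain ⟨s, hrep⟩ := TensorProduct.exists_finset (W.comul 1)
  have aux : ∀ w : H ⊗[k] H,
      LinearMap.lTensor H W.εt (W.comul 1 * w) =
        ∑ i ∈ s, (TensorProduct.rid k H)
          (LinearMap.lTensor H W.counit (W.comul i.1 * w)) ⊗ₜ[k] i.2 := by
    intro w
    induction w using TensorProduct.induction_on with
    | zero => simp
    | add a b ha hb =>
      rw [mul_add, map_add, ha, hb, ← Finset.sum_add_distrib]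
      refine Finset.sum_congr rfl fun i _ => ?_
      rw [mul_add, map_add, map_add, TensorProduct.add_tmul]
    | tmul x y =>
      set ωy : H ⊗[k] H →ₗ[k] H :=
        (TensorProduct.lid k H).toLinearMap ∘ₗ
          LinearMap.rTensor H (W.counit ∘ₗ LinearMap.mulRight k y) with hωy
      set Ψ : H ⊗[k] (H ⊗[k] H) →ₗ[k] H ⊗[k] H :=
        TensorProduct.map (LinearMap.mulRight k x) ωy with hΨ
      have hΨtm : ∀ (a nb nc : H),
          Ψ (a ⊗ₜ[k] (nb ⊗ₜ[k] nc)) = W.counit (nb * y) • ((a * x) ⊗ₜ[k] nc) := by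
        intro a nb nc
        simp [hΨ, hωy, TensorProduct.map_tmul, LinearMap.rTensor_tmul, TensorProduct.lid_tmul,
          TensorProduct.tmul_smul]
      have e1 : LinearMap.lTensor H W.εt (W.comul 1 * (x ⊗ₜ[k] y)) =
          Ψ (LinearMap.lTensor H W.comul (W.comul 1)) := by
        rw [W.a4r_rep s hrep, map_sum]
        conv_lhs => rw [hrep, Finset.sum_mul, map_sum]
        refine Finset.sum_congr rfl fun i _ => ?_
        rw [map_sum]
        rw [Algebra.TensorProduct.tmul_mul_tmul, LinearMap.lTensor_tmul,
          W.εt_rep s hrep (i.2 * y), TensorProduct.tmul_sum]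
        refine Finset.sum_congr rfl fun j _ => ?_
        rw [hΨtm, TensorProduct.tmul_smul, mul_assoc]
      have e2 : ∀ (n : H ⊗[k] H) (c : H),
          Ψ ((TensorProduct.assoc k H H H) (n ⊗ₜ[k] c)) =
            (TensorProduct.rid k H)
              (LinearMap.lTensor H W.counit (n * (x ⊗ₜ[k] y))) ⊗ₜ[k] c := by
        intro n c
        induction n using TensorProduct.induction_on with
        | zero => simp [TensorProduct.zero_tmul]
        | tmul a b =>
          rw [TensorProduct.assoc_tmul, hΨtm, Algebra.TensorProduct.tmul_mul_tmul,
            LinearMap.lTensor_tmul, TensorProduct.rid_tmul, TensorProduct.smul_tmul']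
        | add n₁ n₂ h₁ h₂ =>
          rw [TensorProduct.add_tmul, map_add, map_add, h₁, h₂, add_mul, map_add, map_add,
            TensorProduct.add_tmul]
      calc LinearMap.lTensor H W.εt (W.comul 1 * (x ⊗ₜ[k] y))
          = Ψ (LinearMap.lTensor H W.comul (W.comul 1)) := e1
        _ = Ψ (∑ i ∈ s, (TensorProduct.assoc k H H H) (W.comul i.1 ⊗ₜ[k] i.2)) := by
            rw [W.coassoc_rep s hrep]
        _ = ∑ i ∈ s, (TensorProduct.rid k H)
              (LinearMap.lTensor H W.counit (W.comul i.1 * (x ⊗ₜ[k] y))) ⊗ₜ[k] i.2 := by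
            rw [map_sum]; exact Finset.sum_congr rfl fun i _ => e2 _ _
  calc LinearMap.lTensor H W.εt (W.comul h)
      = LinearMap.lTensor H W.εt (W.comul 1 * W.comul h) := by
        rw [← W.comul_mul, one_mul]
    _ = ∑ i ∈ s, (TensorProduct.rid k H)
          (LinearMap.lTensor H W.counit (W.comul i.1 * W.comul h)) ⊗ₜ[k] i.2 := aux _
    _ = ∑ i ∈ s, (i.1 * h) ⊗ₜ[k] i.2 := by
        refine Finset.sum_congr rfl fun i _ => ?_
        rw [← W.comul_mul, W.counit_rid]
    _ = W.comul 1 * (h ⊗ₜ[k] (1 : H)) := by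
        rw [hrep, Finset.sum_mul]
        exact Finset.sum_congr rfl fun i _ => by
          simp [Algebra.TensorProduct.tmul_mul_tmul]

/-- `(ε_s ⊗ id)(Δ h) = (1 ⊗ h)Δ(1)`. -/
lemma rTensor_εs_comul (h : H) :
    LinearMap.rTensor H W.εs (W.comul h) = ((1 : H) ⊗ₜ[k] h) * W.comul 1 := by
  obtain ⟨s, hrep⟩ := TensorProduct.exists_finset (W.comul 1)
  have aux : ∀ w : H ⊗[k] H,
      LinearMap.rTensor H W.εs (w * W.comul 1) =
        ∑ i ∈ s, i.1 ⊗ₜ[k] (TensorProduct.lid k H)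
          (LinearMap.rTensor H W.counit (w * W.comul i.2)) := by
    intro w
    induction w using TensorProduct.induction_on with
    | zero => simp
    | add a b ha hb =>
      rw [add_mul, map_add, ha, hb, ← Finset.sum_add_distrib]
      refine Finset.sum_congr rfl fun i _ => ?_
      rw [add_mul, map_add, map_add, TensorProduct.tmul_add]
    | tmul x y =>
      set g : H ⊗[k] H →ₗ[k] H :=
        (TensorProduct.lid k H).toLinearMap ∘ₗ
          TensorProduct.map (W.counit ∘ₗ LinearMap.mulLeft k x) (LinearMap.mulLeft k y) with hg
      set Ψ : H ⊗[k] (H ⊗[k] H) →ₗ[k] H ⊗[k] H := LinearMap.lTensor H g with hΨ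
      have hΨtm : ∀ (a nb nc : H),
          Ψ (a ⊗ₜ[k] (nb ⊗ₜ[k] nc)) = W.counit (x * nb) • (a ⊗ₜ[k] (y * nc)) := by
        intro a nb nc
        simp [hΨ, hg, TensorProduct.map_tmul, TensorProduct.lid_tmul, TensorProduct.tmul_smul]
      have e1L : LinearMap.rTensor H W.εs ((x ⊗ₜ[k] y) * W.comul 1) =
          ∑ j ∈ s, ∑ i ∈ s, W.counit (x * j.1 * i.2) • (i.1 ⊗ₜ[k] (y * j.2)) := by
        conv_lhs => rw [hrep, Finset.mul_sum, map_sum]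
        refine Finset.sum_congr rfl fun j _ => ?_
        rw [Algebra.TensorProduct.tmul_mul_tmul, LinearMap.rTensor_tmul, W.εs_rep s hrep,
          TensorProduct.sum_tmul]
        refine Finset.sum_congr rfl fun i _ => ?_
        rw [TensorProduct.smul_tmul']
      have e1R : Ψ (LinearMap.lTensor H W.comul (W.comul 1)) =
          ∑ i ∈ s, ∑ j ∈ s, W.counit (x * j.1 * i.2) • (i.1 ⊗ₜ[k] (y * j.2)) := by
        rw [W.a4r_rep s hrep, map_sum]
        refine Finset.sum_congr rfl fun i _ => ?_
        rw [map_sum]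
        refine Finset.sum_congr rfl fun j _ => ?_
        rw [hΨtm, mul_assoc]
      have e1 : LinearMap.rTensor H W.εs ((x ⊗ₜ[k] y) * W.comul 1) =
          Ψ (LinearMap.lTensor H W.comul (W.comul 1)) :=
        e1L.trans (Finset.sum_comm.trans e1R.symm)
      have e2 : ∀ n : H ⊗[k] H, g n =
          (TensorProduct.lid k H)
            (LinearMap.rTensor H W.counit ((x ⊗ₜ[k] y) * n)) := by
        intro n
        induction n using TensorProduct.induction_on with
        | zero => simp
        | tmul a b =>
          simp [hg, Algebra.TensorProduct.tmul_mul_tmul, TensorProduct.map_tmul,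
            TensorProduct.lid_tmul, LinearMap.rTensor_tmul]
        | add n₁ n₂ h₁ h₂ => rw [map_add, h₁, h₂, mul_add, map_add, map_add]
      calc LinearMap.rTensor H W.εs ((x ⊗ₜ[k] y) * W.comul 1)
          = Ψ (LinearMap.lTensor H W.comul (W.comul 1)) := e1
        _ = Ψ (∑ i ∈ s, i.1 ⊗ₜ[k] W.comul i.2) := by rw [W.lTensor_comul_rep s hrep]
        _ = ∑ i ∈ s, i.1 ⊗ₜ[k] (TensorProduct.lid k H)
              (LinearMap.rTensor H W.counit ((x ⊗ₜ[k] y) * W.comul i.2)) := by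
            rw [map_sum]
            refine Finset.sum_congr rfl fun i _ => ?_
            rw [hΨ, LinearMap.lTensor_tmul, e2]
  calc LinearMap.rTensor H W.εs (W.comul h)
      = LinearMap.rTensor H W.εs (W.comul h * W.comul 1) := by
        rw [← W.comul_mul, mul_one]
    _ = ∑ i ∈ s, i.1 ⊗ₜ[k] (TensorProduct.lid k H)
          (LinearMap.rTensor H W.counit (W.comul h * W.comul i.2)) := aux _
    _ = ∑ i ∈ s, i.1 ⊗ₜ[k] (h * i.2) := by
        refine Finset.sum_congr rfl fun i _ => ?_
        rw [← W.comul_mul, W.counit_lid]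
    _ = ((1 : H) ⊗ₜ[k] h) * W.comul 1 := by
        rw [hrep, Finset.mul_sum]
        exact Finset.sum_congr rfl fun i _ => by
          simp [Algebra.TensorProduct.tmul_mul_tmul]

end WeakHopfAlgebra
namespace WeakHopfAlgebra

variable {k H : Type*} [CommRing k] [Ring H] [Algebra k H] (W : WeakHopfAlgebra k H)

/-- `Δ(ε_s x) = (1 ⊗ ε_s x)Δ(1)`. -/
lemma comul_εs (x : H) :
    W.comul (W.εs x) = ((1 : H) ⊗ₜ[k] W.εs x) * W.comul 1 := by
  obtain ⟨s, hrep⟩ := TensorProduct.exists_finset (W.comul 1)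
  set ϑ : H ⊗[k] (H ⊗[k] H) →ₗ[k] H ⊗[k] H :=
    LinearMap.lTensor H ((TensorProduct.rid k H).toLinearMap ∘ₗ
      LinearMap.lTensor H (W.counit ∘ₗ LinearMap.mulLeft k x)) with hϑ
  have hϑtm : ∀ a b c : H, ϑ (a ⊗ₜ[k] (b ⊗ₜ[k] c)) = W.counit (x * c) • (a ⊗ₜ[k] b) := by
    intro a b c
    simp [hϑ, LinearMap.lTensor_tmul, TensorProduct.rid_tmul, TensorProduct.tmul_smul]
  have k1 : ∀ (n : H ⊗[k] H) (c : H),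
      ϑ ((TensorProduct.assoc k H H H) (n ⊗ₜ[k] c)) = W.counit (x * c) • n := by
    intro n c
    induction n using TensorProduct.induction_on with
    | zero => simp [TensorProduct.zero_tmul]
    | tmul a b => rw [TensorProduct.assoc_tmul, hϑtm]
    | add n₁ n₂ h₁ h₂ =>
      rw [TensorProduct.add_tmul, map_add, map_add, h₁, h₂, smul_add]
  have left : W.comul (W.εs x) =
      ϑ (∑ i ∈ s, (TensorProduct.assoc k H H H) (W.comul i.1 ⊗ₜ[k] i.2)) := by
    rw [map_sum, W.εs_rep s hrep x, map_sum]
    refine Finset.sum_congr rfl fun i _ => ?_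
    rw [map_smul, k1]
  have right : ϑ (LinearMap.lTensor H W.comul (W.comul 1)) =
      ((1 : H) ⊗ₜ[k] W.εs x) * W.comul 1 := by
    rw [W.a4r_rep s hrep, map_sum]
    have hR : ((1 : H) ⊗ₜ[k] W.εs x) * W.comul 1 =
        ∑ i ∈ s, ∑ j ∈ s, W.counit (x * j.2) • (i.1 ⊗ₜ[k] (j.1 * i.2)) := by
      rw [W.εs_rep s hrep x]
      conv_lhs => rw [hrep]
      rw [TensorProduct.tmul_sum, Finset.sum_mul_sum, Finset.sum_comm]
      refine Finset.sum_congr rfl fun i _ => Finset.sum_congr rfl fun j _ => ?_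
      rw [TensorProduct.tmul_smul, smul_mul_assoc, Algebra.TensorProduct.tmul_mul_tmul, one_mul]
    rw [hR]
    refine Finset.sum_congr rfl fun i _ => ?_
    rw [map_sum]
    refine Finset.sum_congr rfl fun j _ => ?_
    rw [hϑtm]
  calc W.comul (W.εs x)
      = ϑ (∑ i ∈ s, (TensorProduct.assoc k H H H) (W.comul i.1 ⊗ₜ[k] i.2)) := left
    _ = ϑ (LinearMap.lTensor H W.comul (W.comul 1)) := by rw [W.coassoc_rep s hrep]
    _ = ((1 : H) ⊗ₜ[k] W.εs x) * W.comul 1 := right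

/-- `Δ(ε_t x) = Δ(1)(ε_t x ⊗ 1)`. -/
lemma comul_εt (x : H) :
    W.comul (W.εt x) = W.comul 1 * (W.εt x ⊗ₜ[k] (1 : H)) := by
  obtain ⟨s, hrep⟩ := TensorProduct.exists_finset (W.comul 1)
  set κ : H ⊗[k] (H ⊗[k] H) →ₗ[k] H ⊗[k] H :=
    (TensorProduct.lid k (H ⊗[k] H)).toLinearMap ∘ₗ
      LinearMap.rTensor (H ⊗[k] H) (W.counit ∘ₗ LinearMap.mulRight k x) with hκ
  have hκtm : ∀ (a : H) (n : H ⊗[k] H), κ (a ⊗ₜ[k] n) = W.counit (a * x) • n := by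
    intro a n
    simp [hκ, LinearMap.rTensor_tmul, TensorProduct.lid_tmul]
  have left : κ (∑ i ∈ s, i.1 ⊗ₜ[k] W.comul i.2) = W.comul (W.εt x) := by
    rw [map_sum, W.εt_rep s hrep x, map_sum]
    refine Finset.sum_congr rfl fun i _ => ?_
    rw [map_smul, hκtm]
  have right : κ (∑ i ∈ s, ∑ j ∈ s, i.1 ⊗ₜ[k] ((j.1 * i.2) ⊗ₜ[k] j.2)) =
      W.comul 1 * (W.εt x ⊗ₜ[k] (1 : H)) := by
    have hR : W.comul 1 * (W.εt x ⊗ₜ[k] (1 : H)) =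
        ∑ j ∈ s, ∑ i ∈ s, W.counit (i.1 * x) • ((j.1 * i.2) ⊗ₜ[k] j.2) := by
      rw [W.εt_rep s hrep x]
      conv_lhs => rw [hrep]
      rw [TensorProduct.sum_tmul, Finset.sum_mul_sum]
      refine Finset.sum_congr rfl fun j _ => Finset.sum_congr rfl fun i _ => ?_
      simp only [← TensorProduct.smul_tmul', mul_smul_comm,
        Algebra.TensorProduct.tmul_mul_tmul, mul_one]
    rw [hR, Finset.sum_comm, map_sum]
    refine Finset.sum_congr rfl fun i _ => ?_
    rw [map_sum]
    refine Finset.sum_congr rfl fun j _ => ?_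
    rw [hκtm]
  calc W.comul (W.εt x)
      = κ (∑ i ∈ s, i.1 ⊗ₜ[k] W.comul i.2) := left.symm
    _ = κ (LinearMap.lTensor H W.comul (W.comul 1)) := by rw [W.lTensor_comul_rep s hrep]
    _ = κ (∑ i ∈ s, ∑ j ∈ s, i.1 ⊗ₜ[k] ((j.1 * i.2) ⊗ₜ[k] j.2)) := by rw [W.a4r_rep s hrep]
    _ = W.comul 1 * (W.εt x ⊗ₜ[k] (1 : H)) := right

/-- Key commutation: `(ε_s ⊗ ε_t)(Δ h) = (ε_s ⊗ ε_t)(τ(Δ h))`. -/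
lemma map_εs_εt_comm (h : H) :
    TensorProduct.map W.εs W.εt (W.comul h) =
      TensorProduct.map W.εs W.εt ((TensorProduct.comm k H H) (W.comul h)) := by
  obtain ⟨s, hrep⟩ := TensorProduct.exists_finset (W.comul 1)
  have step1 : ∀ w : H ⊗[k] H,
      TensorProduct.map W.εs W.εt w = LinearMap.rTensor H W.εs (LinearMap.lTensor H W.εt w) := by
    intro w
    induction w using TensorProduct.induction_on with
    | zero => simp
    | tmul a b => simp [TensorProduct.map_tmul, LinearMap.lTensor_tmul, LinearMap.rTensor_tmul]
    | add a b ha hb => simp only [map_add, ha, hb]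
  have step2 : TensorProduct.map W.εs W.εt (W.comul h) =
      ∑ i ∈ s, ∑ j ∈ s,
        ((LinearMap.mul' k k) ((TensorProduct.map (W.counit ∘ₗ LinearMap.mulLeft k i.1)
          (W.counit ∘ₗ LinearMap.mulRight k j.2)) (W.comul h))) • (j.1 ⊗ₜ[k] i.2) := by
    rw [step1, W.lTensor_εt_comul h]
    have hmul : W.comul 1 * (h ⊗ₜ[k] (1 : H)) = ∑ i ∈ s, (i.1 * h) ⊗ₜ[k] i.2 := by
      rw [hrep, Finset.sum_mul]
      exact Finset.sum_congr rfl fun i _ => by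
        simp [Algebra.TensorProduct.tmul_mul_tmul]
    rw [hmul, map_sum]
    refine Finset.sum_congr rfl fun i _ => ?_
    rw [LinearMap.rTensor_tmul, W.εs_rep s hrep (i.1 * h), TensorProduct.sum_tmul]
    refine Finset.sum_congr rfl fun j _ => ?_
    rw [TensorProduct.smul_tmul', W.weak_counit_left i.1 h j.2]
  have step3 : ∀ w : H ⊗[k] H,
      (∑ i ∈ s, ∑ j ∈ s,
        ((LinearMap.mul' k k) ((TensorProduct.map (W.counit ∘ₗ LinearMap.mulLeft k i.1)
          (W.counit ∘ₗ LinearMap.mulRight k j.2)) w)) • (j.1 ⊗ₜ[k] i.2)) =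
        TensorProduct.map W.εs W.εt ((TensorProduct.comm k H H) w) := by
    intro w
    induction w using TensorProduct.induction_on with
    | zero => simp
    | add a b ha hb =>
      rw [map_add, map_add]
      rw [← ha, ← hb, ← Finset.sum_add_distrib]
      refine Finset.sum_congr rfl fun i _ => ?_
      rw [← Finset.sum_add_distrib]
      refine Finset.sum_congr rfl fun j _ => ?_
      rw [map_add, map_add, add_smul]
    | tmul x y =>
      rw [TensorProduct.comm_tmul, TensorProduct.map_tmul, W.εs_rep s hrep y,
        W.εt_rep s hrep x, TensorProduct.sum_tmul, Finset.sum_comm]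
      refine Finset.sum_congr rfl fun i _ => ?_
      rw [TensorProduct.tmul_sum]
      refine Finset.sum_congr rfl fun j _ => ?_
      simp only [TensorProduct.map_tmul, LinearMap.mul'_apply, LinearMap.comp_apply,
        LinearMap.mulLeft_apply, LinearMap.mulRight_apply, TensorProduct.tmul_smul,
        TensorProduct.smul_tmul', smul_smul]
      try rw [mul_comm (W.counit (j.1 * x)) (W.counit (y * i.2))]
  rw [step2, step3 (W.comul h)]

lemma counit_εs_mul (x z : H) : W.counit (W.εs x * z) = W.counit (x * z) := by
  obtain ⟨s, hrep⟩ := TensorProduct.exists_finset (W.comul 1)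
  have hx := W.weak_counit_right x 1 z
  rw [mul_one] at hx
  rw [W.εs_rep s hrep x, Finset.sum_mul, map_sum, hx, hrep, map_sum, map_sum, map_sum]
  refine Finset.sum_congr rfl fun i _ => ?_
  simp [TensorProduct.comm_tmul, TensorProduct.map_tmul, LinearMap.mul'_apply,
    smul_mul_assoc, smul_eq_mul]

lemma counit_εt_eq (x : H) : W.counit (W.εt x) = W.counit x := by
  obtain ⟨s, hrep⟩ := TensorProduct.exists_finset (W.comul 1)
  have hx := W.weak_counit_right 1 1 x
  rw [one_mul, one_mul] at hx
  rw [W.εt_rep s hrep x, map_sum, hx, hrep, map_sum, map_sum, map_sum]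
  refine Finset.sum_congr rfl fun i _ => ?_
  simp only [TensorProduct.comm_tmul, TensorProduct.map_tmul, LinearMap.mul'_apply,
    LinearMap.comp_apply, LinearMap.mulLeft_apply, LinearMap.mulRight_apply, map_smul,
    smul_eq_mul, one_mul]
  rw [mul_comm]

end WeakHopfAlgebra
namespace WeakHopfAlgebra

variable {k H : Type*} [CommRing k] [Ring H] [Algebra k H] (W : WeakHopfAlgebra k H)

lemma comul_eq_conv :
    W.conv (uMap ∘ₗ LinearMap.id) (vMap ∘ₗ LinearMap.id) = W.comul := by
  rw [W.conv_u_v]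
  apply LinearMap.ext; intro h
  simp [TensorProduct.map_id]

lemma G_eq_conv :
    W.conv (vMap ∘ₗ W.antipode) (uMap ∘ₗ W.antipode) =
      TensorProduct.map W.antipode W.antipode ∘ₗ
        (TensorProduct.comm k H H).toLinearMap ∘ₗ W.comul :=
  W.conv_v_u _ _

lemma conv_u_vεt :
    W.conv (uMap ∘ₗ LinearMap.id) (vMap ∘ₗ W.εt) =
      LinearMap.mulLeft k (W.comul 1) ∘ₗ (uMap ∘ₗ LinearMap.id) := by
  rw [W.conv_u_v]
  apply LinearMap.ext; intro h
  have h1 : TensorProduct.map (LinearMap.id : H →ₗ[k] H) W.εt = LinearMap.lTensor H W.εt := rfl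
  simp only [LinearMap.comp_apply, h1, LinearMap.id_apply, uMap_apply, LinearMap.mulLeft_apply]
  rw [W.lTensor_εt_comul h]

lemma conv_uεs_v :
    W.conv (uMap ∘ₗ W.εs) (vMap ∘ₗ LinearMap.id) =
      LinearMap.mulRight k (W.comul 1) ∘ₗ (vMap ∘ₗ LinearMap.id) := by
  rw [W.conv_u_v]
  apply LinearMap.ext; intro h
  have h1 : TensorProduct.map W.εs (LinearMap.id : H →ₗ[k] H) = LinearMap.rTensor H W.εs := rfl
  simp only [LinearMap.comp_apply, h1, LinearMap.id_apply, vMap_apply, LinearMap.mulRight_apply]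
  rw [W.rTensor_εs_comul h]

lemma conv_comm2 :
    W.conv (uMap ∘ₗ W.εs) (vMap ∘ₗ W.εt) = W.conv (vMap ∘ₗ W.εt) (uMap ∘ₗ W.εs) := by
  rw [W.conv_u_v, W.conv_v_u]
  apply LinearMap.ext; intro h
  simp only [LinearMap.comp_apply, LinearEquiv.coe_coe]
  exact W.map_εs_εt_comm h

lemma conv_D_G :
    W.conv W.comul (TensorProduct.map W.antipode W.antipode ∘ₗ
      (TensorProduct.comm k H H).toLinearMap ∘ₗ W.comul) = W.comul ∘ₗ W.εt := by
  have key : W.conv (W.conv (uMap ∘ₗ LinearMap.id) (vMap ∘ₗ LinearMap.id))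
      (W.conv (vMap ∘ₗ W.antipode) (uMap ∘ₗ W.antipode)) = W.comul ∘ₗ W.εt := by
    rw [W.conv_assoc]
    rw [← W.conv_assoc (vMap ∘ₗ LinearMap.id) (vMap ∘ₗ W.antipode) (uMap ∘ₗ W.antipode)]
    rw [W.conv_v_v, W.conv_id_antipode]
    rw [← W.conv_assoc (uMap ∘ₗ LinearMap.id) (vMap ∘ₗ W.εt) (uMap ∘ₗ W.antipode)]
    rw [W.conv_u_vεt]
    rw [W.conv_mulLeft]
    rw [W.conv_u_u, W.conv_id_antipode]
    apply LinearMap.ext; intro x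
    simp only [LinearMap.comp_apply, uMap_apply, LinearMap.mulLeft_apply]
    exact (W.comul_εt x).symm
  rw [W.comul_eq_conv, W.G_eq_conv] at key
  exact key

lemma conv_G_D :
    W.conv (TensorProduct.map W.antipode W.antipode ∘ₗ
      (TensorProduct.comm k H H).toLinearMap ∘ₗ W.comul) W.comul = W.comul ∘ₗ W.εs := by
  have key : W.conv (W.conv (vMap ∘ₗ W.antipode) (uMap ∘ₗ W.antipode))
      (W.conv (uMap ∘ₗ LinearMap.id) (vMap ∘ₗ LinearMap.id)) = W.comul ∘ₗ W.εs := by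
    rw [W.conv_assoc]
    rw [← W.conv_assoc (uMap ∘ₗ W.antipode) (uMap ∘ₗ LinearMap.id) (vMap ∘ₗ LinearMap.id)]
    rw [W.conv_u_u, W.conv_antipode_id]
    rw [W.conv_uεs_v]
    rw [W.conv_mulRight]
    rw [W.conv_v_v, W.conv_antipode_id]
    apply LinearMap.ext; intro x
    simp only [LinearMap.comp_apply, vMap_apply, LinearMap.mulRight_apply]
    exact (W.comul_εs x).symm
  rw [W.comul_eq_conv, W.G_eq_conv] at key
  exact key

lemma conv_G_DG :
    W.conv (TensorProduct.map W.antipode W.antipode ∘ₗ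
        (TensorProduct.comm k H H).toLinearMap ∘ₗ W.comul)
      (W.conv W.comul (TensorProduct.map W.antipode W.antipode ∘ₗ
        (TensorProduct.comm k H H).toLinearMap ∘ₗ W.comul)) =
      TensorProduct.map W.antipode W.antipode ∘ₗ
        (TensorProduct.comm k H H).toLinearMap ∘ₗ W.comul := by
  have key : W.conv (W.conv (vMap ∘ₗ W.antipode) (uMap ∘ₗ W.antipode))
      (W.conv (W.conv (uMap ∘ₗ LinearMap.id) (vMap ∘ₗ LinearMap.id))
        (W.conv (vMap ∘ₗ W.antipode) (uMap ∘ₗ W.antipode))) =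
      W.conv (vMap ∘ₗ W.antipode) (uMap ∘ₗ W.antipode) := by
    rw [W.conv_assoc (vMap ∘ₗ W.antipode) (uMap ∘ₗ W.antipode)
      (W.conv (W.conv (uMap ∘ₗ LinearMap.id) (vMap ∘ₗ LinearMap.id))
        (W.conv (vMap ∘ₗ W.antipode) (uMap ∘ₗ W.antipode)))]
    rw [W.conv_assoc (uMap ∘ₗ LinearMap.id) (vMap ∘ₗ LinearMap.id)
      (W.conv (vMap ∘ₗ W.antipode) (uMap ∘ₗ W.antipode))]
    rw [← W.conv_assoc (uMap ∘ₗ W.antipode) (uMap ∘ₗ LinearMap.id)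
      (W.conv (vMap ∘ₗ LinearMap.id)
        (W.conv (vMap ∘ₗ W.antipode) (uMap ∘ₗ W.antipode)))]
    rw [W.conv_u_u, W.conv_antipode_id]
    rw [← W.conv_assoc (vMap ∘ₗ LinearMap.id) (vMap ∘ₗ W.antipode) (uMap ∘ₗ W.antipode)]
    rw [W.conv_v_v, W.conv_id_antipode]
    rw [← W.conv_assoc (uMap ∘ₗ W.εs) (vMap ∘ₗ W.εt) (uMap ∘ₗ W.antipode)]
    rw [W.conv_comm2]
    rw [W.conv_assoc (vMap ∘ₗ W.εt) (uMap ∘ₗ W.εs) (uMap ∘ₗ W.antipode)]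
    rw [W.conv_u_u, W.conv_εs_antipode]
    rw [← W.conv_assoc (vMap ∘ₗ W.antipode) (vMap ∘ₗ W.εt) (uMap ∘ₗ W.antipode)]
    rw [W.conv_v_v, W.conv_antipode_εt]
  rw [W.comul_eq_conv, W.G_eq_conv] at key
  exact key

lemma comul_comp_antipode :
    W.comul ∘ₗ W.antipode = TensorProduct.map W.antipode W.antipode ∘ₗ
      (TensorProduct.comm k H H).toLinearMap ∘ₗ W.comul := by
  have hFD : W.conv (W.comul ∘ₗ W.antipode) W.comul = W.comul ∘ₗ W.εs := by
    have h0 := W.conv_comul W.antipode LinearMap.id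
    rw [LinearMap.comp_id, W.conv_antipode_id] at h0
    exact h0
  have hFDF : W.conv (W.comul ∘ₗ W.antipode) (W.comul ∘ₗ W.εt) = W.comul ∘ₗ W.antipode := by
    rw [W.conv_comul, W.conv_antipode_εt]
  rw [← hFDF, ← W.conv_D_G, ← W.conv_assoc, hFD, ← W.conv_G_D, W.conv_assoc]
  exact W.conv_G_DG

lemma counit_antipode (h : H) : W.counit (W.antipode h) = W.counit h := by
  have h1 : W.antipode h = W.conv W.εs W.antipode h := by rw [W.conv_εs_antipode]
  rw [h1, conv_apply]
  have e : ∀ w : H ⊗[k] H,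
      W.counit (LinearMap.mul' k H (TensorProduct.map W.εs W.antipode w)) =
        W.counit (LinearMap.mul' k H (TensorProduct.map LinearMap.id W.antipode w)) := by
    intro w
    induction w using TensorProduct.induction_on with
    | zero => simp
    | tmul x y =>
      simp only [TensorProduct.map_tmul, LinearMap.mul'_apply, LinearMap.id_apply]
      exact W.counit_εs_mul x (W.antipode y)
    | add a b ha hb => simp only [map_add, ha, hb]
  rw [e (W.comul h)]
  have h2 : LinearMap.mul' k H (TensorProduct.map LinearMap.id W.antipode (W.comul h)) =
      W.εt h := by
    have h3 := LinearMap.ext_iff.mp W.conv_id_antipode h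
    rw [conv_apply] at h3
    exact h3
  rw [h2]
  exact W.counit_εt_eq h

end WeakHopfAlgebra

/-- the antipode is a coalgebra anti-homomorphism:
`ε∘S = ε` and `Δ(S(h)) = S(h₍₂₎) ⊗ S(h₍₁₎)`. -/
theorem WeakHopfAlgebra.antipode_anti_coalg_hom
    {k H : Type*} [Field k] [Ring H] [Algebra k H] [FiniteDimensional k H]
    (W : WeakHopfAlgebra k H) :
    ∀ h : H, W.counit (W.antipode h) = W.counit h ∧
      W.comul (W.antipode h) =
        (TensorProduct.map W.antipode W.antipode) ((TensorProduct.comm k H H) (W.comul h)) := by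
  intro h
  refine ⟨W.counit_antipode h, ?_⟩
  have := LinearMap.ext_iff.mp W.comul_comp_antipode h
  simpa using this
end

section
/- In a weak Hopf algebra H, the element e_t = (S ⊗ id)Δ(1) is a separability element for the target counital subalgebra H_t: m(e_t) = 1 and (z⊗1)e_t = e_t(1⊗z) for all z ∈ H_t. -/
open TensorProduct

set_option maxHeartbeats 2000000 in
/-- `e_t = (S ⊗ id)Δ(1)` is a separability element for `H_t`. -/
theorem WeakHopfAlgebra.target_separability_element
    {k H : Type*} [Field k] [Ring H] [Algebra k H] [FiniteDimensional k H]
    (W : WeakHopfAlgebra k H) (hS : Function.Bijective W.antipode) :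
    (LinearMap.mul' k H) ((LinearMap.rTensor H W.antipode) (W.comul 1)) = 1 ∧
      ∀ z ∈ Set.range W.εt,
        (z ⊗ₜ[k] (1 : H)) * (LinearMap.rTensor H W.antipode) (W.comul 1) =
          (LinearMap.rTensor H W.antipode) (W.comul 1) * ((1 : H) ⊗ₜ[k] z) := by
  classical
  obtain ⟨s, hD⟩ := TensorProduct.exists_finset (W.comul (1 : H))
  -- basic unfoldings of the counital maps
  have hεt0 : ∀ g : H, W.εt g = (TensorProduct.lid k H)
      ((LinearMap.rTensor H W.counit) (W.comul 1 * (g ⊗ₜ[k] (1:H)))) := fun g => rfl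
  have hεs0 : ∀ g : H, W.εs g = (TensorProduct.rid k H)
      ((LinearMap.lTensor H W.counit) (((1:H) ⊗ₜ[k] g) * W.comul 1)) := fun g => rfl
  have hεt' : ∀ g : H, W.εt g = ∑ i ∈ s, W.counit (i.1 * g) • i.2 := by
    intro g
    rw [hεt0 g, hD]
    simp [Finset.sum_mul, Algebra.TensorProduct.tmul_mul_tmul]
  have hεs' : ∀ g : H, W.εs g = ∑ i ∈ s, W.counit (g * i.2) • i.1 := by
    intro g
    rw [hεs0 g, hD]
    simp [Finset.mul_sum, Algebra.TensorProduct.tmul_mul_tmul]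
  have hE3 : ∀ g : H, (LinearMap.mul' k H) ((LinearMap.lTensor H W.antipode) (W.comul g))
      = W.εt g := fun g => (W.antipode_right g).trans (hεt0 g).symm
  have hE4 : ∀ g : H, (LinearMap.mul' k H) ((LinearMap.rTensor H W.antipode) (W.comul g))
      = W.εs g := fun g => (W.antipode_left g).trans (hεs0 g).symm
  have hΔ1mul : ∀ g : H, W.comul g = W.comul 1 * W.comul g := by
    intro g; rw [← W.comul_mul, one_mul]
  -- the two "weak" expansions of (id ⊗ Δ)Δ(1), and coassociativity at 1
  have hT3R : ∑ i ∈ s, i.1 ⊗ₜ[k] (W.comul i.2) =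
      ∑ i ∈ s, ∑ j ∈ s, i.1 ⊗ₜ[k] ((j.1 * i.2) ⊗ₜ[k] j.2) := by
    have h0 := W.weak_comul_one_right
    rw [hD] at h0
    simp only [map_sum, LinearMap.lTensor_tmul, tmul_sum, sum_tmul, map_sum,
      TensorProduct.assoc_tmul, Finset.mul_sum, Finset.sum_mul,
      Algebra.TensorProduct.tmul_mul_tmul, one_mul, mul_one] at h0
    rw [h0, Finset.sum_comm]
  have hT3L : ∑ i ∈ s, i.1 ⊗ₜ[k] (W.comul i.2) =
      ∑ i ∈ s, ∑ j ∈ s, i.1 ⊗ₜ[k] ((i.2 * j.1) ⊗ₜ[k] j.2) := by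
    have h0 := W.weak_comul_one_left
    rw [hD] at h0
    simp only [map_sum, LinearMap.lTensor_tmul, tmul_sum, sum_tmul, map_sum,
      TensorProduct.assoc_tmul, Finset.mul_sum, Finset.sum_mul,
      Algebra.TensorProduct.tmul_mul_tmul, one_mul, mul_one] at h0
    rw [h0, Finset.sum_comm]
  have hcoassoc1 : (TensorProduct.assoc k H H H) (∑ i ∈ s, (W.comul i.1) ⊗ₜ[k] i.2) =
      ∑ i ∈ s, i.1 ⊗ₜ[k] (W.comul i.2) := by
    have h0 := W.coassoc 1
    rw [hD] at h0
    simpa only [map_sum, LinearMap.rTensor_tmul, LinearMap.lTensor_tmul] using h0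
  -- auxiliary multiplication lemmas
  have hmulL : ∀ (c : H) (u : H ⊗[k] H),
      c * (LinearMap.mul' k H) ((LinearMap.lTensor H W.antipode) u) =
        (LinearMap.mul' k H) ((LinearMap.lTensor H W.antipode) ((c ⊗ₜ[k] (1:H)) * u)) := by
    intro c u
    induction u using TensorProduct.induction_on with
    | zero => simp
    | tmul x y => simp [Algebra.TensorProduct.tmul_mul_tmul, mul_assoc]
    | add u v hu hv => simp only [map_add, mul_add, hu, hv]
  have hIII : ∀ (u : H ⊗[k] H) (z : H),
      (LinearMap.rTensor H W.antipode) u * ((1:H) ⊗ₜ[k] z) =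
        (LinearMap.rTensor H W.antipode) (u * ((1:H) ⊗ₜ[k] z)) := by
    intro u z
    induction u using TensorProduct.induction_on with
    | zero => simp
    | tmul x y => simp [Algebra.TensorProduct.tmul_mul_tmul]
    | add u v hu hv => simp only [map_add, add_mul, hu, hv]
  -- the alternative expansion of Δ(1)
  have hDalt : W.comul 1 = ∑ i ∈ s, ∑ j ∈ s, W.counit (j.1 * i.2) • (i.1 ⊗ₜ[k] j.2) := by
    have h1 := congrArg (⇑(LinearMap.lTensor H
      ((TensorProduct.lid k H).toLinearMap ∘ₗ LinearMap.rTensor H W.counit))) hT3R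
    simp only [map_sum, LinearMap.lTensor_tmul, LinearMap.coe_comp, Function.comp_apply,
      LinearEquiv.coe_coe, LinearMap.rTensor_tmul, TensorProduct.lid_tmul,
      W.counit_lid, tmul_smul] at h1
    rw [hD, h1]
  -- ε_s acts as identity on the left legs of Δ(1)
  have hW1 : ∑ i ∈ s, (W.εs i.1) ⊗ₜ[k] i.2 = ∑ i ∈ s, i.1 ⊗ₜ[k] i.2 := by
    rw [← hD, hDalt]
    simp only [hεs', sum_tmul, smul_tmul']
    rw [Finset.sum_comm]
  -- idempotency of ε_t
  have hIdem : ∀ g : H, W.εt (W.εt g) = W.εt g := by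
    have hεt'' : ∀ g : H, W.εt g =
        ∑ i ∈ s, ∑ j ∈ s, (W.counit (j.1 * i.2) * W.counit (i.1 * g)) • j.2 := by
      intro g
      rw [hεt0 g, hDalt]
      simp [Finset.sum_mul, smul_mul_assoc, Algebra.TensorProduct.tmul_mul_tmul, mul_smul]
    intro g
    rw [hεt' (W.εt g), hεt' g]
    simp only [Finset.mul_sum, mul_smul_comm, map_sum, map_smul, smul_eq_mul, Finset.sum_smul,
      smul_smul]
    rw [Finset.sum_comm]
    have h2 := (hεt'' g).symm.trans (hεt' g)
    rw [← h2]
    apply Finset.sum_congr rfl; intro i _; apply Finset.sum_congr rfl; intro j _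
    rw [mul_comm]
  -- the sandwich antipode axiom, with ε_s substituted
  have hconv : ∀ g : H, (LinearMap.mul' k H)
      ((TensorProduct.map W.εs W.antipode) (W.comul g)) = W.antipode g := by
    have hεsmap : (LinearMap.mul' k H) ∘ₗ (LinearMap.rTensor H W.antipode) ∘ₗ W.comul = W.εs :=
      LinearMap.ext hE4
    intro g
    have h := W.antipode_conv g
    rwa [hεsmap] at h
  -- the key identity : (S ⊗ id)Δ(1) = (ε_t ⊗ id)Δ(1)
  have hdia : ∑ i ∈ s, W.antipode i.1 ⊗ₜ[k] i.2 = ∑ i ∈ s, W.εt i.1 ⊗ₜ[k] i.2 := by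
    have hnat : (TensorProduct.assoc k H H H).toLinearMap ∘ₗ
          (LinearMap.rTensor H (LinearMap.rTensor H W.εs)) =
        (LinearMap.rTensor (H ⊗[k] H) W.εs) ∘ₗ (TensorProduct.assoc k H H H).toLinearMap := by
      apply TensorProduct.ext_threefold; intro x y z; simp
    have hW1'' : ∑ i ∈ s, ((LinearMap.rTensor H W.εs) (W.comul i.1)) ⊗ₜ[k] i.2 =
        ∑ i ∈ s, (W.comul i.1) ⊗ₜ[k] i.2 := by
      apply (TensorProduct.assoc k H H H).injective
      have h2 : (TensorProduct.assoc k H H H) (∑ i ∈ s, ((LinearMap.rTensor H W.εs)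
          (W.comul i.1)) ⊗ₜ[k] i.2) =
          (LinearMap.rTensor (H ⊗[k] H) W.εs)
            ((TensorProduct.assoc k H H H) (∑ i ∈ s, (W.comul i.1) ⊗ₜ[k] i.2)) := by
        calc (TensorProduct.assoc k H H H) (∑ i ∈ s, ((LinearMap.rTensor H W.εs)
              (W.comul i.1)) ⊗ₜ[k] i.2)
            = ((TensorProduct.assoc k H H H).toLinearMap ∘ₗ
                (LinearMap.rTensor H (LinearMap.rTensor H W.εs)))
                (∑ i ∈ s, (W.comul i.1) ⊗ₜ[k] i.2) := by
              simp only [LinearMap.coe_comp, Function.comp_apply, map_sum,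
                LinearMap.rTensor_tmul, LinearEquiv.coe_coe]
          _ = ((LinearMap.rTensor (H ⊗[k] H) W.εs) ∘ₗ (TensorProduct.assoc k H H H).toLinearMap)
                (∑ i ∈ s, (W.comul i.1) ⊗ₜ[k] i.2) := by rw [hnat]
          _ = _ := by simp only [LinearMap.coe_comp, Function.comp_apply, LinearEquiv.coe_coe]
      rw [h2, hcoassoc1]
      have h4 : (LinearMap.rTensor (H ⊗[k] H) W.εs) (∑ i ∈ s, i.1 ⊗ₜ[k] (W.comul i.2)) =
          (LinearMap.lTensor H W.comul) (∑ i ∈ s, (W.εs i.1) ⊗ₜ[k] i.2) := by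
        simp only [map_sum, LinearMap.rTensor_tmul, LinearMap.lTensor_tmul]
      rw [h4, hW1]
      simp only [map_sum, LinearMap.lTensor_tmul]
    calc ∑ i ∈ s, W.antipode i.1 ⊗ₜ[k] i.2
        = ∑ i ∈ s, ((LinearMap.mul' k H) ((LinearMap.lTensor H W.antipode)
            ((LinearMap.rTensor H W.εs) (W.comul i.1)))) ⊗ₜ[k] i.2 := by
          apply Finset.sum_congr rfl; intro i _
          congr 1
          rw [← hconv i.1]
          congr 1
          have hms : ∀ u : H ⊗[k] H, (TensorProduct.map W.εs W.antipode) u =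
              (LinearMap.lTensor H W.antipode) ((LinearMap.rTensor H W.εs) u) := by
            intro u
            induction u using TensorProduct.induction_on with
            | zero => simp
            | tmul x y => simp
            | add u v hu hv => simp only [map_add, hu, hv]
          exact hms (W.comul i.1)
      _ = (LinearMap.rTensor H ((LinearMap.mul' k H) ∘ₗ (LinearMap.lTensor H W.antipode)))
            (∑ i ∈ s, ((LinearMap.rTensor H W.εs) (W.comul i.1)) ⊗ₜ[k] i.2) := by
          simp only [map_sum, LinearMap.rTensor_tmul, LinearMap.coe_comp, Function.comp_apply]
      _ = (LinearMap.rTensor H ((LinearMap.mul' k H) ∘ₗ (LinearMap.lTensor H W.antipode)))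
            (∑ i ∈ s, (W.comul i.1) ⊗ₜ[k] i.2) := by rw [hW1'']
      _ = ∑ i ∈ s, W.εt i.1 ⊗ₜ[k] i.2 := by
          simp only [map_sum, LinearMap.rTensor_tmul, LinearMap.coe_comp, Function.comp_apply,
            hE3]
  -- Δ(ε_t g) = (ε_t g ⊗ 1)Δ(1) = Δ(1)(ε_t g ⊗ 1)
  have hAA : ∀ g : H, W.comul (W.εt g) = (W.εt g ⊗ₜ[k] (1:H)) * W.comul 1 ∧
      W.comul (W.εt g) = W.comul 1 * (W.εt g ⊗ₜ[k] (1:H)) := by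
    intro g
    have hL := congrArg (⇑((TensorProduct.lid k (H ⊗[k] H)).toLinearMap ∘ₗ
        (LinearMap.rTensor (H ⊗[k] H) (W.counit ∘ₗ LinearMap.mulRight k g)))) hT3L
    have hR := congrArg (⇑((TensorProduct.lid k (H ⊗[k] H)).toLinearMap ∘ₗ
        (LinearMap.rTensor (H ⊗[k] H) (W.counit ∘ₗ LinearMap.mulRight k g)))) hT3R
    simp only [LinearMap.coe_comp, Function.comp_apply, map_sum, LinearMap.rTensor_tmul,
      LinearEquiv.coe_coe, TensorProduct.lid_tmul, LinearMap.mulRight_apply] at hL hR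
    have hΔεt : W.comul (W.εt g) = ∑ i ∈ s, W.counit (i.1 * g) • W.comul i.2 := by
      rw [hεt' g, map_sum]; simp only [map_smul]
    constructor
    · rw [hΔεt, hL, hεt' g, hD]
      simp only [sum_tmul, smul_tmul', Finset.sum_mul, Finset.mul_sum, smul_mul_assoc,
        Algebra.TensorProduct.tmul_mul_tmul, one_mul]
      rw [Finset.sum_comm]
    · rw [hΔεt, hR, hεt' g, hD]
      simp only [sum_tmul, smul_tmul', Finset.sum_mul, Finset.mul_sum, mul_smul_comm,
        Algebra.TensorProduct.tmul_mul_tmul, mul_one]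
  have hA : ∀ g : H, W.comul (W.εt g) = (W.εt g ⊗ₜ[k] (1:H)) * W.comul 1 := fun g => (hAA g).1
  have hA' : ∀ g : H, W.comul (W.εt g) = W.comul 1 * (W.εt g ⊗ₜ[k] (1:H)) := fun g => (hAA g).2
  -- Δ(1)(1 ⊗ ε_t g) = (id ⊗ ε_t)(Δ(1)(1 ⊗ g))
  have hIV : ∀ g : H, W.comul 1 * ((1:H) ⊗ₜ[k] W.εt g) =
      (LinearMap.lTensor H W.εt) (W.comul 1 * ((1:H) ⊗ₜ[k] g)) := by
    intro g
    have hK : ∑ i ∈ s, i.1 ⊗ₜ[k] ((i.2 ⊗ₜ[k] (1:H)) * W.comul g) =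
        ∑ i ∈ s, i.1 ⊗ₜ[k] (W.comul (i.2 * g)) := by
      have h1 := congrArg (⇑(LinearMap.lTensor H (LinearMap.mulRight k (W.comul g)))) hT3L.symm
      simp only [map_sum, LinearMap.lTensor_tmul, LinearMap.mulRight_apply] at h1
      have h2 : ∀ c : H, (c ⊗ₜ[k] (1:H)) * W.comul g =
          ∑ j ∈ s, ((c * j.1) ⊗ₜ[k] j.2) * W.comul g := by
        intro c
        conv_lhs => rw [hΔ1mul g, ← mul_assoc, hD]
        rw [Finset.mul_sum, Finset.sum_mul]
        apply Finset.sum_congr rfl; intro j _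
        rw [Algebra.TensorProduct.tmul_mul_tmul, one_mul]
      calc ∑ i ∈ s, i.1 ⊗ₜ[k] ((i.2 ⊗ₜ[k] (1:H)) * W.comul g)
          = ∑ i ∈ s, ∑ j ∈ s, i.1 ⊗ₜ[k] (((i.2 * j.1) ⊗ₜ[k] j.2) * W.comul g) := by
            apply Finset.sum_congr rfl; intro i _
            rw [h2 i.2, tmul_sum]
        _ = ∑ i ∈ s, i.1 ⊗ₜ[k] (W.comul i.2 * W.comul g) := h1
        _ = ∑ i ∈ s, i.1 ⊗ₜ[k] (W.comul (i.2 * g)) := by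
            apply Finset.sum_congr rfl; intro i _
            rw [W.comul_mul]
    rw [hD]
    simp only [Finset.sum_mul, Algebra.TensorProduct.tmul_mul_tmul, one_mul, mul_one, map_sum,
      LinearMap.lTensor_tmul]
    calc ∑ i ∈ s, i.1 ⊗ₜ[k] (i.2 * W.εt g)
        = ∑ i ∈ s, i.1 ⊗ₜ[k] ((LinearMap.mul' k H) ((LinearMap.lTensor H W.antipode)
            ((i.2 ⊗ₜ[k] (1:H)) * W.comul g))) := by
          apply Finset.sum_congr rfl; intro i _
          rw [← hE3 g, hmulL]
      _ = (LinearMap.lTensor H ((LinearMap.mul' k H) ∘ₗ (LinearMap.lTensor H W.antipode)))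
            (∑ i ∈ s, i.1 ⊗ₜ[k] ((i.2 ⊗ₜ[k] (1:H)) * W.comul g)) := by
          simp only [map_sum, LinearMap.lTensor_tmul, LinearMap.coe_comp, Function.comp_apply]
      _ = (LinearMap.lTensor H ((LinearMap.mul' k H) ∘ₗ (LinearMap.lTensor H W.antipode)))
            (∑ i ∈ s, i.1 ⊗ₜ[k] (W.comul (i.2 * g))) := by rw [hK]
      _ = ∑ i ∈ s, i.1 ⊗ₜ[k] W.εt (i.2 * g) := by
          simp only [map_sum, LinearMap.lTensor_tmul, LinearMap.coe_comp, Function.comp_apply,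
            hE3]
  -- ε_t(g z) via the weak counit axiom
  have hM1 : ∀ z g : H, W.εt (g * z) =
      (TensorProduct.rid k H) ((LinearMap.lTensor H (W.counit ∘ₗ LinearMap.mulRight k z))
        ((LinearMap.rTensor H W.εt) (W.comul g))) := by
    intro z g
    have key : ∀ u : H ⊗[k] H,
        ∑ c ∈ s, ((LinearMap.mul' k k) ((TensorProduct.map (W.counit ∘ₗ LinearMap.mulLeft k c.1)
          (W.counit ∘ₗ LinearMap.mulRight k z)) u)) • c.2 =
        (TensorProduct.rid k H) ((LinearMap.lTensor H (W.counit ∘ₗ LinearMap.mulRight k z))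
          ((LinearMap.rTensor H W.εt) u)) := by
      intro u
      induction u using TensorProduct.induction_on with
      | zero => simp
      | tmul x y =>
          simp only [TensorProduct.map_tmul, LinearMap.mul'_apply, LinearMap.rTensor_tmul,
            LinearMap.lTensor_tmul, TensorProduct.rid_tmul, LinearMap.coe_comp,
            Function.comp_apply, LinearMap.mulLeft_apply, LinearMap.mulRight_apply,
            smul_eq_mul, hεt' x, Finset.smul_sum, smul_smul]
          apply Finset.sum_congr rfl; intro c _
          rw [mul_comm]
      | add u v hu hv => simp only [map_add, add_smul, Finset.sum_add_distrib, hu, hv]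
    rw [hεt' (g * z), ← key (W.comul g)]
    apply Finset.sum_congr rfl; intro c _
    rw [← mul_assoc, W.weak_counit_left c.1 g z]
  -- associator compatibility
  have hXi : ∀ z : H,
      (TensorProduct.map W.εt
          ((TensorProduct.lid k H).toLinearMap ∘ₗ
            (LinearMap.rTensor H (W.counit ∘ₗ LinearMap.mulRight k z)))) ∘ₗ
        (TensorProduct.assoc k H H H).toLinearMap =
      LinearMap.rTensor H ((TensorProduct.rid k H).toLinearMap ∘ₗ
        (LinearMap.lTensor H (W.counit ∘ₗ LinearMap.mulRight k z)) ∘ₗ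
        (LinearMap.rTensor H W.εt)) := by
    intro z
    apply TensorProduct.ext_threefold
    intro x y w
    simp [TensorProduct.smul_tmul']
  -- ε_t c · ε_t g = ε_t(ε_t c · g)
  have hstep : ∀ (c g : H), W.εt c * W.εt g = W.εt (W.εt c * g) := by
    intro c g
    rw [← hE3 g, hmulL (W.εt c) (W.comul g), ← hE3 (W.εt c * g)]
    congr 2
    rw [W.comul_mul, hA c, mul_assoc, ← hΔ1mul g]
  refine ⟨?_, ?_⟩
  · -- part 1 : m(e_t) = 1
    rw [W.antipode_left 1]
    have h1 : ((1:H) ⊗ₜ[k] (1:H)) * W.comul 1 = W.comul 1 := by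
      rw [← Algebra.TensorProduct.one_def, one_mul]
    rw [h1, W.counit_rid 1]
  · -- part 2 : the separability property
    rintro z ⟨h0, rfl⟩
    calc (W.εt h0 ⊗ₜ[k] (1:H)) * (LinearMap.rTensor H W.antipode) (W.comul 1)
        = ∑ i ∈ s, W.εt (W.εt h0 * i.1) ⊗ₜ[k] i.2 := by
          rw [hD]
          simp only [map_sum, LinearMap.rTensor_tmul]
          rw [hdia, Finset.mul_sum]
          apply Finset.sum_congr rfl; intro i _
          rw [Algebra.TensorProduct.tmul_mul_tmul, one_mul, hstep h0 i.1]
      _ = (LinearMap.rTensor H W.εt) ((W.εt h0 ⊗ₜ[k] (1:H)) * W.comul 1) := by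
          rw [hD]
          simp only [Finset.mul_sum, Algebra.TensorProduct.tmul_mul_tmul, one_mul, mul_one,
            map_sum, LinearMap.rTensor_tmul]
      _ = (LinearMap.rTensor H W.εt) (W.comul 1 * (W.εt h0 ⊗ₜ[k] (1:H))) := by
          rw [← hA h0, hA' h0]
      _ = ∑ i ∈ s, ((TensorProduct.rid k H) ((LinearMap.lTensor H
            (W.counit ∘ₗ LinearMap.mulRight k (W.εt h0)))
            ((LinearMap.rTensor H W.εt) (W.comul i.1)))) ⊗ₜ[k] i.2 := by
          rw [hD]
          simp only [Finset.sum_mul, Algebra.TensorProduct.tmul_mul_tmul, one_mul, mul_one,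
            map_sum, LinearMap.rTensor_tmul]
          apply Finset.sum_congr rfl; intro i _
          rw [hM1 (W.εt h0) i.1]
      _ = (LinearMap.rTensor H ((TensorProduct.rid k H).toLinearMap ∘ₗ
            (LinearMap.lTensor H (W.counit ∘ₗ LinearMap.mulRight k (W.εt h0))) ∘ₗ
            (LinearMap.rTensor H W.εt))) (∑ i ∈ s, (W.comul i.1) ⊗ₜ[k] i.2) := by
          simp only [map_sum, LinearMap.rTensor_tmul, LinearMap.coe_comp, Function.comp_apply,
            LinearEquiv.coe_coe]
      _ = (TensorProduct.map W.εt ((TensorProduct.lid k H).toLinearMap ∘ₗ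
            (LinearMap.rTensor H (W.counit ∘ₗ LinearMap.mulRight k (W.εt h0)))))
            ((TensorProduct.assoc k H H H) (∑ i ∈ s, (W.comul i.1) ⊗ₜ[k] i.2)) := by
          have h7 := LinearMap.congr_fun (hXi (W.εt h0)) (∑ i ∈ s, (W.comul i.1) ⊗ₜ[k] i.2)
          simp only [LinearMap.coe_comp, Function.comp_apply, LinearEquiv.coe_coe] at h7
          exact h7.symm
      _ = (TensorProduct.map W.εt ((TensorProduct.lid k H).toLinearMap ∘ₗ
            (LinearMap.rTensor H (W.counit ∘ₗ LinearMap.mulRight k (W.εt h0)))))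
            (∑ i ∈ s, i.1 ⊗ₜ[k] (W.comul i.2)) := by rw [hcoassoc1]
      _ = ∑ i ∈ s, W.εt i.1 ⊗ₜ[k] (((TensorProduct.lid k H).toLinearMap ∘ₗ
            (LinearMap.rTensor H (W.counit ∘ₗ LinearMap.mulRight k (W.εt h0))))
            (W.comul i.2)) := by
          simp only [map_sum, TensorProduct.map_tmul]
      _ = ∑ i ∈ s, W.antipode i.1 ⊗ₜ[k] (((TensorProduct.lid k H).toLinearMap ∘ₗ
            (LinearMap.rTensor H (W.counit ∘ₗ LinearMap.mulRight k (W.εt h0))))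
            (W.comul i.2)) := by
          have h10 := congrArg (⇑(LinearMap.lTensor H
            (((TensorProduct.lid k H).toLinearMap ∘ₗ
              (LinearMap.rTensor H (W.counit ∘ₗ LinearMap.mulRight k (W.εt h0)))) ∘ₗ
              W.comul))) hdia
          simp only [map_sum, LinearMap.lTensor_tmul, LinearMap.coe_comp,
            Function.comp_apply] at h10 ⊢
          exact h10.symm
      _ = (LinearMap.rTensor H W.antipode) (∑ i ∈ s, i.1 ⊗ₜ[k]
            (((TensorProduct.lid k H).toLinearMap ∘ₗ
              (LinearMap.rTensor H (W.counit ∘ₗ LinearMap.mulRight k (W.εt h0))))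
              (W.comul i.2))) := by
          simp only [map_sum, LinearMap.rTensor_tmul]
      _ = (LinearMap.rTensor H W.antipode) ((LinearMap.lTensor H W.εt)
            (W.comul 1 * ((1:H) ⊗ₜ[k] W.εt h0))) := by
          congr 1
          have h12 := congrArg (⇑(LinearMap.lTensor H
            ((TensorProduct.lid k H).toLinearMap ∘ₗ
              (LinearMap.rTensor H (W.counit ∘ₗ LinearMap.mulRight k (W.εt h0)))))) hT3R
          simp only [map_sum, LinearMap.lTensor_tmul] at h12
          rw [h12, hD]
          simp only [Finset.mul_sum, Finset.sum_mul, Algebra.TensorProduct.tmul_mul_tmul,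
            one_mul, mul_one, map_sum, LinearMap.lTensor_tmul]
          apply Finset.sum_congr rfl; intro i _
          rw [hεt' (i.2 * W.εt h0), tmul_sum]
          apply Finset.sum_congr rfl; intro j _
          simp only [LinearMap.coe_comp, Function.comp_apply, LinearEquiv.coe_coe,
            LinearMap.rTensor_tmul, TensorProduct.lid_tmul, LinearMap.mulRight_apply,
            tmul_smul]
          rw [mul_assoc]
      _ = (LinearMap.rTensor H W.antipode) (W.comul 1 * ((1:H) ⊗ₜ[k] W.εt h0)) := by
          rw [← hIV (W.εt h0), hIdem h0]
      _ = (LinearMap.rTensor H W.antipode) (W.comul 1) * ((1:H) ⊗ₜ[k] W.εt h0) :=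
          (hIII _ _).symm
end

section
/- If H is a weak Hopf algebra with antipode S, then the opposite algebra H^op, with the same coalgebra structure and antipode S⁻¹, is again a weak Hopf algebra; in particular S⁻¹(h₍₂₎)h₍₁₎ = ε(h1₍₁₎)1₍₂₎ and h₍₂₎S⁻¹(h₍₁₎) = 1₍₁₎ε(1₍₂₎h) for all h ∈ H. -/
open TensorProduct

namespace WeakHopfAlgebra

section Aux
variable {k H : Type*} [CommRing k] [Ring H] [Algebra k H] (W : WeakHopfAlgebra k H)

noncomputable def D (y : H) : Finset (H × H) := (TensorProduct.exists_finset (W.comul y)).choose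

lemma D_spec (y : H) : W.comul y = ∑ p ∈ W.D y, p.1 ⊗ₜ[k] p.2 :=
  (TensorProduct.exists_finset (W.comul y)).choose_spec

/-- `ε_t` as an explicit sum. -/
noncomputable def tL (y : H) : H := ∑ e ∈ W.D 1, W.counit (e.1 * y) • e.2
/-- `ε_s` as an explicit sum. -/
noncomputable def tR (y : H) : H := ∑ e ∈ W.D 1, W.counit (y * e.2) • e.1
noncomputable def tLb (y : H) : H := ∑ e ∈ W.D 1, W.counit (y * e.1) • e.2
noncomputable def tRb (y : H) : H := ∑ e ∈ W.D 1, W.counit (e.2 * y) • e.1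

lemma sum_counit_l (y : H) : ∑ p ∈ W.D y, W.counit p.1 • p.2 = y := by
  have h := W.counit_lid y
  rw [W.D_spec y] at h
  simpa [map_sum] using h

lemma sum_counit_r (y : H) : ∑ p ∈ W.D y, W.counit p.2 • p.1 = y := by
  have h := W.counit_rid y
  rw [W.D_spec y] at h
  simpa [map_sum] using h

lemma comul_mul_sum (x y : H) :
    W.comul (x * y) = ∑ p ∈ W.D x, ∑ q ∈ W.D y, (p.1 * q.1) ⊗ₜ[k] (p.2 * q.2) := by
  rw [W.comul_mul, W.D_spec x, W.D_spec y, Finset.sum_mul_sum]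
  simp [Algebra.TensorProduct.tmul_mul_tmul]

lemma sum_id_S (y : H) : ∑ p ∈ W.D y, p.1 * W.antipode p.2 = W.tL y := by
  have h := W.antipode_right y
  rw [W.D_spec y, W.D_spec 1, Finset.sum_mul] at h
  simp only [Algebra.TensorProduct.tmul_mul_tmul] at h
  simp only [map_sum, mul_one, LinearMap.lTensor_tmul, LinearMap.rTensor_tmul,
    LinearMap.mul'_apply, LinearMap.id_coe, id_eq, lid_tmul] at h
  exact h

lemma sum_S_id (y : H) : ∑ p ∈ W.D y, W.antipode p.1 * p.2 = W.tR y := by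
  have h := W.antipode_left y
  rw [W.D_spec y, W.D_spec 1, Finset.mul_sum] at h
  simp only [Algebra.TensorProduct.tmul_mul_tmul] at h
  simp only [map_sum, one_mul, LinearMap.lTensor_tmul, LinearMap.rTensor_tmul,
    LinearMap.mul'_apply, LinearMap.id_coe, id_eq, rid_tmul] at h
  exact h

lemma counit_mul_l (a b : H) :
    W.counit (a * b) = ∑ e ∈ W.D 1, W.counit (a * e.1) * W.counit (e.2 * b) := by
  have h := W.weak_counit_left a 1 b
  rw [W.D_spec 1] at h
  simpa [map_sum, mul_one, LinearMap.mul'_apply] using h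

lemma counit_mul_r (a b : H) :
    W.counit (a * b) = ∑ e ∈ W.D 1, W.counit (a * e.2) * W.counit (e.1 * b) := by
  have h := W.weak_counit_right a 1 b
  rw [W.D_spec 1] at h
  simpa [map_sum, mul_one, LinearMap.mul'_apply, mul_comm] using h


/-- three-fold multiplication against chosen linear maps -/
noncomputable def tri (f₁ f₂ f₃ : H →ₗ[k] H) : H ⊗[k] (H ⊗[k] H) →ₗ[k] H :=
  LinearMap.mul' k H ∘ₗ LinearMap.lTensor H (LinearMap.mul' k H) ∘ₗ
    TensorProduct.map f₁ (TensorProduct.map f₂ f₃)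

@[simp] lemma tri_tmul (f₁ f₂ f₃ : H →ₗ[k] H) (a b c : H) :
    tri f₁ f₂ f₃ (a ⊗ₜ[k] (b ⊗ₜ[k] c)) = f₁ a * (f₂ b * f₃ c) := by
  simp [tri]

lemma lTensor_comul_sum (y : H) :
    LinearMap.lTensor H W.comul (W.comul y)
      = ∑ p ∈ W.D y, ∑ q ∈ W.D p.2, p.1 ⊗ₜ[k] (q.1 ⊗ₜ[k] q.2) := by
  conv_lhs => rw [W.D_spec y]
  rw [map_sum]
  refine Finset.sum_congr rfl fun p _ => ?_
  rw [LinearMap.lTensor_tmul, W.D_spec p.2, tmul_sum]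

lemma assoc_rTensor_comul_sum (y : H) :
    (TensorProduct.assoc k H H H) (LinearMap.rTensor H W.comul (W.comul y))
      = ∑ p ∈ W.D y, ∑ q ∈ W.D p.1, q.1 ⊗ₜ[k] (q.2 ⊗ₜ[k] p.2) := by
  conv_lhs => rw [W.D_spec y]
  rw [map_sum, map_sum]
  refine Finset.sum_congr rfl fun p _ => ?_
  rw [LinearMap.rTensor_tmul, W.D_spec p.1, sum_tmul, map_sum]
  exact Finset.sum_congr rfl fun q _ => by rw [assoc_tmul]

lemma coas3 (f₁ f₂ f₃ : H →ₗ[k] H) (y : H) :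
    ∑ p ∈ W.D y, ∑ q ∈ W.D p.2, f₁ p.1 * (f₂ q.1 * f₃ q.2)
      = ∑ p ∈ W.D y, ∑ q ∈ W.D p.1, f₁ q.1 * (f₂ q.2 * f₃ p.2) := by
  have h := congrArg (tri f₁ f₂ f₃) (W.coassoc y)
  rw [W.lTensor_comul_sum, W.assoc_rTensor_comul_sum, map_sum, map_sum] at h
  simp only [map_sum, tri_tmul] at h
  exact h.symm

lemma star_a :
    LinearMap.lTensor H W.comul (W.comul 1)
      = ∑ p ∈ W.D 1, ∑ q ∈ W.D 1, p.1 ⊗ₜ[k] ((p.2 * q.1) ⊗ₜ[k] q.2) := by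
  rw [W.weak_comul_one_left]
  rw [W.D_spec 1, sum_tmul, map_sum, tmul_sum, Finset.sum_mul_sum]
  refine Finset.sum_congr rfl fun p _ => Finset.sum_congr rfl fun q _ => ?_
  rw [assoc_tmul, Algebra.TensorProduct.tmul_mul_tmul, Algebra.TensorProduct.tmul_mul_tmul,
    mul_one, one_mul]

lemma star_b :
    LinearMap.lTensor H W.comul (W.comul 1)
      = ∑ p ∈ W.D 1, ∑ q ∈ W.D 1, p.1 ⊗ₜ[k] ((q.1 * p.2) ⊗ₜ[k] q.2) := by
  rw [W.weak_comul_one_right]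
  rw [W.D_spec 1, sum_tmul, map_sum, tmul_sum, Finset.sum_mul_sum, Finset.sum_comm]
  refine Finset.sum_congr rfl fun p _ => Finset.sum_congr rfl fun q _ => ?_
  rw [assoc_tmul, Algebra.TensorProduct.tmul_mul_tmul, Algebra.TensorProduct.tmul_mul_tmul,
    mul_one, one_mul]

lemma rstar_a :
    LinearMap.rTensor H W.comul (W.comul 1)
      = ∑ p ∈ W.D 1, ∑ q ∈ W.D 1, (p.1 ⊗ₜ[k] (p.2 * q.1)) ⊗ₜ[k] q.2 := by
  apply (TensorProduct.assoc k H H H).injective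
  rw [W.coassoc 1, W.star_a, map_sum]
  refine Finset.sum_congr rfl fun p _ => ?_
  rw [map_sum]
  refine Finset.sum_congr rfl fun q _ => ?_
  rw [assoc_tmul]

lemma rstar_b :
    LinearMap.rTensor H W.comul (W.comul 1)
      = ∑ p ∈ W.D 1, ∑ q ∈ W.D 1, (p.1 ⊗ₜ[k] (q.1 * p.2)) ⊗ₜ[k] q.2 := by
  apply (TensorProduct.assoc k H H H).injective
  rw [W.coassoc 1, W.star_b, map_sum]
  refine Finset.sum_congr rfl fun p _ => ?_
  rw [map_sum]
  refine Finset.sum_congr rfl fun q _ => ?_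
  rw [assoc_tmul]

lemma lTensor_mid (y : H) :
    LinearMap.lTensor H W.comul (W.comul y) = ∑ p ∈ W.D y, p.1 ⊗ₜ[k] W.comul p.2 := by
  conv_lhs => rw [W.D_spec y]
  rw [map_sum]
  exact Finset.sum_congr rfl fun p _ => by rw [LinearMap.lTensor_tmul]

lemma rTensor_mid (y : H) :
    LinearMap.rTensor H W.comul (W.comul y) = ∑ p ∈ W.D y, W.comul p.1 ⊗ₜ[k] p.2 := by
  conv_lhs => rw [W.D_spec y]
  rw [map_sum]
  exact Finset.sum_congr rfl fun p _ => by rw [LinearMap.rTensor_tmul]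

lemma comul_tL (y : H) :
    W.comul (W.tL y) = ∑ e ∈ W.D 1, (W.tL y * e.1) ⊗ₜ[k] e.2 := by
  set ξ : H ⊗[k] (H ⊗[k] H) →ₗ[k] H ⊗[k] H :=
    (TensorProduct.lid k (H ⊗[k] H)).toLinearMap ∘ₗ
      LinearMap.rTensor (H ⊗[k] H) (W.counit ∘ₗ LinearMap.mulRight k y) with hξ
  have hξt : ∀ (a : H) (z : H ⊗[k] H), ξ (a ⊗ₜ[k] z) = W.counit (a * y) • z := by
    intro a z; simp [hξ]
  calc W.comul (W.tL y) = ∑ p ∈ W.D 1, W.counit (p.1 * y) • W.comul p.2 := by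
        rw [tL, map_sum]; exact Finset.sum_congr rfl fun p _ => by rw [map_smul]
    _ = ξ (∑ p ∈ W.D 1, p.1 ⊗ₜ[k] W.comul p.2) := by
        rw [map_sum]; exact Finset.sum_congr rfl fun p _ => (hξt _ _).symm
    _ = ξ (∑ p ∈ W.D 1, ∑ q ∈ W.D 1, p.1 ⊗ₜ[k] ((p.2 * q.1) ⊗ₜ[k] q.2)) := by
        rw [← W.lTensor_mid 1, W.star_a]
    _ = ∑ p ∈ W.D 1, ∑ q ∈ W.D 1, W.counit (p.1 * y) • ((p.2 * q.1) ⊗ₜ[k] q.2) := by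
        rw [map_sum]
        refine Finset.sum_congr rfl fun p _ => ?_
        rw [map_sum]; exact Finset.sum_congr rfl fun q _ => hξt _ _
    _ = ∑ e ∈ W.D 1, (W.tL y * e.1) ⊗ₜ[k] e.2 := by
        rw [Finset.sum_comm]
        refine Finset.sum_congr rfl fun q _ => ?_
        rw [tL, Finset.sum_mul, sum_tmul]
        exact Finset.sum_congr rfl fun p _ => by rw [smul_mul_assoc, smul_tmul']

lemma comul_tL' (y : H) :
    W.comul (W.tL y) = ∑ e ∈ W.D 1, (e.1 * W.tL y) ⊗ₜ[k] e.2 := by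
  set ξ : H ⊗[k] (H ⊗[k] H) →ₗ[k] H ⊗[k] H :=
    (TensorProduct.lid k (H ⊗[k] H)).toLinearMap ∘ₗ
      LinearMap.rTensor (H ⊗[k] H) (W.counit ∘ₗ LinearMap.mulRight k y) with hξ
  have hξt : ∀ (a : H) (z : H ⊗[k] H), ξ (a ⊗ₜ[k] z) = W.counit (a * y) • z := by
    intro a z; simp [hξ]
  calc W.comul (W.tL y) = ∑ p ∈ W.D 1, W.counit (p.1 * y) • W.comul p.2 := by
        rw [tL, map_sum]; exact Finset.sum_congr rfl fun p _ => by rw [map_smul]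
    _ = ξ (∑ p ∈ W.D 1, p.1 ⊗ₜ[k] W.comul p.2) := by
        rw [map_sum]; exact Finset.sum_congr rfl fun p _ => (hξt _ _).symm
    _ = ξ (∑ p ∈ W.D 1, ∑ q ∈ W.D 1, p.1 ⊗ₜ[k] ((q.1 * p.2) ⊗ₜ[k] q.2)) := by
        rw [← W.lTensor_mid 1, W.star_b]
    _ = ∑ p ∈ W.D 1, ∑ q ∈ W.D 1, W.counit (p.1 * y) • ((q.1 * p.2) ⊗ₜ[k] q.2) := by
        rw [map_sum]
        refine Finset.sum_congr rfl fun p _ => ?_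
        rw [map_sum]; exact Finset.sum_congr rfl fun q _ => hξt _ _
    _ = ∑ e ∈ W.D 1, (e.1 * W.tL y) ⊗ₜ[k] e.2 := by
        rw [Finset.sum_comm]
        refine Finset.sum_congr rfl fun q _ => ?_
        rw [tL, Finset.mul_sum, sum_tmul]
        exact Finset.sum_congr rfl fun p _ => by rw [mul_smul_comm, smul_tmul']

lemma comul_tR (y : H) :
    W.comul (W.tR y) = ∑ e ∈ W.D 1, e.1 ⊗ₜ[k] (e.2 * W.tR y) := by
  set η : (H ⊗[k] H) ⊗[k] H →ₗ[k] H ⊗[k] H :=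
    (TensorProduct.rid k (H ⊗[k] H)).toLinearMap ∘ₗ
      LinearMap.lTensor (H ⊗[k] H) (W.counit ∘ₗ LinearMap.mulLeft k y) with hη
  have hηt : ∀ (z : H ⊗[k] H) (c : H), η (z ⊗ₜ[k] c) = W.counit (y * c) • z := by
    intro z c; simp [hη]
  calc W.comul (W.tR y) = ∑ p ∈ W.D 1, W.counit (y * p.2) • W.comul p.1 := by
        rw [tR, map_sum]; exact Finset.sum_congr rfl fun p _ => by rw [map_smul]
    _ = η (∑ p ∈ W.D 1, W.comul p.1 ⊗ₜ[k] p.2) := by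
        rw [map_sum]; exact Finset.sum_congr rfl fun p _ => (hηt _ _).symm
    _ = η (∑ p ∈ W.D 1, ∑ q ∈ W.D 1, (p.1 ⊗ₜ[k] (p.2 * q.1)) ⊗ₜ[k] q.2) := by
        rw [← W.rTensor_mid 1, W.rstar_a]
    _ = ∑ p ∈ W.D 1, ∑ q ∈ W.D 1, W.counit (y * q.2) • (p.1 ⊗ₜ[k] (p.2 * q.1)) := by
        rw [map_sum]
        refine Finset.sum_congr rfl fun p _ => ?_
        rw [map_sum]; exact Finset.sum_congr rfl fun q _ => hηt _ _
    _ = ∑ e ∈ W.D 1, e.1 ⊗ₜ[k] (e.2 * W.tR y) := by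
        refine Finset.sum_congr rfl fun p _ => ?_
        rw [tR, Finset.mul_sum, tmul_sum]
        exact Finset.sum_congr rfl fun q _ => by rw [mul_smul_comm, tmul_smul]

lemma comul_tR' (y : H) :
    W.comul (W.tR y) = ∑ e ∈ W.D 1, e.1 ⊗ₜ[k] (W.tR y * e.2) := by
  set η : (H ⊗[k] H) ⊗[k] H →ₗ[k] H ⊗[k] H :=
    (TensorProduct.rid k (H ⊗[k] H)).toLinearMap ∘ₗ
      LinearMap.lTensor (H ⊗[k] H) (W.counit ∘ₗ LinearMap.mulLeft k y) with hη
  have hηt : ∀ (z : H ⊗[k] H) (c : H), η (z ⊗ₜ[k] c) = W.counit (y * c) • z := by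
    intro z c; simp [hη]
  calc W.comul (W.tR y) = ∑ p ∈ W.D 1, W.counit (y * p.2) • W.comul p.1 := by
        rw [tR, map_sum]; exact Finset.sum_congr rfl fun p _ => by rw [map_smul]
    _ = η (∑ p ∈ W.D 1, W.comul p.1 ⊗ₜ[k] p.2) := by
        rw [map_sum]; exact Finset.sum_congr rfl fun p _ => (hηt _ _).symm
    _ = η (∑ p ∈ W.D 1, ∑ q ∈ W.D 1, (p.1 ⊗ₜ[k] (q.1 * p.2)) ⊗ₜ[k] q.2) := by
        rw [← W.rTensor_mid 1, W.rstar_b]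
    _ = ∑ p ∈ W.D 1, ∑ q ∈ W.D 1, W.counit (y * q.2) • (p.1 ⊗ₜ[k] (q.1 * p.2)) := by
        rw [map_sum]
        refine Finset.sum_congr rfl fun p _ => ?_
        rw [map_sum]; exact Finset.sum_congr rfl fun q _ => hηt _ _
    _ = ∑ e ∈ W.D 1, e.1 ⊗ₜ[k] (W.tR y * e.2) := by
        refine Finset.sum_congr rfl fun p _ => ?_
        rw [tR, Finset.sum_mul, tmul_sum]
        exact Finset.sum_congr rfl fun q _ => by rw [smul_mul_assoc, tmul_smul]

lemma sum_tL_mul (y : H) : ∑ p ∈ W.D y, W.tL p.1 * p.2 = y := by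
  have h1 : (∑ e ∈ W.D 1, ∑ p ∈ W.D y, (e.1 * p.1) ⊗ₜ[k] (e.2 * p.2))
      = ∑ p ∈ W.D y, p.1 ⊗ₜ[k] p.2 := by
    rw [← W.comul_mul_sum, one_mul, ← W.D_spec]
  have h2 := congrArg ((TensorProduct.lid k H).toLinearMap ∘ₗ LinearMap.rTensor H W.counit) h1
  simp only [map_sum, LinearMap.coe_comp, Function.comp_apply, LinearMap.rTensor_tmul,
    LinearEquiv.coe_coe, lid_tmul] at h2
  rw [W.sum_counit_l] at h2
  refine Eq.trans ?_ h2
  rw [Finset.sum_comm]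
  refine Finset.sum_congr rfl fun p _ => ?_
  rw [tL, Finset.sum_mul]
  exact Finset.sum_congr rfl fun e _ => smul_mul_assoc _ _ _

lemma sum_mul_tR (y : H) : ∑ p ∈ W.D y, p.1 * W.tR p.2 = y := by
  have h1 : (∑ p ∈ W.D y, ∑ e ∈ W.D 1, (p.1 * e.1) ⊗ₜ[k] (p.2 * e.2))
      = ∑ p ∈ W.D y, p.1 ⊗ₜ[k] p.2 := by
    rw [← W.comul_mul_sum, mul_one, ← W.D_spec]
  have h2 := congrArg ((TensorProduct.rid k H).toLinearMap ∘ₗ LinearMap.lTensor H W.counit) h1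
  simp only [map_sum, LinearMap.coe_comp, Function.comp_apply, LinearMap.lTensor_tmul,
    LinearEquiv.coe_coe, rid_tmul] at h2
  rw [W.sum_counit_r] at h2
  refine Eq.trans ?_ h2
  refine Finset.sum_congr rfl fun p _ => ?_
  rw [tR, Finset.mul_sum]
  exact Finset.sum_congr rfl fun e _ => (mul_smul_comm _ _ _)

lemma tL_tL (y : H) : W.tL (W.tL y) = W.tL y := by
  have h2 := congrArg ((TensorProduct.lid k H).toLinearMap ∘ₗ LinearMap.rTensor H W.counit)
    ((W.D_spec (W.tL y)).symm.trans (W.comul_tL' y))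
  simp only [map_sum, LinearMap.coe_comp, Function.comp_apply, LinearMap.rTensor_tmul,
    LinearEquiv.coe_coe, lid_tmul] at h2
  rw [W.sum_counit_l] at h2
  conv_lhs => rw [tL]
  exact h2.symm

lemma tR_tR (y : H) : W.tR (W.tR y) = W.tR y := by
  have h2 := congrArg ((TensorProduct.rid k H).toLinearMap ∘ₗ LinearMap.lTensor H W.counit)
    ((W.D_spec (W.tR y)).symm.trans (W.comul_tR' y))
  simp only [map_sum, LinearMap.coe_comp, Function.comp_apply, LinearMap.lTensor_tmul,
    LinearEquiv.coe_coe, rid_tmul] at h2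
  rw [W.sum_counit_r] at h2
  conv_lhs => rw [tR]
  exact h2.symm

lemma tR_tL_comm (a b : H) : W.tR a * W.tL b = W.tL b * W.tR a := by
  have h1 := (W.comul_tR a).symm.trans (W.comul_tR' a)
  have h2 := congrArg ((TensorProduct.lid k H).toLinearMap ∘ₗ
    LinearMap.rTensor H (W.counit ∘ₗ LinearMap.mulRight k (W.tL b))) h1
  simp only [map_sum, LinearMap.coe_comp, Function.comp_apply, LinearMap.rTensor_tmul,
    LinearEquiv.coe_coe, lid_tmul, LinearMap.mulRight_apply] at h2
  have e1 : (W.tL (W.tL b)) * W.tR a = ∑ e ∈ W.D 1, W.counit (e.1 * W.tL b) • (e.2 * W.tR a) := by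
    rw [tL, Finset.sum_mul]; exact Finset.sum_congr rfl fun e _ => smul_mul_assoc _ _ _
  have e2 : W.tR a * (W.tL (W.tL b)) = ∑ e ∈ W.D 1, W.counit (e.1 * W.tL b) • (W.tR a * e.2) := by
    rw [tL, Finset.mul_sum]; exact Finset.sum_congr rfl fun e _ => mul_smul_comm _ _ _
  rw [W.tL_tL] at e1 e2
  rw [e2, e1]
  exact h2.symm


lemma counit_tL (a y : H) : W.counit (a * W.tL y) = W.counit (a * y) := by
  rw [tL, Finset.mul_sum, map_sum, W.counit_mul_r a y]
  refine Finset.sum_congr rfl fun e _ => ?_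
  rw [mul_smul_comm, map_smul, smul_eq_mul, mul_comm]

lemma counit_tR (y a : H) : W.counit (W.tR y * a) = W.counit (y * a) := by
  rw [tR, Finset.sum_mul, map_sum, W.counit_mul_r y a]
  refine Finset.sum_congr rfl fun e _ => ?_
  rw [smul_mul_assoc, map_smul, smul_eq_mul]

lemma tL_mul_tL (x y : H) : W.tL (x * W.tL y) = W.tL (x * y) := by
  conv_lhs => rw [tL]
  conv_rhs => rw [tL]
  refine Finset.sum_congr rfl fun e _ => ?_
  rw [← mul_assoc, W.counit_tL, mul_assoc]

lemma tR_mul_tR (x y : H) : W.tR (W.tR x * y) = W.tR (x * y) := by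
  conv_lhs => rw [tR]
  conv_rhs => rw [tR]
  refine Finset.sum_congr rfl fun e _ => ?_
  rw [mul_assoc, W.counit_tR, ← mul_assoc]

lemma comul_mul_tL (x y : H) :
    W.comul (x * W.tL y) = ∑ p ∈ W.D x, (p.1 * W.tL y) ⊗ₜ[k] p.2 := by
  have h1 : (∑ p ∈ W.D x, ∑ e ∈ W.D 1, (p.1 * e.1) ⊗ₜ[k] (p.2 * e.2))
      = ∑ p ∈ W.D x, p.1 ⊗ₜ[k] p.2 := by
    rw [← W.comul_mul_sum, mul_one, ← W.D_spec]
  have h2 := congrArg (LinearMap.rTensor H (LinearMap.mulRight k (W.tL y))) h1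
  simp only [map_sum, LinearMap.rTensor_tmul, LinearMap.mulRight_apply] at h2
  calc W.comul (x * W.tL y) = W.comul x * W.comul (W.tL y) := W.comul_mul x (W.tL y)
    _ = ∑ p ∈ W.D x, ∑ e ∈ W.D 1, (p.1 * (e.1 * W.tL y)) ⊗ₜ[k] (p.2 * e.2) := by
        rw [W.D_spec x, W.comul_tL' y, Finset.sum_mul_sum]
        simp only [Algebra.TensorProduct.tmul_mul_tmul]
    _ = ∑ p ∈ W.D x, ∑ e ∈ W.D 1, ((p.1 * e.1) * W.tL y) ⊗ₜ[k] (p.2 * e.2) := by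
        simp only [mul_assoc]
    _ = ∑ p ∈ W.D x, (p.1 * W.tL y) ⊗ₜ[k] p.2 := h2

lemma comul_tR_mul (y x : H) :
    W.comul (W.tR y * x) = ∑ p ∈ W.D x, p.1 ⊗ₜ[k] (W.tR y * p.2) := by
  have h1 : (∑ e ∈ W.D 1, ∑ p ∈ W.D x, (e.1 * p.1) ⊗ₜ[k] (e.2 * p.2))
      = ∑ p ∈ W.D x, p.1 ⊗ₜ[k] p.2 := by
    rw [← W.comul_mul_sum, one_mul, ← W.D_spec]
  have h2 := congrArg (LinearMap.lTensor H (LinearMap.mulLeft k (W.tR y))) h1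
  simp only [map_sum, LinearMap.lTensor_tmul, LinearMap.mulLeft_apply] at h2
  calc W.comul (W.tR y * x) = W.comul (W.tR y) * W.comul x := W.comul_mul (W.tR y) x
    _ = ∑ e ∈ W.D 1, ∑ p ∈ W.D x, (e.1 * p.1) ⊗ₜ[k] ((W.tR y * e.2) * p.2) := by
        rw [W.D_spec x, W.comul_tR' y, Finset.sum_mul_sum]
        simp only [Algebra.TensorProduct.tmul_mul_tmul]
    _ = ∑ e ∈ W.D 1, ∑ p ∈ W.D x, (e.1 * p.1) ⊗ₜ[k] (W.tR y * (e.2 * p.2)) := by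
        simp only [mul_assoc]
    _ = ∑ p ∈ W.D x, p.1 ⊗ₜ[k] (W.tR y * p.2) := h2

lemma mulS_tL (x y : H) :
    ∑ p ∈ W.D x, (p.1 * W.tL y) * W.antipode p.2 = W.tL (x * y) := by
  have h1 := W.comul_mul_tL x y
  rw [W.D_spec (x * W.tL y)] at h1
  have h2 := congrArg (LinearMap.mul' k H ∘ₗ TensorProduct.map LinearMap.id W.antipode) h1
  simp only [map_sum, LinearMap.coe_comp, Function.comp_apply, TensorProduct.map_tmul,
    LinearMap.mul'_apply, LinearMap.id_coe, id_eq] at h2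
  rw [W.sum_id_S] at h2
  rw [← h2]
  exact W.tL_mul_tL x y

lemma mulS_tR (y x : H) :
    ∑ p ∈ W.D x, W.antipode p.1 * (W.tR y * p.2) = W.tR (y * x) := by
  have h1 := W.comul_tR_mul y x
  rw [W.D_spec (W.tR y * x)] at h1
  have h2 := congrArg (LinearMap.mul' k H ∘ₗ TensorProduct.map W.antipode LinearMap.id) h1
  simp only [map_sum, LinearMap.coe_comp, Function.comp_apply, TensorProduct.map_tmul,
    LinearMap.mul'_apply, LinearMap.id_coe, id_eq] at h2
  rw [W.sum_S_id] at h2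
  rw [← h2]
  exact W.tR_mul_tR y x

lemma mu_rTensor_S (x : H) :
    LinearMap.mul' k H (LinearMap.rTensor H W.antipode (W.comul x))
      = ∑ q ∈ W.D x, W.antipode q.1 * q.2 := by
  conv_lhs => rw [W.D_spec x]
  rw [map_sum, map_sum]
  exact Finset.sum_congr rfl fun q _ => by
    rw [LinearMap.rTensor_tmul, LinearMap.mul'_apply]

lemma conv_sum (y : H) :
    ∑ p ∈ W.D y, (∑ q ∈ W.D p.1, W.antipode q.1 * q.2) * W.antipode p.2
      = W.antipode y := by
  have h := W.antipode_conv y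
  rw [W.D_spec y] at h
  rw [map_sum, map_sum] at h
  refine Eq.trans ?_ h
  refine Finset.sum_congr rfl fun p _ => ?_
  rw [TensorProduct.map_tmul, LinearMap.mul'_apply, LinearMap.coe_comp, LinearMap.coe_comp,
    Function.comp_apply, Function.comp_apply, W.mu_rTensor_S]

lemma S_eq_tR_S (y : H) :
    W.antipode y = ∑ p ∈ W.D y, W.tR p.1 * W.antipode p.2 := by
  rw [← W.conv_sum y]
  exact Finset.sum_congr rfl fun p _ => by rw [W.sum_S_id]

lemma S_eq_S_tL (y : H) :
    W.antipode y = ∑ p ∈ W.D y, W.antipode p.1 * W.tL p.2 := by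
  have h1 : W.antipode y = ∑ p ∈ W.D y, ∑ q ∈ W.D p.1,
      W.antipode q.1 * (LinearMap.id (R := k) (M := H) q.2 * W.antipode p.2) := by
    rw [← W.conv_sum y]
    refine Finset.sum_congr rfl fun p _ => ?_
    rw [Finset.sum_mul]
    exact Finset.sum_congr rfl fun q _ => by
      rw [LinearMap.id_coe, id_eq, mul_assoc]
  rw [h1, ← W.coas3 W.antipode LinearMap.id W.antipode y]
  refine Finset.sum_congr rfl fun p _ => ?_
  rw [← W.sum_id_S p.2, Finset.mul_sum]
  exact Finset.sum_congr rfl fun q _ => by rw [LinearMap.id_coe, id_eq]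

lemma tL_one : W.tL 1 = 1 := by
  have h := W.sum_counit_l 1
  rw [tL]
  refine Eq.trans ?_ h
  exact Finset.sum_congr rfl fun e _ => by rw [mul_one]

lemma tR_one : W.tR 1 = 1 := by
  have h := W.sum_counit_r 1
  rw [tR]
  refine Eq.trans ?_ h
  exact Finset.sum_congr rfl fun e _ => by rw [one_mul]

lemma S_one : W.antipode 1 = 1 := by
  have h1 : W.antipode 1 = ∑ p ∈ W.D 1, ∑ q ∈ W.D p.1,
      W.antipode q.1 * (q.2 * W.antipode p.2) := by
    rw [← W.conv_sum 1]
    refine Finset.sum_congr rfl fun p _ => ?_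
    rw [Finset.sum_mul]
    exact Finset.sum_congr rfl fun q _ => mul_assoc _ _ _
  have h2 : (∑ p ∈ W.D 1, ∑ q ∈ W.D p.1, W.antipode q.1 * (q.2 * W.antipode p.2))
      = tri W.antipode LinearMap.id W.antipode
          ((TensorProduct.assoc k H H H) (LinearMap.rTensor H W.comul (W.comul 1))) := by
    rw [W.assoc_rTensor_comul_sum 1, map_sum]
    refine Finset.sum_congr rfl fun p _ => ?_
    rw [map_sum]
    exact Finset.sum_congr rfl fun q _ => by rw [tri_tmul, LinearMap.id_coe, id_eq]
  have h3 : tri W.antipode LinearMap.id W.antipode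
      ((TensorProduct.assoc k H H H) (LinearMap.rTensor H W.comul (W.comul 1)))
      = ∑ p ∈ W.D 1, ∑ q ∈ W.D 1, W.antipode p.1 * ((p.2 * q.1) * W.antipode q.2) := by
    rw [W.coassoc 1, W.star_a, map_sum]
    refine Finset.sum_congr rfl fun p _ => ?_
    rw [map_sum]
    exact Finset.sum_congr rfl fun q _ => by rw [tri_tmul, LinearMap.id_coe, id_eq]
  have h4 : (∑ p ∈ W.D 1, ∑ q ∈ W.D 1, W.antipode p.1 * ((p.2 * q.1) * W.antipode q.2))
      = ∑ p ∈ W.D 1, W.antipode p.1 * p.2 := by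
    refine Finset.sum_congr rfl fun p _ => ?_
    have : ∀ q : H × H, W.antipode p.1 * ((p.2 * q.1) * W.antipode q.2)
        = W.antipode p.1 * (p.2 * (q.1 * W.antipode q.2)) := by
      intro q; rw [mul_assoc]
    rw [Finset.sum_congr rfl fun q _ => this q, ← Finset.mul_sum, ← Finset.mul_sum,
      W.sum_id_S 1, W.tL_one, mul_one]
  rw [h1, h2, h3, h4, W.sum_S_id 1, W.tR_one]

lemma nm_eq (a b : H) :
    ∑ s ∈ W.D b, ∑ r ∈ W.D a, W.antipode s.1 * (W.antipode r.1 * (r.2 * s.2))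
      = W.tR (a * b) := by
  refine Eq.trans ?_ (W.mulS_tR a b)
  refine Finset.sum_congr rfl fun s _ => ?_
  rw [← W.sum_S_id a, Finset.sum_mul, Finset.mul_sum]
  refine Finset.sum_congr rfl fun r _ => ?_
  rw [mul_assoc]

lemma pm_eq (a b : H) :
    ∑ r ∈ W.D a, ∑ s ∈ W.D b, W.antipode (r.1 * s.1) * (r.2 * s.2)
      = W.tR (a * b) := by
  have h1 := (W.comul_mul_sum a b).symm.trans (W.D_spec (a * b))
  have h2 := congrArg (LinearMap.mul' k H ∘ₗ TensorProduct.map W.antipode LinearMap.id) h1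
  simp only [map_sum, LinearMap.coe_comp, Function.comp_apply, TensorProduct.map_tmul,
    LinearMap.mul'_apply, LinearMap.id_coe, id_eq] at h2
  rw [h2, W.sum_S_id]

lemma mn_eq (a b : H) :
    ∑ r ∈ W.D a, ∑ s ∈ W.D b, (r.1 * s.1) * (W.antipode s.2 * W.antipode r.2)
      = W.tL (a * b) := by
  refine Eq.trans ?_ (W.mulS_tL a b)
  refine Finset.sum_congr rfl fun r _ => ?_
  rw [← W.sum_id_S b, Finset.mul_sum, Finset.sum_mul]
  refine Finset.sum_congr rfl fun s _ => ?_
  simp only [mul_assoc]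

noncomputable def tLmap : H →ₗ[k] H :=
  ∑ e ∈ W.D 1, LinearMap.smulRight (W.counit ∘ₗ LinearMap.mulLeft k e.1) e.2

lemma tLmap_apply (y : H) : W.tLmap y = W.tL y := by
  rw [tLmap, tL, LinearMap.sum_apply]
  exact Finset.sum_congr rfl fun e _ => by
    rw [LinearMap.smulRight_apply, LinearMap.coe_comp, Function.comp_apply,
      LinearMap.mulLeft_apply]

lemma S_mul (x y : H) :
    W.antipode (x * y) = W.antipode y * W.antipode x := by
  have hco_y : ∀ (X Y : H),
      (∑ q ∈ W.D y, ∑ s ∈ W.D q.2, W.antipode q.1 * ((X * s.1) * (W.antipode s.2 * Y)))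
        = ∑ q ∈ W.D y, ∑ s ∈ W.D q.1, W.antipode s.1 * ((X * s.2) * (W.antipode q.2 * Y)) := by
    intro X Y
    have h := W.coas3 W.antipode (LinearMap.mulLeft k X)
      (LinearMap.mulRight k Y ∘ₗ W.antipode) y
    simpa using h
  have hco_x : ∀ (u v w : H),
      (∑ p ∈ W.D x, ∑ r ∈ W.D p.2, W.antipode (p.1 * u) * ((r.1 * v) * (w * W.antipode r.2)))
        = ∑ p ∈ W.D x, ∑ r ∈ W.D p.1,
            W.antipode (r.1 * u) * ((r.2 * v) * (w * W.antipode p.2)) := by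
    intro u v w
    have h := W.coas3 (W.antipode ∘ₗ LinearMap.mulRight k u) (LinearMap.mulRight k v)
      (LinearMap.mulLeft k w ∘ₗ W.antipode) x
    simpa using h
  have hco_y2 : ∀ (u v w : H),
      (∑ q ∈ W.D y, ∑ s ∈ W.D q.2, W.antipode (u * q.1) * ((v * s.1) * (W.antipode s.2 * w)))
        = ∑ q ∈ W.D y, ∑ s ∈ W.D q.1,
            W.antipode (u * s.1) * ((v * s.2) * (W.antipode q.2 * w)) := by
    intro u v w
    have h := W.coas3 (W.antipode ∘ₗ LinearMap.mulLeft k u) (LinearMap.mulLeft k v)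
      (LinearMap.mulRight k w ∘ₗ W.antipode) y
    simpa using h
  symm
  calc W.antipode y * W.antipode x
      = ∑ q ∈ W.D y, ∑ p ∈ W.D x,
          (W.antipode q.1 * W.tL q.2) * (W.tR p.1 * W.antipode p.2) := by
        rw [W.S_eq_S_tL y, W.S_eq_tR_S x, Finset.sum_mul_sum]
    _ = ∑ q ∈ W.D y, ∑ p ∈ W.D x,
          W.antipode q.1 * (W.tR p.1 * (W.tL q.2 * W.antipode p.2)) := by
        refine Finset.sum_congr rfl fun q _ => Finset.sum_congr rfl fun p _ => ?_
        rw [mul_assoc, ← mul_assoc (W.tL q.2), ← W.tR_tL_comm, mul_assoc]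
    _ = ∑ q ∈ W.D y, ∑ p ∈ W.D x, ∑ r ∈ W.D p.1, ∑ s ∈ W.D q.2,
          W.antipode q.1 * ((W.antipode r.1 * r.2) * ((s.1 * W.antipode s.2) * W.antipode p.2)) := by
        refine Finset.sum_congr rfl fun q _ => Finset.sum_congr rfl fun p _ => ?_
        rw [← W.sum_S_id p.1, ← W.sum_id_S q.2]
        simp only [Finset.mul_sum, Finset.sum_mul, mul_assoc]
        exact Finset.sum_comm
    _ = ∑ p ∈ W.D x, ∑ r ∈ W.D p.1, ∑ q ∈ W.D y, ∑ s ∈ W.D q.2,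
          W.antipode q.1 * ((W.antipode r.1 * r.2) * ((s.1 * W.antipode s.2) * W.antipode p.2)) := by
        rw [Finset.sum_comm]
        exact Finset.sum_congr rfl fun p _ => Finset.sum_comm
    _ = ∑ p ∈ W.D x, ∑ r ∈ W.D p.1, ∑ q ∈ W.D y, ∑ s ∈ W.D q.2,
          W.antipode q.1 * (((W.antipode r.1 * r.2) * s.1) * (W.antipode s.2 * W.antipode p.2)) := by
        refine Finset.sum_congr rfl fun p _ => Finset.sum_congr rfl fun r _ =>
          Finset.sum_congr rfl fun q _ => Finset.sum_congr rfl fun s _ => ?_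
        simp only [mul_assoc]
    _ = ∑ p ∈ W.D x, ∑ r ∈ W.D p.1, ∑ q ∈ W.D y, ∑ s ∈ W.D q.1,
          W.antipode s.1 * (((W.antipode r.1 * r.2) * s.2) * (W.antipode q.2 * W.antipode p.2)) := by
        refine Finset.sum_congr rfl fun p _ => Finset.sum_congr rfl fun r _ => ?_
        exact hco_y (W.antipode r.1 * r.2) (W.antipode p.2)
    _ = ∑ p ∈ W.D x, ∑ q ∈ W.D y, ∑ s ∈ W.D q.1, ∑ r ∈ W.D p.1,
          W.antipode s.1 * (((W.antipode r.1 * r.2) * s.2) * (W.antipode q.2 * W.antipode p.2)) := by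
        refine Eq.trans (Finset.sum_congr rfl fun p _ => Finset.sum_comm) ?_
        exact Finset.sum_congr rfl fun p _ => Finset.sum_congr rfl fun q _ => Finset.sum_comm
    _ = ∑ p ∈ W.D x, ∑ q ∈ W.D y,
          (∑ s ∈ W.D q.1, ∑ r ∈ W.D p.1,
            W.antipode s.1 * (W.antipode r.1 * (r.2 * s.2))) * (W.antipode q.2 * W.antipode p.2) := by
        refine Finset.sum_congr rfl fun p _ => Finset.sum_congr rfl fun q _ => ?_
        rw [Finset.sum_mul]
        refine Finset.sum_congr rfl fun s _ => ?_
        rw [Finset.sum_mul]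
        refine Finset.sum_congr rfl fun r _ => ?_
        simp only [mul_assoc]
    _ = ∑ p ∈ W.D x, ∑ q ∈ W.D y,
          (∑ r ∈ W.D p.1, ∑ s ∈ W.D q.1,
            W.antipode (r.1 * s.1) * (r.2 * s.2)) * (W.antipode q.2 * W.antipode p.2) := by
        refine Finset.sum_congr rfl fun p _ => Finset.sum_congr rfl fun q _ => ?_
        rw [W.nm_eq p.1 q.1, W.pm_eq p.1 q.1]
    _ = ∑ p ∈ W.D x, ∑ q ∈ W.D y, ∑ r ∈ W.D p.1, ∑ s ∈ W.D q.1,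
          W.antipode (r.1 * s.1) * ((r.2 * s.2) * (W.antipode q.2 * W.antipode p.2)) := by
        refine Finset.sum_congr rfl fun p _ => Finset.sum_congr rfl fun q _ => ?_
        rw [Finset.sum_mul]
        refine Finset.sum_congr rfl fun r _ => ?_
        rw [Finset.sum_mul]
        refine Finset.sum_congr rfl fun s _ => ?_
        rw [mul_assoc]
    _ = ∑ q ∈ W.D y, ∑ s ∈ W.D q.1, ∑ p ∈ W.D x, ∑ r ∈ W.D p.1,
          W.antipode (r.1 * s.1) * ((r.2 * s.2) * (W.antipode q.2 * W.antipode p.2)) := by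
        refine Eq.trans Finset.sum_comm ?_
        refine Finset.sum_congr rfl fun q _ => ?_
        refine Eq.trans (Finset.sum_congr rfl fun p _ => Finset.sum_comm) Finset.sum_comm
    _ = ∑ q ∈ W.D y, ∑ s ∈ W.D q.1, ∑ p ∈ W.D x, ∑ r ∈ W.D p.2,
          W.antipode (p.1 * s.1) * ((r.1 * s.2) * (W.antipode q.2 * W.antipode r.2)) := by
        refine Finset.sum_congr rfl fun q _ => Finset.sum_congr rfl fun s _ => ?_
        exact (hco_x s.1 s.2 (W.antipode q.2)).symm
    _ = ∑ p ∈ W.D x, ∑ r ∈ W.D p.2, ∑ q ∈ W.D y, ∑ s ∈ W.D q.1,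
          W.antipode (p.1 * s.1) * ((r.1 * s.2) * (W.antipode q.2 * W.antipode r.2)) := by
        refine Eq.trans (Finset.sum_congr rfl fun q _ => Finset.sum_comm) ?_
        refine Eq.trans (Finset.sum_congr rfl fun q _ =>
          Finset.sum_congr rfl fun p _ => Finset.sum_comm) ?_
        refine Eq.trans Finset.sum_comm ?_
        exact Finset.sum_congr rfl fun p _ => Finset.sum_comm
    _ = ∑ p ∈ W.D x, ∑ r ∈ W.D p.2, ∑ q ∈ W.D y, ∑ s ∈ W.D q.2,
          W.antipode (p.1 * q.1) * ((r.1 * s.1) * (W.antipode s.2 * W.antipode r.2)) := by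
        refine Finset.sum_congr rfl fun p _ => Finset.sum_congr rfl fun r _ => ?_
        exact (hco_y2 p.1 r.1 (W.antipode r.2)).symm
    _ = ∑ p ∈ W.D x, ∑ q ∈ W.D y, ∑ r ∈ W.D p.2, ∑ s ∈ W.D q.2,
          W.antipode (p.1 * q.1) * ((r.1 * s.1) * (W.antipode s.2 * W.antipode r.2)) := by
        exact Finset.sum_congr rfl fun p _ => Finset.sum_comm
    _ = ∑ p ∈ W.D x, ∑ q ∈ W.D y, W.antipode (p.1 * q.1) * W.tLmap (p.2 * q.2) := by
        refine Finset.sum_congr rfl fun p _ => Finset.sum_congr rfl fun q _ => ?_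
        rw [W.tLmap_apply, ← W.mn_eq p.2 q.2, Finset.mul_sum]
        refine Finset.sum_congr rfl fun r _ => ?_
        rw [Finset.mul_sum]
    _ = W.antipode (x * y) := by
        have h1 := (W.comul_mul_sum x y).symm.trans (W.D_spec (x * y))
        have h2 := congrArg (LinearMap.mul' k H ∘ₗ TensorProduct.map W.antipode W.tLmap) h1
        simp only [map_sum, LinearMap.coe_comp, Function.comp_apply, TensorProduct.map_tmul,
          LinearMap.mul'_apply] at h2
        rw [h2]
        refine Eq.trans (Finset.sum_congr rfl fun u _ => by rw [W.tLmap_apply])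
          (W.S_eq_S_tL (x * y)).symm

lemma counit_S (x : H) :
    ∑ e ∈ W.D 1, W.counit (x * e.1) • W.antipode e.2 = W.tR x := by
  set ζ : H ⊗[k] (H ⊗[k] H) →ₗ[k] H :=
    (TensorProduct.lid k H).toLinearMap ∘ₗ
      LinearMap.rTensor H (W.counit ∘ₗ LinearMap.mulLeft k x) ∘ₗ
      LinearMap.lTensor H (LinearMap.mul' k H ∘ₗ TensorProduct.map W.antipode LinearMap.id)
    with hζ
  have hz : ∀ a b c : H, ζ (a ⊗ₜ[k] (b ⊗ₜ[k] c)) = W.counit (x * a) • (W.antipode b * c) := by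
    intro a b c; simp [hζ]
  have A1 : ζ (LinearMap.lTensor H W.comul (W.comul 1))
      = ∑ p ∈ W.D 1, W.counit (x * p.1) • W.tR p.2 := by
    rw [W.lTensor_mid 1, map_sum]
    refine Finset.sum_congr rfl fun p _ => ?_
    rw [W.D_spec p.2, tmul_sum, map_sum, ← W.sum_S_id p.2, Finset.smul_sum]
    exact Finset.sum_congr rfl fun q _ => hz _ _ _
  have A2 : ζ (LinearMap.lTensor H W.comul (W.comul 1))
      = ∑ e ∈ W.D 1, W.counit (x * e.1) • W.antipode e.2 := by
    rw [W.star_b, map_sum]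
    refine Finset.sum_congr rfl fun e _ => ?_
    rw [map_sum]
    have he : ∀ f : H × H, ζ (e.1 ⊗ₜ[k] ((f.1 * e.2) ⊗ₜ[k] f.2))
        = W.counit (x * e.1) • (W.antipode e.2 * (W.antipode f.1 * f.2)) := by
      intro f; rw [hz, W.S_mul, mul_assoc]
    rw [Finset.sum_congr rfl fun f _ => he f, ← Finset.smul_sum, ← Finset.mul_sum,
      W.sum_S_id 1, W.tR_one, mul_one]
  rw [← A2, A1]
  calc ∑ p ∈ W.D 1, W.counit (x * p.1) • W.tR p.2
      = ∑ p ∈ W.D 1, ∑ f ∈ W.D 1, (W.counit (x * p.1) * W.counit (p.2 * f.2)) • f.1 := by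
        refine Finset.sum_congr rfl fun p _ => ?_
        rw [tR, Finset.smul_sum]
        exact Finset.sum_congr rfl fun f _ => by rw [smul_smul]
    _ = ∑ f ∈ W.D 1, W.counit (x * f.2) • f.1 := by
        rw [Finset.sum_comm]
        refine Finset.sum_congr rfl fun f _ => ?_
        rw [← Finset.sum_smul, ← W.counit_mul_l]
    _ = W.tR x := by rw [tR]

lemma counit_S' (x : H) :
    ∑ e ∈ W.D 1, W.counit (e.2 * x) • W.antipode e.1 = W.tL x := by
  set ζ : H ⊗[k] (H ⊗[k] H) →ₗ[k] H :=
    (TensorProduct.rid k H).toLinearMap ∘ₗ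
      LinearMap.lTensor H (W.counit ∘ₗ LinearMap.mulRight k x) ∘ₗ
      LinearMap.rTensor H (LinearMap.mul' k H ∘ₗ TensorProduct.map LinearMap.id W.antipode) ∘ₗ
      (TensorProduct.assoc k H H H).symm.toLinearMap
    with hζ
  have hz : ∀ a b c : H, ζ (a ⊗ₜ[k] (b ⊗ₜ[k] c)) = W.counit (c * x) • (a * W.antipode b) := by
    intro a b c; simp [hζ]
  have A1 : ζ (LinearMap.lTensor H W.comul (W.comul 1))
      = ∑ p ∈ W.D 1, W.counit (p.2 * x) • W.tL p.1 := by
    rw [← W.coassoc 1, W.assoc_rTensor_comul_sum 1, map_sum]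
    refine Finset.sum_congr rfl fun p _ => ?_
    rw [map_sum, ← W.sum_id_S p.1, Finset.smul_sum]
    exact Finset.sum_congr rfl fun q _ => hz _ _ _
  have A2 : ζ (LinearMap.lTensor H W.comul (W.comul 1))
      = ∑ e ∈ W.D 1, W.counit (e.2 * x) • W.antipode e.1 := by
    rw [W.star_b, map_sum]
    have hstep : (∑ p ∈ W.D 1, ζ (∑ q ∈ W.D 1, p.1 ⊗ₜ[k] ((q.1 * p.2) ⊗ₜ[k] q.2)))
        = ∑ q ∈ W.D 1, ∑ p ∈ W.D 1, ζ (p.1 ⊗ₜ[k] ((q.1 * p.2) ⊗ₜ[k] q.2)) :=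
      Eq.trans (Finset.sum_congr rfl fun p _ => map_sum ζ _ _) Finset.sum_comm
    rw [hstep]
    refine Finset.sum_congr rfl fun e _ => ?_
    have he : ∀ f : H × H, ζ (f.1 ⊗ₜ[k] ((e.1 * f.2) ⊗ₜ[k] e.2))
        = W.counit (e.2 * x) • ((f.1 * W.antipode f.2) * W.antipode e.1) := by
      intro f; rw [hz, W.S_mul, ← mul_assoc]
    rw [Finset.sum_congr rfl fun f _ => he f, ← Finset.smul_sum, ← Finset.sum_mul,
      W.sum_id_S 1, W.tL_one, one_mul]
  rw [← A2, A1]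
  calc ∑ p ∈ W.D 1, W.counit (p.2 * x) • W.tL p.1
      = ∑ p ∈ W.D 1, ∑ f ∈ W.D 1, (W.counit (f.1 * p.1) * W.counit (p.2 * x)) • f.2 := by
        refine Finset.sum_congr rfl fun p _ => ?_
        rw [tL, Finset.smul_sum]
        exact Finset.sum_congr rfl fun f _ => by rw [smul_smul, mul_comm]
    _ = ∑ f ∈ W.D 1, W.counit (f.1 * x) • f.2 := by
        rw [Finset.sum_comm]
        refine Finset.sum_congr rfl fun f _ => ?_
        rw [← Finset.sum_smul, ← W.counit_mul_l]
    _ = W.tL x := by rw [tL]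

lemma S_injective (T : H →ₗ[k] H) (hT1 : ∀ h : H, T (W.antipode h) = h) :
    Function.Injective W.antipode := by
  intro a b hab
  rw [← hT1 a, ← hT1 b, hab]

lemma final_A (T : H →ₗ[k] H) (hT1 : ∀ h : H, T (W.antipode h) = h)
    (hT2 : ∀ h : H, W.antipode (T h) = h) (h : H) :
    ∑ p ∈ W.D h, T p.2 * p.1 = ∑ e ∈ W.D 1, W.counit (h * e.1) • e.2 := by
  apply W.S_injective T hT1
  rw [map_sum, map_sum]
  calc ∑ p ∈ W.D h, W.antipode (T p.2 * p.1)
      = ∑ p ∈ W.D h, W.antipode p.1 * p.2 := by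
        refine Finset.sum_congr rfl fun p _ => ?_
        rw [W.S_mul, hT2]
    _ = W.tR h := W.sum_S_id h
    _ = ∑ e ∈ W.D 1, W.antipode (W.counit (h * e.1) • e.2) := by
        rw [← W.counit_S h]
        exact Finset.sum_congr rfl fun e _ => by rw [map_smul]
lemma final_B (T : H →ₗ[k] H) (hT1 : ∀ h : H, T (W.antipode h) = h)
    (hT2 : ∀ h : H, W.antipode (T h) = h) (h : H) :
    ∑ p ∈ W.D h, p.2 * T p.1 = ∑ e ∈ W.D 1, W.counit (e.2 * h) • e.1 := by
  apply W.S_injective T hT1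
  rw [map_sum, map_sum]
  calc ∑ p ∈ W.D h, W.antipode (p.2 * T p.1)
      = ∑ p ∈ W.D h, p.1 * W.antipode p.2 := by
        refine Finset.sum_congr rfl fun p _ => ?_
        rw [W.S_mul, hT2]
    _ = W.tL h := W.sum_id_S h
    _ = ∑ e ∈ W.D 1, W.antipode (W.counit (e.2 * h) • e.1) := by
        rw [← W.counit_S' h]
        exact Finset.sum_congr rfl fun e _ => by rw [map_smul]

lemma final_conv (T : H →ₗ[k] H) (hT1 : ∀ h : H, T (W.antipode h) = h)
    (hT2 : ∀ h : H, W.antipode (T h) = h) (h : H) :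
    ∑ p ∈ W.D h, ∑ q ∈ W.D p.1, T p.2 * (q.2 * T q.1) = T h := by
  apply W.S_injective T hT1
  rw [map_sum]
  calc ∑ p ∈ W.D h, W.antipode (∑ q ∈ W.D p.1, T p.2 * (q.2 * T q.1))
      = ∑ p ∈ W.D h, W.tL p.1 * p.2 := by
        refine Finset.sum_congr rfl fun p _ => ?_
        rw [map_sum, ← W.sum_id_S p.1, Finset.sum_mul]
        refine Finset.sum_congr rfl fun q _ => ?_
        rw [W.S_mul, W.S_mul, hT2, hT2, mul_assoc]
    _ = h := W.sum_tL_mul h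
    _ = W.antipode (T h) := (hT2 h).symm

/-! ### Transport to the opposite algebra -/

noncomputable def oL : H →ₗ[k] Hᵐᵒᵖ := (MulOpposite.opLinearEquiv k : H ≃ₗ[k] Hᵐᵒᵖ).toLinearMap

@[simp] lemma oL_apply (a : H) : (oL : H →ₗ[k] Hᵐᵒᵖ) a = MulOpposite.op a := rfl

noncomputable def comul' : Hᵐᵒᵖ →ₗ[k] Hᵐᵒᵖ ⊗[k] Hᵐᵒᵖ :=
  (TensorProduct.map oL oL) ∘ₗ W.comul ∘ₗ
    ((MulOpposite.opLinearEquiv k : H ≃ₗ[k] Hᵐᵒᵖ).symm.toLinearMap)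

noncomputable def counit' : Hᵐᵒᵖ →ₗ[k] k :=
  W.counit ∘ₗ ((MulOpposite.opLinearEquiv k : H ≃ₗ[k] Hᵐᵒᵖ).symm.toLinearMap)

noncomputable def antipode' (T : H →ₗ[k] H) : Hᵐᵒᵖ →ₗ[k] Hᵐᵒᵖ :=
  oL ∘ₗ T ∘ₗ ((MulOpposite.opLinearEquiv k : H ≃ₗ[k] Hᵐᵒᵖ).symm.toLinearMap)

@[simp] lemma counit'_op (a : H) : W.counit' (MulOpposite.op a) = W.counit a := rfl

@[simp] lemma antipode'_op (T : H →ₗ[k] H) (a : H) :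
    antipode' T (MulOpposite.op a) = MulOpposite.op (T a) := rfl

lemma comul'_op (a : H) :
    W.comul' (MulOpposite.op a)
      = ∑ p ∈ W.D a, MulOpposite.op p.1 ⊗ₜ[k] MulOpposite.op p.2 := by
  show (TensorProduct.map oL oL) (W.comul a) = _
  rw [W.D_spec a, map_sum]
  exact Finset.sum_congr rfl fun p _ => by rw [TensorProduct.map_tmul, oL_apply, oL_apply]

lemma comul'_one :
    W.comul' 1 = ∑ p ∈ W.D 1, MulOpposite.op p.1 ⊗ₜ[k] MulOpposite.op p.2 := by
  rw [← MulOpposite.op_one, comul'_op]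

noncomputable def Psi : H ⊗[k] (H ⊗[k] H) →ₗ[k] Hᵐᵒᵖ ⊗[k] (Hᵐᵒᵖ ⊗[k] Hᵐᵒᵖ) :=
  TensorProduct.map oL (TensorProduct.map oL oL)

@[simp] lemma Psi_tmul (a b c : H) :
    (Psi : H ⊗[k] (H ⊗[k] H) →ₗ[k] _) (a ⊗ₜ[k] (b ⊗ₜ[k] c))
      = MulOpposite.op a ⊗ₜ[k] (MulOpposite.op b ⊗ₜ[k] MulOpposite.op c) := by
  simp [Psi]

set_option synthInstance.maxHeartbeats 1000000 in
set_option maxHeartbeats 1000000 in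
lemma opp_coassoc (h : Hᵐᵒᵖ) :
    (TensorProduct.assoc k Hᵐᵒᵖ Hᵐᵒᵖ Hᵐᵒᵖ)
        ((LinearMap.rTensor Hᵐᵒᵖ W.comul') (W.comul' h)) =
      (LinearMap.lTensor Hᵐᵒᵖ W.comul') (W.comul' h) := by
  rw [← MulOpposite.op_unop h]
  set a := MulOpposite.unop h with ha
  have hL : (TensorProduct.assoc k Hᵐᵒᵖ Hᵐᵒᵖ Hᵐᵒᵖ)
      ((LinearMap.rTensor Hᵐᵒᵖ W.comul') (W.comul' (MulOpposite.op a)))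
      = ∑ p ∈ W.D a, ∑ q ∈ W.D p.1,
          MulOpposite.op q.1 ⊗ₜ[k] (MulOpposite.op q.2 ⊗ₜ[k] MulOpposite.op p.2) := by
    rw [W.comul'_op a, map_sum, map_sum]
    refine Finset.sum_congr rfl fun p _ => ?_
    rw [LinearMap.rTensor_tmul, W.comul'_op p.1, sum_tmul, map_sum]
    exact Finset.sum_congr rfl fun q _ => by rw [assoc_tmul]
  have hR : (LinearMap.lTensor Hᵐᵒᵖ W.comul') (W.comul' (MulOpposite.op a))
      = ∑ p ∈ W.D a, ∑ q ∈ W.D p.2,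
          MulOpposite.op p.1 ⊗ₜ[k] (MulOpposite.op q.1 ⊗ₜ[k] MulOpposite.op q.2) := by
    rw [W.comul'_op a, map_sum]
    refine Finset.sum_congr rfl fun p _ => ?_
    rw [LinearMap.lTensor_tmul, W.comul'_op p.2, tmul_sum]
  rw [hL, hR]
  have h1 := congrArg (Psi (k := k) (H := H)) (W.coassoc a)
  rw [W.assoc_rTensor_comul_sum a, W.lTensor_comul_sum a] at h1
  simpa only [map_sum, Psi_tmul] using h1

lemma opp_counit_lid (h : Hᵐᵒᵖ) :
    (TensorProduct.lid k Hᵐᵒᵖ) ((LinearMap.rTensor Hᵐᵒᵖ W.counit') (W.comul' h)) = h := by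
  rw [← MulOpposite.op_unop h]
  set a := MulOpposite.unop h with ha
  rw [W.comul'_op a, map_sum, map_sum]
  have hterm : ∀ p : H × H,
      (TensorProduct.lid k Hᵐᵒᵖ) ((LinearMap.rTensor Hᵐᵒᵖ W.counit')
        (MulOpposite.op p.1 ⊗ₜ[k] MulOpposite.op p.2))
        = (oL : H →ₗ[k] Hᵐᵒᵖ) (W.counit p.1 • p.2) := by
    intro p
    rw [LinearMap.rTensor_tmul, lid_tmul, map_smul, oL_apply, counit'_op]
  rw [Finset.sum_congr rfl fun p _ => hterm p, ← map_sum, W.sum_counit_l, oL_apply]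

lemma opp_counit_rid (h : Hᵐᵒᵖ) :
    (TensorProduct.rid k Hᵐᵒᵖ) ((LinearMap.lTensor Hᵐᵒᵖ W.counit') (W.comul' h)) = h := by
  rw [← MulOpposite.op_unop h]
  set a := MulOpposite.unop h with ha
  rw [W.comul'_op a, map_sum, map_sum]
  have hterm : ∀ p : H × H,
      (TensorProduct.rid k Hᵐᵒᵖ) ((LinearMap.lTensor Hᵐᵒᵖ W.counit')
        (MulOpposite.op p.1 ⊗ₜ[k] MulOpposite.op p.2))
        = (oL : H →ₗ[k] Hᵐᵒᵖ) (W.counit p.2 • p.1) := by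
    intro p
    rw [LinearMap.lTensor_tmul, rid_tmul, map_smul, oL_apply, counit'_op]
  rw [Finset.sum_congr rfl fun p _ => hterm p, ← map_sum, W.sum_counit_r, oL_apply]

lemma opp_comul_mul (A B : Hᵐᵒᵖ) :
    W.comul' (A * B) = W.comul' A * W.comul' B := by
  rw [← MulOpposite.op_unop A, ← MulOpposite.op_unop B]
  set a := MulOpposite.unop A
  set b := MulOpposite.unop B
  have hop : MulOpposite.op a * MulOpposite.op b = MulOpposite.op (b * a) :=
    (MulOpposite.op_mul b a).symm
  rw [hop]
  have h1 : W.comul' (MulOpposite.op (b * a))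
      = ∑ p ∈ W.D b, ∑ q ∈ W.D a,
          MulOpposite.op (p.1 * q.1) ⊗ₜ[k] MulOpposite.op (p.2 * q.2) := by
    show (TensorProduct.map oL oL) (W.comul (b * a)) = _
    rw [W.comul_mul_sum b a, map_sum]
    refine Finset.sum_congr rfl fun p _ => ?_
    rw [map_sum]
    exact Finset.sum_congr rfl fun q _ => by rw [TensorProduct.map_tmul, oL_apply, oL_apply]
  rw [h1, W.comul'_op a, W.comul'_op b, Finset.sum_mul_sum, Finset.sum_comm]
  refine Finset.sum_congr rfl fun p _ => Finset.sum_congr rfl fun q _ => ?_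
  rw [Algebra.TensorProduct.tmul_mul_tmul, ← MulOpposite.op_mul, ← MulOpposite.op_mul]

lemma counit3_l (f g h : H) :
    W.counit (f * g * h) = ∑ p ∈ W.D g, W.counit (f * p.1) * W.counit (p.2 * h) := by
  have h0 := W.weak_counit_left f g h
  rw [W.D_spec g] at h0
  simpa only [map_sum, TensorProduct.map_tmul, LinearMap.coe_comp, Function.comp_apply,
    LinearMap.mulLeft_apply, LinearMap.mulRight_apply, LinearMap.mul'_apply,
    smul_eq_mul] using h0

lemma counit3_r (f g h : H) :
    W.counit (f * g * h) = ∑ p ∈ W.D g, W.counit (f * p.2) * W.counit (p.1 * h) := by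
  have h0 := W.weak_counit_right f g h
  rw [W.D_spec g, map_sum] at h0
  simpa only [map_sum, comm_tmul, TensorProduct.map_tmul, LinearMap.coe_comp,
    Function.comp_apply, LinearMap.mulLeft_apply, LinearMap.mulRight_apply,
    LinearMap.mul'_apply, smul_eq_mul] using h0

set_option synthInstance.maxHeartbeats 1000000 in
set_option maxHeartbeats 1000000 in
lemma opp_weak_left :
    (LinearMap.lTensor Hᵐᵒᵖ W.comul') (W.comul' 1) =
      (TensorProduct.assoc k Hᵐᵒᵖ Hᵐᵒᵖ Hᵐᵒᵖ) (W.comul' 1 ⊗ₜ[k] (1 : Hᵐᵒᵖ)) *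
        ((1 : Hᵐᵒᵖ) ⊗ₜ[k] W.comul' 1) := by
  have key : (∑ p ∈ W.D 1, ∑ q ∈ W.D p.2,
        MulOpposite.op p.1 ⊗ₜ[k] (MulOpposite.op q.1 ⊗ₜ[k] MulOpposite.op q.2))
      = ∑ p ∈ W.D 1, ∑ q ∈ W.D 1,
        MulOpposite.op p.1 ⊗ₜ[k] (MulOpposite.op (q.1 * p.2) ⊗ₜ[k] MulOpposite.op q.2) := by
    have h1 := congrArg (Psi (k := k) (H := H)) ((W.lTensor_comul_sum 1).symm.trans W.star_b)
    simpa only [map_sum, Psi_tmul] using h1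
  have hL : (LinearMap.lTensor Hᵐᵒᵖ W.comul') (W.comul' 1)
      = ∑ p ∈ W.D 1, ∑ q ∈ W.D p.2,
          MulOpposite.op p.1 ⊗ₜ[k] (MulOpposite.op q.1 ⊗ₜ[k] MulOpposite.op q.2) := by
    rw [W.comul'_one, map_sum]
    refine Finset.sum_congr rfl fun p _ => ?_
    rw [LinearMap.lTensor_tmul, W.comul'_op p.2, tmul_sum]
  have hR : (TensorProduct.assoc k Hᵐᵒᵖ Hᵐᵒᵖ Hᵐᵒᵖ) (W.comul' 1 ⊗ₜ[k] (1 : Hᵐᵒᵖ)) *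
        ((1 : Hᵐᵒᵖ) ⊗ₜ[k] W.comul' 1)
      = ∑ p ∈ W.D 1, ∑ q ∈ W.D 1,
          MulOpposite.op p.1 ⊗ₜ[k] (MulOpposite.op (q.1 * p.2) ⊗ₜ[k] MulOpposite.op q.2) := by
    rw [W.comul'_one, sum_tmul, map_sum, tmul_sum,
      Finset.sum_mul_sum (W.D 1) (W.D 1)
        (fun p => (TensorProduct.assoc k Hᵐᵒᵖ Hᵐᵒᵖ Hᵐᵒᵖ)
          ((MulOpposite.op p.1 ⊗ₜ[k] MulOpposite.op p.2) ⊗ₜ[k] (1 : Hᵐᵒᵖ)))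
        (fun q => (1 : Hᵐᵒᵖ) ⊗ₜ[k] (MulOpposite.op q.1 ⊗ₜ[k] MulOpposite.op q.2))]
    refine Finset.sum_congr rfl fun p _ => ?_
    refine Finset.sum_congr rfl fun q _ => ?_
    rw [assoc_tmul, Algebra.TensorProduct.tmul_mul_tmul, Algebra.TensorProduct.tmul_mul_tmul,
      mul_one, one_mul, ← MulOpposite.op_mul]
  rw [hL, hR, key]

set_option synthInstance.maxHeartbeats 1000000 in
set_option maxHeartbeats 1000000 in
lemma opp_weak_right :
    (LinearMap.lTensor Hᵐᵒᵖ W.comul') (W.comul' 1) =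
      ((1 : Hᵐᵒᵖ) ⊗ₜ[k] W.comul' 1) *
        (TensorProduct.assoc k Hᵐᵒᵖ Hᵐᵒᵖ Hᵐᵒᵖ) (W.comul' 1 ⊗ₜ[k] (1 : Hᵐᵒᵖ)) := by
  have key : (∑ p ∈ W.D 1, ∑ q ∈ W.D p.2,
        MulOpposite.op p.1 ⊗ₜ[k] (MulOpposite.op q.1 ⊗ₜ[k] MulOpposite.op q.2))
      = ∑ p ∈ W.D 1, ∑ q ∈ W.D 1,
        MulOpposite.op p.1 ⊗ₜ[k] (MulOpposite.op (p.2 * q.1) ⊗ₜ[k] MulOpposite.op q.2) := by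
    have h1 := congrArg (Psi (k := k) (H := H)) ((W.lTensor_comul_sum 1).symm.trans W.star_a)
    simpa only [map_sum, Psi_tmul] using h1
  have hL : (LinearMap.lTensor Hᵐᵒᵖ W.comul') (W.comul' 1)
      = ∑ p ∈ W.D 1, ∑ q ∈ W.D p.2,
          MulOpposite.op p.1 ⊗ₜ[k] (MulOpposite.op q.1 ⊗ₜ[k] MulOpposite.op q.2) := by
    rw [W.comul'_one, map_sum]
    refine Finset.sum_congr rfl fun p _ => ?_
    rw [LinearMap.lTensor_tmul, W.comul'_op p.2, tmul_sum]
  have hR : ((1 : Hᵐᵒᵖ) ⊗ₜ[k] W.comul' 1) *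
        (TensorProduct.assoc k Hᵐᵒᵖ Hᵐᵒᵖ Hᵐᵒᵖ) (W.comul' 1 ⊗ₜ[k] (1 : Hᵐᵒᵖ))
      = ∑ p ∈ W.D 1, ∑ q ∈ W.D 1,
          MulOpposite.op p.1 ⊗ₜ[k] (MulOpposite.op (p.2 * q.1) ⊗ₜ[k] MulOpposite.op q.2) := by
    rw [W.comul'_one, sum_tmul, map_sum, tmul_sum,
      Finset.sum_mul_sum (W.D 1) (W.D 1)
        (fun q => (1 : Hᵐᵒᵖ) ⊗ₜ[k] (MulOpposite.op q.1 ⊗ₜ[k] MulOpposite.op q.2))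
        (fun p => (TensorProduct.assoc k Hᵐᵒᵖ Hᵐᵒᵖ Hᵐᵒᵖ)
          ((MulOpposite.op p.1 ⊗ₜ[k] MulOpposite.op p.2) ⊗ₜ[k] (1 : Hᵐᵒᵖ))),
      Finset.sum_comm]
    refine Finset.sum_congr rfl fun p _ => ?_
    refine Finset.sum_congr rfl fun q _ => ?_
    rw [assoc_tmul, Algebra.TensorProduct.tmul_mul_tmul, Algebra.TensorProduct.tmul_mul_tmul,
      mul_one, one_mul, ← MulOpposite.op_mul]
  rw [hL, hR, key]

lemma opp_weak_counit_left (F G K : Hᵐᵒᵖ) :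
    W.counit' (F * G * K) =
      (LinearMap.mul' k k)
        ((TensorProduct.map (W.counit' ∘ₗ LinearMap.mulLeft k F)
          (W.counit' ∘ₗ LinearMap.mulRight k K)) (W.comul' G)) := by
  rw [← MulOpposite.op_unop F, ← MulOpposite.op_unop G, ← MulOpposite.op_unop K]
  set f := MulOpposite.unop F
  set g := MulOpposite.unop G
  set kk := MulOpposite.unop K
  have hfold : MulOpposite.op f * MulOpposite.op g * MulOpposite.op kk
      = MulOpposite.op (kk * (g * f)) := by
    rw [← MulOpposite.op_mul, ← MulOpposite.op_mul]
  have hR : (LinearMap.mul' k k)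
        ((TensorProduct.map (W.counit' ∘ₗ LinearMap.mulLeft k (MulOpposite.op f))
          (W.counit' ∘ₗ LinearMap.mulRight k (MulOpposite.op kk)))
            (W.comul' (MulOpposite.op g)))
      = ∑ p ∈ W.D g, W.counit (p.1 * f) * W.counit (kk * p.2) := by
    rw [W.comul'_op g, map_sum, map_sum]
    refine Finset.sum_congr rfl fun p _ => ?_
    rw [TensorProduct.map_tmul, LinearMap.coe_comp, LinearMap.coe_comp, Function.comp_apply,
      Function.comp_apply, LinearMap.mulLeft_apply, LinearMap.mulRight_apply,
      ← MulOpposite.op_mul, ← MulOpposite.op_mul, counit'_op, counit'_op,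
      LinearMap.mul'_apply]
  rw [hfold, counit'_op, ← mul_assoc, W.counit3_r kk g f, hR]
  exact Finset.sum_congr rfl fun p _ => mul_comm _ _

lemma opp_weak_counit_right (F G K : Hᵐᵒᵖ) :
    W.counit' (F * G * K) =
      (LinearMap.mul' k k)
        ((TensorProduct.map (W.counit' ∘ₗ LinearMap.mulLeft k F)
          (W.counit' ∘ₗ LinearMap.mulRight k K))
            ((TensorProduct.comm k Hᵐᵒᵖ Hᵐᵒᵖ) (W.comul' G))) := by
  rw [← MulOpposite.op_unop F, ← MulOpposite.op_unop G, ← MulOpposite.op_unop K]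
  set f := MulOpposite.unop F
  set g := MulOpposite.unop G
  set kk := MulOpposite.unop K
  have hfold : MulOpposite.op f * MulOpposite.op g * MulOpposite.op kk
      = MulOpposite.op (kk * (g * f)) := by
    rw [← MulOpposite.op_mul, ← MulOpposite.op_mul]
  have hR : (LinearMap.mul' k k)
        ((TensorProduct.map (W.counit' ∘ₗ LinearMap.mulLeft k (MulOpposite.op f))
          (W.counit' ∘ₗ LinearMap.mulRight k (MulOpposite.op kk)))
            ((TensorProduct.comm k Hᵐᵒᵖ Hᵐᵒᵖ) (W.comul' (MulOpposite.op g))))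
      = ∑ p ∈ W.D g, W.counit (p.2 * f) * W.counit (kk * p.1) := by
    rw [W.comul'_op g, map_sum, map_sum, map_sum]
    refine Finset.sum_congr rfl fun p _ => ?_
    rw [comm_tmul, TensorProduct.map_tmul, LinearMap.coe_comp, LinearMap.coe_comp,
      Function.comp_apply, Function.comp_apply, LinearMap.mulLeft_apply,
      LinearMap.mulRight_apply, ← MulOpposite.op_mul, ← MulOpposite.op_mul, counit'_op,
      counit'_op, LinearMap.mul'_apply]
  rw [hfold, counit'_op, ← mul_assoc, W.counit3_l kk g f, hR]
  exact Finset.sum_congr rfl fun p _ => mul_comm _ _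

lemma opp_antipode_right (T : H →ₗ[k] H) (hT1 : ∀ h : H, T (W.antipode h) = h)
    (hT2 : ∀ h : H, W.antipode (T h) = h) (h : Hᵐᵒᵖ) :
    (LinearMap.mul' k Hᵐᵒᵖ)
        ((LinearMap.lTensor Hᵐᵒᵖ (antipode' T)) (W.comul' h)) =
      (TensorProduct.lid k Hᵐᵒᵖ)
        ((LinearMap.rTensor Hᵐᵒᵖ W.counit') (W.comul' 1 * (h ⊗ₜ[k] (1 : Hᵐᵒᵖ)))) := by
  rw [← MulOpposite.op_unop h]
  set a := MulOpposite.unop h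
  have hLHS : (LinearMap.mul' k Hᵐᵒᵖ)
      ((LinearMap.lTensor Hᵐᵒᵖ (antipode' T)) (W.comul' (MulOpposite.op a)))
      = ∑ e ∈ W.D 1, W.counit (a * e.1) • MulOpposite.op e.2 := by
    rw [W.comul'_op a, map_sum, map_sum]
    have hterm : ∀ p : H × H, (LinearMap.mul' k Hᵐᵒᵖ)
        ((LinearMap.lTensor Hᵐᵒᵖ (antipode' T))
          (MulOpposite.op p.1 ⊗ₜ[k] MulOpposite.op p.2))
        = (oL : H →ₗ[k] Hᵐᵒᵖ) (T p.2 * p.1) := by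
      intro p
      rw [LinearMap.lTensor_tmul, antipode'_op, LinearMap.mul'_apply, oL_apply,
        ← MulOpposite.op_mul]
    rw [Finset.sum_congr rfl fun p _ => hterm p, ← map_sum, W.final_A T hT1 hT2 a, map_sum]
    exact Finset.sum_congr rfl fun e _ => by rw [map_smul, oL_apply]
  have hRHS : (TensorProduct.lid k Hᵐᵒᵖ)
      ((LinearMap.rTensor Hᵐᵒᵖ W.counit')
        (W.comul' 1 * (MulOpposite.op a ⊗ₜ[k] (1 : Hᵐᵒᵖ))))
      = ∑ e ∈ W.D 1, W.counit (a * e.1) • MulOpposite.op e.2 := by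
    rw [W.comul'_one, Finset.sum_mul]
    rw [map_sum, map_sum]
    refine Finset.sum_congr rfl fun e _ => ?_
    rw [Algebra.TensorProduct.tmul_mul_tmul, mul_one, ← MulOpposite.op_mul,
      LinearMap.rTensor_tmul, counit'_op, lid_tmul]
  exact hLHS.trans hRHS.symm

lemma opp_antipode_left (T : H →ₗ[k] H) (hT1 : ∀ h : H, T (W.antipode h) = h)
    (hT2 : ∀ h : H, W.antipode (T h) = h) (h : Hᵐᵒᵖ) :
    (LinearMap.mul' k Hᵐᵒᵖ)
        ((LinearMap.rTensor Hᵐᵒᵖ (antipode' T)) (W.comul' h)) =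
      (TensorProduct.rid k Hᵐᵒᵖ)
        ((LinearMap.lTensor Hᵐᵒᵖ W.counit') (((1 : Hᵐᵒᵖ) ⊗ₜ[k] h) * W.comul' 1)) := by
  rw [← MulOpposite.op_unop h]
  set a := MulOpposite.unop h
  have hLHS : (LinearMap.mul' k Hᵐᵒᵖ)
      ((LinearMap.rTensor Hᵐᵒᵖ (antipode' T)) (W.comul' (MulOpposite.op a)))
      = ∑ e ∈ W.D 1, W.counit (e.2 * a) • MulOpposite.op e.1 := by
    rw [W.comul'_op a, map_sum, map_sum]
    have hterm : ∀ p : H × H, (LinearMap.mul' k Hᵐᵒᵖ)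
        ((LinearMap.rTensor Hᵐᵒᵖ (antipode' T))
          (MulOpposite.op p.1 ⊗ₜ[k] MulOpposite.op p.2))
        = (oL : H →ₗ[k] Hᵐᵒᵖ) (p.2 * T p.1) := by
      intro p
      rw [LinearMap.rTensor_tmul, antipode'_op, LinearMap.mul'_apply, oL_apply,
        ← MulOpposite.op_mul]
    rw [Finset.sum_congr rfl fun p _ => hterm p, ← map_sum, W.final_B T hT1 hT2 a, map_sum]
    exact Finset.sum_congr rfl fun e _ => by rw [map_smul, oL_apply]
  have hRHS : (TensorProduct.rid k Hᵐᵒᵖ)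
      ((LinearMap.lTensor Hᵐᵒᵖ W.counit')
        (((1 : Hᵐᵒᵖ) ⊗ₜ[k] MulOpposite.op a) * W.comul' 1))
      = ∑ e ∈ W.D 1, W.counit (e.2 * a) • MulOpposite.op e.1 := by
    rw [W.comul'_one, Finset.mul_sum]
    rw [map_sum, map_sum]
    refine Finset.sum_congr rfl fun e _ => ?_
    rw [Algebra.TensorProduct.tmul_mul_tmul, one_mul, ← MulOpposite.op_mul,
      LinearMap.lTensor_tmul, counit'_op, rid_tmul]
  exact hLHS.trans hRHS.symm

lemma opp_antipode_conv (T : H →ₗ[k] H) (hT1 : ∀ h : H, T (W.antipode h) = h)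
    (hT2 : ∀ h : H, W.antipode (T h) = h) (h : Hᵐᵒᵖ) :
    (LinearMap.mul' k Hᵐᵒᵖ)
      ((TensorProduct.map
        ((LinearMap.mul' k Hᵐᵒᵖ) ∘ₗ (LinearMap.rTensor Hᵐᵒᵖ (antipode' T)) ∘ₗ W.comul')
        (antipode' T)) (W.comul' h)) = antipode' T h := by
  rw [← MulOpposite.op_unop h]
  set a := MulOpposite.unop h
  have hF : ∀ x : H, (LinearMap.mul' k Hᵐᵒᵖ)
      ((LinearMap.rTensor Hᵐᵒᵖ (antipode' T)) (W.comul' (MulOpposite.op x)))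
      = (oL : H →ₗ[k] Hᵐᵒᵖ) (∑ q ∈ W.D x, q.2 * T q.1) := by
    intro x
    rw [W.comul'_op x, map_sum, map_sum, map_sum]
    exact Finset.sum_congr rfl fun q _ => by
      rw [LinearMap.rTensor_tmul, antipode'_op, LinearMap.mul'_apply, oL_apply,
        ← MulOpposite.op_mul]
  rw [W.comul'_op a, map_sum, map_sum]
  have hterm : ∀ p : H × H, (LinearMap.mul' k Hᵐᵒᵖ)
      ((TensorProduct.map
        ((LinearMap.mul' k Hᵐᵒᵖ) ∘ₗ (LinearMap.rTensor Hᵐᵒᵖ (antipode' T)) ∘ₗ W.comul')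
        (antipode' T)) (MulOpposite.op p.1 ⊗ₜ[k] MulOpposite.op p.2))
      = (oL : H →ₗ[k] Hᵐᵒᵖ) (∑ q ∈ W.D p.1, T p.2 * (q.2 * T q.1)) := by
    intro p
    rw [TensorProduct.map_tmul, LinearMap.coe_comp, LinearMap.coe_comp, Function.comp_apply,
      Function.comp_apply, hF p.1, antipode'_op, oL_apply, LinearMap.mul'_apply,
      ← MulOpposite.op_mul, Finset.mul_sum, oL_apply]
  rw [Finset.sum_congr rfl fun p _ => hterm p, ← map_sum, W.final_conv T hT1 hT2 a]
  rfl

noncomputable def opp (T : H →ₗ[k] H) (hT1 : ∀ h : H, T (W.antipode h) = h)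
    (hT2 : ∀ h : H, W.antipode (T h) = h) : WeakHopfAlgebra k Hᵐᵒᵖ where
  comul := W.comul'
  counit := W.counit'
  antipode := antipode' T
  coassoc := W.opp_coassoc
  counit_lid := W.opp_counit_lid
  counit_rid := W.opp_counit_rid
  comul_mul := W.opp_comul_mul
  weak_comul_one_left := W.opp_weak_left
  weak_comul_one_right := W.opp_weak_right
  weak_counit_left := W.opp_weak_counit_left
  weak_counit_right := W.opp_weak_counit_right
  antipode_right := W.opp_antipode_right T hT1 hT2
  antipode_left := W.opp_antipode_left T hT1 hT2
  antipode_conv := W.opp_antipode_conv T hT1 hT2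
end Aux
end WeakHopfAlgebra


/-- if `S` is the (bijective) antipode of `H`, then `H^op` with the same
coalgebra structure and antipode `S⁻¹` is again a weak Hopf algebra; in particular
`S⁻¹(h₍₂₎)h₍₁₎ = ε(h1₍₁₎)1₍₂₎` and `h₍₂₎S⁻¹(h₍₁₎) = 1₍₁₎ε(1₍₂₎h)`. -/
theorem WeakHopfAlgebra.opposite
    {k H : Type*} [Field k] [Ring H] [Algebra k H] [FiniteDimensional k H]
    (W : WeakHopfAlgebra k H) (hS : Function.Bijective W.antipode)
    (T : H →ₗ[k] H) (hT1 : ∀ h : H, T (W.antipode h) = h)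
    (hT2 : ∀ h : H, W.antipode (T h) = h) :
    (∀ h : H,
      (LinearMap.mul' k H) ((LinearMap.rTensor H T) ((TensorProduct.comm k H H) (W.comul h))) =
        (TensorProduct.lid k H)
          ((LinearMap.rTensor H W.counit) ((h ⊗ₜ[k] (1 : H)) * W.comul 1))) ∧
    (∀ h : H,
      (LinearMap.mul' k H) ((LinearMap.lTensor H T) ((TensorProduct.comm k H H) (W.comul h))) =
        (TensorProduct.rid k H)
          ((LinearMap.lTensor H W.counit) (W.comul 1 * ((1 : H) ⊗ₜ[k] h)))) ∧
    (∃ W' : WeakHopfAlgebra k Hᵐᵒᵖ,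
      (∀ h : H, W'.comul (MulOpposite.op h) =
        (TensorProduct.map (MulOpposite.opLinearEquiv k : H ≃ₗ[k] Hᵐᵒᵖ).toLinearMap
          (MulOpposite.opLinearEquiv k : H ≃ₗ[k] Hᵐᵒᵖ).toLinearMap) (W.comul h)) ∧
      (∀ h : H, W'.counit (MulOpposite.op h) = W.counit h) ∧
      (∀ h : H, W'.antipode (MulOpposite.op h) = MulOpposite.op (T h))) := by
  refine ⟨?_, ?_, ?_⟩
  · intro h
    have hL : (LinearMap.mul' k H)
        ((LinearMap.rTensor H T) ((TensorProduct.comm k H H) (W.comul h)))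
        = ∑ p ∈ W.D h, T p.2 * p.1 := by
      rw [W.D_spec h, map_sum, map_sum, map_sum]
      exact Finset.sum_congr rfl fun p _ => by
        rw [comm_tmul, LinearMap.rTensor_tmul, LinearMap.mul'_apply]
    have hR : (TensorProduct.lid k H)
        ((LinearMap.rTensor H W.counit) ((h ⊗ₜ[k] (1 : H)) * W.comul 1))
        = ∑ e ∈ W.D 1, W.counit (h * e.1) • e.2 := by
      rw [W.D_spec 1, Finset.mul_sum, map_sum, map_sum]
      refine Finset.sum_congr rfl fun e _ => ?_
      rw [Algebra.TensorProduct.tmul_mul_tmul, one_mul, LinearMap.rTensor_tmul, lid_tmul]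
    rw [hL, hR]
    exact W.final_A T hT1 hT2 h
  · intro h
    have hL : (LinearMap.mul' k H)
        ((LinearMap.lTensor H T) ((TensorProduct.comm k H H) (W.comul h)))
        = ∑ p ∈ W.D h, p.2 * T p.1 := by
      rw [W.D_spec h, map_sum, map_sum, map_sum]
      exact Finset.sum_congr rfl fun p _ => by
        rw [comm_tmul, LinearMap.lTensor_tmul, LinearMap.mul'_apply]
    have hR : (TensorProduct.rid k H)
        ((LinearMap.lTensor H W.counit) (W.comul 1 * ((1 : H) ⊗ₜ[k] h)))
        = ∑ e ∈ W.D 1, W.counit (e.2 * h) • e.1 := by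
      rw [W.D_spec 1, Finset.sum_mul, map_sum, map_sum]
      refine Finset.sum_congr rfl fun e _ => ?_
      rw [Algebra.TensorProduct.tmul_mul_tmul, mul_one, LinearMap.lTensor_tmul, rid_tmul]
    rw [hL, hR]
    exact W.final_B T hT1 hT2 h
  · exact ⟨W.opp T hT1 hT2, fun h => rfl, fun h => rfl, fun h => rfl⟩
end
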